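/- arXiv:2603.26038 — 11 statements merged into one kernel-verified Lean document; each statement's English description precedes it below -/
import Mathlib

section
/- If c ≥ b = √(q/θ_ig), then the derivative θ_c'(x) = (c·θ_ig − q/c)e^{cx} + q/c is strictly positive for all x > 0, θ_c(x) → +∞ as x → +∞, and consequently there exists a unique R > 0 such that θ_c(R) = θ_hl; moreover θ_c'(R) > 0. -/
/-!
When `c ≥ √(q/θ_ig)`, i.e. `q ≤ c²θ_ig`, rewrite
`θ_c(x) = (θ_ig − q/c²) e^{cx} + (q/c) x + q/c²` with a nonnegative exponential coefficient.
Hence `θ_c' ≥ q/c > 0` and `θ_c(x) ≥ (q/c) x → ∞`; since `θ_c(0) = θ_ig < θ_hl`, the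
intermediate value theorem and strict monotonicity give exactly one crossing `R > 0`.
-/

open Set Filter

/-- The solution `θ_c` of the shooting problem `θ'' − cθ' + q = 0`, `θ(0) = θ_ig`,
`θ'(0) = c θ_ig`. -/
noncomputable def theta (q θig c x : ℝ) : ℝ :=
  θig * Real.exp (c * x) + (q / c) * x + (q / c ^ 2) * (1 - Real.exp (c * x))

theorem StrictMono.existsUnique_gt_of_tendsto_atTop {α δ : Type*}
    [ConditionallyCompleteLinearOrder α] [TopologicalSpace α] [OrderTopology α]
    [DenselyOrdered α] [LinearOrder δ] [TopologicalSpace δ] [OrderClosedTopology δ]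
    {f : α → δ} (hmono : StrictMono f) (hcont : Continuous f) (htop : Tendsto f atTop atTop)
    {a : α} {y : δ} (hy : f a < y) : ∃! R, a < R ∧ f R = y := by
  obtain ⟨R, hR, hfR⟩ := intermediate_value_Ioi hcont.continuousOn htop hy
  exact ⟨R, ⟨hR, hfR⟩, fun R' hR' => hmono.injective (hR'.2.trans hfR.symm)⟩

namespace Theta

variable {q θig c : ℝ}

theorem hasDerivAt (hc : c ≠ 0) (x : ℝ) :
    HasDerivAt (theta q θig c) ((c * θig - q / c) * Real.exp (c * x) + q / c) x := by
  have hexp : HasDerivAt (fun x => Real.exp (c * x)) (Real.exp (c * x) * c) x :=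
    ((hasDerivAt_id' x).const_mul c).exp.congr_deriv (by ring)
  refine (((hexp.const_mul θig).add ((hasDerivAt_id' x).const_mul (q / c))).add
    ((hexp.const_sub 1).const_mul (q / c ^ 2))).congr_deriv ?_
  field_simp
  ring

theorem continuous : Continuous (theta q θig c) := by
  unfold theta
  fun_prop

theorem apply_zero : theta q θig c 0 = θig := by
  simp [theta]

theorem eq_exp_add_linear (x : ℝ) :
    theta q θig c x = (θig - q / c ^ 2) * Real.exp (c * x) + (q / c) * x + q / c ^ 2 := by
  unfold theta
  ring

variable (hq : 0 < q) (hc : 0 < c) (hqc : q ≤ c ^ 2 * θig)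
include hq hc hqc

theorem deriv_pos (x : ℝ) : 0 < (c * θig - q / c) * Real.exp (c * x) + q / c := by
  have hslope : 0 ≤ c * θig - q / c := by
    rw [sub_nonneg, div_le_iff₀ hc]
    linarith
  have := div_pos hq hc
  positivity

theorem strictMono : StrictMono (theta q θig c) :=
  strictMono_of_deriv_pos fun x => (hasDerivAt hc.ne' x).deriv ▸ deriv_pos hq hc hqc x

theorem linear_le (x : ℝ) : q / c * x ≤ theta q θig c x := by
  have hcoef : 0 ≤ θig - q / c ^ 2 := by
    rw [sub_nonneg, div_le_iff₀ (by positivity)]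
    linarith
  rw [eq_exp_add_linear]
  have := mul_nonneg hcoef (Real.exp_pos (c * x)).le
  have : 0 ≤ q / c ^ 2 := by positivity
  linarith

theorem tendsto_atTop : Tendsto (theta q θig c) atTop atTop :=
  tendsto_atTop_mono (linear_le hq hc hqc) (tendsto_id.const_mul_atTop (div_pos hq hc))

end Theta

/-- For `c ≥ b = √(q/θ_ig)`, the derivative `θ_c'(x) = (cθ_ig − q/c)e^{cx} + q/c` is
positive for `x > 0`, `θ_c(x) → +∞`, and there is a unique `R > 0` with
`θ_c(R) = θ_hl`; moreover `θ_c'(R) > 0`. -/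
theorem stmt2 (q θig θhl : ℝ) (hq : 0 < q) (h1 : 0 < θig) (h2 : θig < θhl)
    (c : ℝ) (hc : Real.sqrt (q / θig) ≤ c) :
    (∀ x : ℝ, deriv (theta q θig c) x = (c * θig - q / c) * Real.exp (c * x) + q / c) ∧
    (∀ x > (0 : ℝ), 0 < (c * θig - q / c) * Real.exp (c * x) + q / c) ∧
    Tendsto (theta q θig c) atTop atTop ∧
    (∃! R : ℝ, 0 < R ∧ theta q θig c R = θhl) ∧
    (∀ R : ℝ, 0 < R → theta q θig c R = θhl → 0 < deriv (theta q θig c) R) := by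
  have hc0 : 0 < c := (Real.sqrt_pos.2 (div_pos hq h1)).trans_le hc
  have hqc : q ≤ c ^ 2 * θig := (div_le_iff₀ h1).1 ((Real.sqrt_le_left hc0.le).1 hc)
  have hderiv x : deriv (theta q θig c) x = (c * θig - q / c) * Real.exp (c * x) + q / c :=
    (Theta.hasDerivAt hc0.ne' x).deriv
  refine ⟨hderiv, fun x _ => Theta.deriv_pos hq hc0 hqc x, Theta.tendsto_atTop hq hc0 hqc,
    ?_, fun R _ _ => hderiv R ▸ Theta.deriv_pos hq hc0 hqc R⟩
  exact (Theta.strictMono hq hc0 hqc).existsUnique_gt_of_tendsto_atTop Theta.continuous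
    (Theta.tendsto_atTop hq hc0 hqc) (Theta.apply_zero.trans_lt h2)
end

section
/- There exists c₀ with c̃ < c₀ < b such that: (a) there is a unique R₀ > 0 with θ_{c₀}(R₀) = θ_hl, and this R₀ satisfies θ_{c₀}'(R₀) = 0 and c₀·θ_hl = q·R₀; (b) for every c with c₀ < c < b there exist exactly two values 0 < R₁ < R₂ with θ_c(R₁) = θ_c(R₂) = θ_hl, and they satisfy θ_c'(R₁) > 0 and θ_c'(R₂) < 0. -/
/-!
For `0 < c < √(q/θ_ig)` put `t = c²θ_ig/q ∈ (0,1)` and `x* = -log (1 - t) / c`. Then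
`θ_c' x = (q/c) (1 - exp (c (x - x*)))`, so `θ_c` increases up to `x*`, decreases after it and
tends to `-∞`; its maximum is `θ_c x* = q x*/c = θ_ig φ t` with `φ t = -log (1 - t) / t`.
As a secant slope of the concave `log`, `φ` is strictly increasing on `(0,1)`, and `c₀` is the
value of `c` at which the maximum equals `θ_hl`. At `c₀` the level `θ_hl` is attained only at the
peak; for `c > c₀` the peak rises above it and the level is crossed once on each side.
The bound `c̃ < c₀` is `φ (1 - 1/s) < s` for `s = θ_hl/θ_ig`, i.e. `log s < s - 1`.
-/

open Set Filter

open Real Topology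

theorem sq_mul_lt_of_lt_sqrt_div {x y z : ℝ} (hz : 0 < z) (hx : 0 ≤ x) (h : x < √(y / z)) :
    x ^ 2 * z < y := by
  rw [← lt_div_iff₀ hz]
  exact (lt_sqrt hx).1 h

theorem eq_of_apply_eq_of_strictMonoOn_Iic_of_strictAntiOn_Ici {α β : Type*} [LinearOrder α]
    [Preorder β] {f : α → β} {a x : α} (hmono : StrictMonoOn f (Iic a))
    (hanti : StrictAntiOn f (Ici a)) (hx : f x = f a) : x = a := by
  rcases le_total x a with h | h
  · exact hmono.injOn h (le_refl a) hx
  · exact hanti.injOn h (le_refl a) hx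

theorem exists_pair_apply_eq_of_strictMonoOn_Iic_of_strictAntiOn_Ici {f : ℝ → ℝ} {a x₀ L : ℝ}
    (hf : Continuous f) (hmono : StrictMonoOn f (Iic a)) (hanti : StrictAntiOn f (Ici a))
    (hlim : Tendsto f atTop atBot) (hx₀ : x₀ ≤ a) (hx₀L : f x₀ < L) (hLa : L < f a) :
    ∃ R₁ R₂, x₀ < R₁ ∧ R₁ < a ∧ a < R₂ ∧ f R₁ = L ∧ f R₂ = L ∧
      ∀ R, f R = L → R = R₁ ∨ R = R₂ := by
  obtain ⟨R₁, ⟨hx₀R₁, hR₁a⟩, hR₁⟩ := intermediate_value_Ioo hx₀ hf.continuousOn ⟨hx₀L, hLa⟩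
  obtain ⟨X, hXL, haX⟩ :=
    ((hlim.eventually (eventually_lt_atBot L)).and (eventually_gt_atTop a)).exists
  obtain ⟨R₂, ⟨haR₂, -⟩, hR₂⟩ := intermediate_value_Ioo' haX.le hf.continuousOn ⟨hXL, hLa⟩
  refine ⟨R₁, R₂, hx₀R₁, hR₁a, haR₂, hR₁, hR₂, fun R hR => ?_⟩
  rcases le_total R a with h | h
  · exact .inl (hmono.injOn h hR₁a.le (hR.trans hR₁.symm))
  · exact .inr (hanti.injOn h haR₂.le (hR.trans hR₂.symm))

noncomputable def negLogOneSubDiv (t : ℝ) : ℝ := -log (1 - t) / t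

theorem strictMonoOn_negLogOneSubDiv : StrictMonoOn negLogOneSubDiv (Ioo 0 1) := by
  intro t₁ ⟨ht₁, ht₁'⟩ t₂ ⟨ht₂, ht₂'⟩ h
  -- `negLogOneSubDiv t` is the slope of the secant of `log` through `1 - t` and `1`.
  have key := strictConcaveOn_log_Ioi.secant_strict_mono (a := 1) (mem_Ioi.2 one_pos)
    (mem_Ioi.2 (sub_pos.2 ht₂')) (mem_Ioi.2 (sub_pos.2 ht₁')) (by linarith) (by linarith)
    (by linarith)
  simp only [log_one, sub_zero, sub_sub_cancel_left] at key
  simpa only [negLogOneSubDiv, div_neg, neg_div] using key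

theorem continuousOn_negLogOneSubDiv : ContinuousOn negLogOneSubDiv (Ioo 0 1) := by
  intro t ⟨ht, ht'⟩
  apply ContinuousAt.continuousWithinAt
  unfold negLogOneSubDiv
  exact ((continuousAt_const.sub continuousAt_id).log (sub_pos.2 ht').ne').neg.div
    continuousAt_id ht.ne'

theorem negLogOneSubDiv_one_sub_inv_lt {s : ℝ} (hs : 1 < s) : negLogOneSubDiv (1 - s⁻¹) < s := by
  have hs' : 0 < 1 - s⁻¹ := sub_pos.2 (inv_lt_one_of_one_lt₀ hs)
  rw [negLogOneSubDiv, sub_sub_cancel, log_inv, neg_neg, div_lt_iff₀ hs', mul_sub,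
    mul_inv_cancel₀ (by positivity), mul_one]
  exact log_lt_sub_one_of_pos (by positivity) hs.ne'

theorem lt_negLogOneSubDiv_one_sub_exp_neg {s : ℝ} (hs : 0 < s) :
    s < negLogOneSubDiv (1 - exp (-s)) := by
  have h₁ : exp (-s) < 1 := exp_lt_one_iff.2 (neg_lt_zero.2 hs)
  rw [negLogOneSubDiv, sub_sub_cancel, log_exp, neg_neg, lt_div_iff₀ (sub_pos.2 h₁)]
  nlinarith [exp_pos (-s)]

theorem exists_negLogOneSubDiv_eq {s : ℝ} (hs : 1 < s) :
    ∃ t ∈ Ioo (1 - s⁻¹) 1, negLogOneSubDiv t = s := by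
  set t₁ := 1 - s⁻¹
  set t₂ := 1 - exp (-s)
  have ht₁ : t₁ ∈ Ioo 0 1 :=
    ⟨sub_pos.2 (inv_lt_one_of_one_lt₀ hs), sub_lt_self _ (inv_pos.2 (by linarith))⟩
  have ht₂ : t₂ ∈ Ioo 0 1 :=
    ⟨sub_pos.2 (exp_lt_one_iff.2 (by linarith)), sub_lt_self _ (exp_pos _)⟩
  have h₁ := negLogOneSubDiv_one_sub_inv_lt hs
  have h₂ := lt_negLogOneSubDiv_one_sub_exp_neg (zero_lt_one.trans hs)
  have h₁₂ : t₁ ≤ t₂ := ((strictMonoOn_negLogOneSubDiv.lt_iff_lt ht₁ ht₂).1 (h₁.trans h₂)).le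
  obtain ⟨t, ⟨ht₁t, htt₂⟩, ht⟩ := intermediate_value_Ioo h₁₂
    (continuousOn_negLogOneSubDiv.mono (Icc_subset_Ioo ht₁.1 ht₂.2)) ⟨h₁, h₂⟩
  exact ⟨t, ⟨ht₁t, htt₂.trans ht₂.2⟩, ht⟩

section Theta

theorem theta_zero (q θig c : ℝ) : theta q θig c 0 = θig := by
  simp [theta]

theorem continuous_theta (q θig c : ℝ) : Continuous (theta q θig c) := by
  unfold theta
  fun_prop

theorem hasDerivAt_theta (q θig : ℝ) {c : ℝ} (hc : c ≠ 0) (x : ℝ) :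
    HasDerivAt (theta q θig c) ((c * θig - q / c) * exp (c * x) + q / c) x := by
  have hexp : HasDerivAt (fun x => exp (c * x)) (exp (c * x) * c) x := by
    simpa using ((hasDerivAt_id x).const_mul c).exp
  refine (((hexp.const_mul θig).add ((hasDerivAt_id x).const_mul (q / c))).add
    ((hexp.const_sub 1).const_mul (q / c ^ 2))).congr_deriv ?_
  field_simp
  ring

variable {q θig c : ℝ}

noncomputable def peakPoint (q θig c : ℝ) : ℝ := -log (1 - c ^ 2 * θig / q) / c

theorem peakPoint_pos (hq : 0 < q) (hθ : 0 < θig) (hc : 0 < c) (hcq : c ^ 2 * θig < q) :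
    0 < peakPoint q θig c := by
  refine div_pos (neg_pos.2 (log_neg ?_ ?_)) hc
  · rwa [sub_pos, div_lt_one hq]
  · exact sub_lt_self _ (by positivity)

theorem exp_neg_mul_peakPoint (hq : 0 < q) (hc : c ≠ 0) (hcq : c ^ 2 * θig < q) :
    exp (-(c * peakPoint q θig c)) = 1 - c ^ 2 * θig / q := by
  rw [peakPoint, mul_div_cancel₀ _ hc, neg_neg, exp_log]
  rwa [sub_pos, div_lt_one hq]

theorem deriv_theta (hq : 0 < q) (hc : c ≠ 0) (hcq : c ^ 2 * θig < q) (x : ℝ) :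
    deriv (theta q θig c) x = q / c * (1 - exp (c * (x - peakPoint q θig c))) := by
  have hE : exp (c * (x - peakPoint q θig c)) = exp (c * x) * (1 - c ^ 2 * θig / q) := by
    rw [mul_sub, exp_sub, div_eq_mul_inv, ← exp_neg, exp_neg_mul_peakPoint hq hc hcq]
  rw [(hasDerivAt_theta q θig hc x).deriv, hE]
  field_simp
  ring

theorem deriv_theta_pos (hq : 0 < q) (hc : 0 < c) (hcq : c ^ 2 * θig < q) {x : ℝ}
    (hx : x < peakPoint q θig c) : 0 < deriv (theta q θig c) x := by
  rw [deriv_theta hq hc.ne' hcq]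
  exact mul_pos (div_pos hq hc)
    (sub_pos.2 (exp_lt_one_iff.2 (mul_neg_of_pos_of_neg hc (by linarith))))

theorem deriv_theta_neg (hq : 0 < q) (hc : 0 < c) (hcq : c ^ 2 * θig < q) {x : ℝ}
    (hx : peakPoint q θig c < x) : deriv (theta q θig c) x < 0 := by
  rw [deriv_theta hq hc.ne' hcq]
  exact mul_neg_of_pos_of_neg (div_pos hq hc) (sub_neg.2 (one_lt_exp_iff.2 (by nlinarith)))

theorem deriv_theta_peakPoint (hq : 0 < q) (hc : c ≠ 0) (hcq : c ^ 2 * θig < q) :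
    deriv (theta q θig c) (peakPoint q θig c) = 0 := by
  simp [deriv_theta hq hc hcq]

theorem strictMonoOn_theta (hq : 0 < q) (hc : 0 < c) (hcq : c ^ 2 * θig < q) :
    StrictMonoOn (theta q θig c) (Iic (peakPoint q θig c)) := by
  refine strictMonoOn_of_deriv_pos (convex_Iic _) (continuous_theta q θig c).continuousOn
    fun x hx => deriv_theta_pos hq hc hcq ?_
  rwa [interior_Iic] at hx

theorem strictAntiOn_theta (hq : 0 < q) (hc : 0 < c) (hcq : c ^ 2 * θig < q) :
    StrictAntiOn (theta q θig c) (Ici (peakPoint q θig c)) := by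
  refine strictAntiOn_of_deriv_neg (convex_Ici _) (continuous_theta q θig c).continuousOn
    fun x hx => deriv_theta_neg hq hc hcq ?_
  rwa [interior_Ici] at hx

theorem theta_peakPoint (hq : 0 < q) (hc : c ≠ 0) (hcq : c ^ 2 * θig < q) :
    theta q θig c (peakPoint q θig c) = q / c * peakPoint q θig c := by
  have hq' : q - c ^ 2 * θig ≠ 0 := by linarith
  have h : exp (c * peakPoint q θig c) = q / (q - c ^ 2 * θig) := by
    rw [← inv_inj, ← exp_neg, exp_neg_mul_peakPoint hq hc hcq, inv_div]
    field_simp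
  have hcancel :
      θig * (q / (q - c ^ 2 * θig)) + q / c ^ 2 * (1 - q / (q - c ^ 2 * θig)) = 0 := by
    rw [one_sub_div hq']
    field_simp
    ring
  rw [theta, h]
  linear_combination hcancel

theorem theta_peakPoint_eq_mul_negLogOneSubDiv (hq : 0 < q) (hθ : θig ≠ 0) (hc : c ≠ 0)
    (hcq : c ^ 2 * θig < q) :
    theta q θig c (peakPoint q θig c) = θig * negLogOneSubDiv (c ^ 2 * θig / q) := by
  rw [theta_peakPoint hq hc hcq, peakPoint, negLogOneSubDiv]
  field_simp

theorem tendsto_theta_atTop (hc : 0 < c) (hcq : c ^ 2 * θig < q) :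
    Tendsto (theta q θig c) atTop atBot := by
  have hA : θig - q / c ^ 2 < 0 := by
    rw [sub_neg, lt_div_iff₀ (by positivity)]
    linarith
  have hsmall : Tendsto (fun y => y * exp (-y) + exp (-y)) atTop (𝓝 0) := by
    simpa using (tendsto_pow_mul_exp_neg_atTop_nhds_zero 1).add
      (tendsto_pow_mul_exp_neg_atTop_nhds_zero 0)
  have hy := tendsto_exp_atTop.atTop_mul_neg hA
    (by simpa using (hsmall.const_mul (q / c ^ 2)).const_add (θig - q / c ^ 2))
  refine (hy.comp (tendsto_id.const_mul_atTop hc)).congr fun x => ?_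
  simp only [Function.comp_apply, id, theta, exp_neg]
  field_simp
  ring

theorem strictMonoOn_theta_peakPoint (hq : 0 < q) (hθ : 0 < θig) :
    StrictMonoOn (fun c => theta q θig c (peakPoint q θig c)) (Ioo 0 √(q / θig)) := by
  intro c₁ ⟨hc₁, hc₁b⟩ c₂ ⟨hc₂, hc₂b⟩ h
  have hc₁q := sq_mul_lt_of_lt_sqrt_div hθ hc₁.le hc₁b
  have hc₂q := sq_mul_lt_of_lt_sqrt_div hθ hc₂.le hc₂b
  dsimp only
  rw [theta_peakPoint_eq_mul_negLogOneSubDiv hq hθ.ne' hc₁.ne' hc₁q,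
    theta_peakPoint_eq_mul_negLogOneSubDiv hq hθ.ne' hc₂.ne' hc₂q]
  exact mul_lt_mul_of_pos_left (strictMonoOn_negLogOneSubDiv
    ⟨by positivity, (div_lt_one hq).2 hc₁q⟩ ⟨by positivity, (div_lt_one hq).2 hc₂q⟩
    (by gcongr)) hθ

theorem exists_pair_theta_eq (hq : 0 < q) (hθ : 0 < θig) (hc : 0 < c) (hcq : c ^ 2 * θig < q)
    {L : ℝ} (hθL : θig < L) (hL : L < theta q θig c (peakPoint q θig c)) :
    ∃ R₁ R₂, 0 < R₁ ∧ R₁ < R₂ ∧ theta q θig c R₁ = L ∧ theta q θig c R₂ = L ∧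
      0 < deriv (theta q θig c) R₁ ∧ deriv (theta q θig c) R₂ < 0 ∧
      ∀ R, theta q θig c R = L → R = R₁ ∨ R = R₂ := by
  obtain ⟨R₁, R₂, hR₁, hR₁p, hpR₂, hθR₁, hθR₂, hroots⟩ :=
    exists_pair_apply_eq_of_strictMonoOn_Iic_of_strictAntiOn_Ici (continuous_theta q θig c)
      (strictMonoOn_theta hq hc hcq) (strictAntiOn_theta hq hc hcq) (tendsto_theta_atTop hc hcq)
      (peakPoint_pos hq hθ hc hcq).le (by rwa [theta_zero]) hL
  exact ⟨R₁, R₂, hR₁, hR₁p.trans hpR₂, hθR₁, hθR₂, deriv_theta_pos hq hc hcq hR₁p,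
    deriv_theta_neg hq hc hcq hpR₂, hroots⟩

end Theta

/-- There is `c₀ ∈ (c̃, b)` such that for `c = c₀` there is a unique root `R₀` of
`θ_c(R) = θ_hl`, which is critical (`θ_c'(R₀) = 0`) and satisfies `c₀θ_hl = qR₀`;
and for every `c ∈ (c₀, b)` there are exactly two roots `R₁ < R₂`, with
`θ_c'(R₁) > 0` and `θ_c'(R₂) < 0`. -/
theorem stmt3 (q θig θhl : ℝ) (hq : 0 < q) (h1 : 0 < θig) (h2 : θig < θhl) :
    ∃ c₀ : ℝ,
      Real.sqrt (q * (θhl - θig) / (θhl * θig)) < c₀ ∧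
      c₀ < Real.sqrt (q / θig) ∧
      (∃ R₀ : ℝ, 0 < R₀ ∧ theta q θig c₀ R₀ = θhl ∧
        deriv (theta q θig c₀) R₀ = 0 ∧ c₀ * θhl = q * R₀ ∧
        (∀ R : ℝ, 0 < R → theta q θig c₀ R = θhl → R = R₀)) ∧
      (∀ c : ℝ, c₀ < c → c < Real.sqrt (q / θig) →
        ∃ R₁ R₂ : ℝ, 0 < R₁ ∧ R₁ < R₂ ∧
          theta q θig c R₁ = θhl ∧ theta q θig c R₂ = θhl ∧
          0 < deriv (theta q θig c) R₁ ∧ deriv (theta q θig c) R₂ < 0 ∧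
          (∀ R : ℝ, 0 < R → theta q θig c R = θhl → R = R₁ ∨ R = R₂)) := by
  have hs : 1 < θhl / θig := (one_lt_div h1).2 h2
  obtain ⟨t₀, ⟨ht₀s, ht₀1⟩, hφt₀⟩ := exists_negLogOneSubDiv_eq hs
  have ht₀ : 0 < t₀ := (sub_pos.2 (inv_lt_one_of_one_lt₀ hs)).trans ht₀s
  set c₀ := √(q / θig * t₀)
  have hc₀ : 0 < c₀ := sqrt_pos.2 (by positivity)
  have hc₀b : c₀ < √(q / θig) :=
    sqrt_lt_sqrt (by positivity) (mul_lt_of_lt_one_right (by positivity) ht₀1)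
  have hc₀q := sq_mul_lt_of_lt_sqrt_div h1 hc₀.le hc₀b
  have hpeak₀ : theta q θig c₀ (peakPoint q θig c₀) = θhl := by
    have hc₀t : c₀ ^ 2 * θig / q = t₀ := by
      rw [sq_sqrt (by positivity)]
      field_simp
    rw [theta_peakPoint_eq_mul_negLogOneSubDiv hq h1.ne' hc₀.ne' hc₀q, hc₀t, hφt₀]
    field_simp
  refine ⟨c₀, ?_, hc₀b, ⟨peakPoint q θig c₀, peakPoint_pos hq h1 hc₀ hc₀q, hpeak₀,
    deriv_theta_peakPoint hq hc₀.ne' hc₀q, ?_, fun R _ hR => ?_⟩, fun c hc₀c hcb => ?_⟩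
  · have hθhl : 0 < θhl := h1.trans h2
    refine sqrt_lt_sqrt (div_nonneg (mul_nonneg hq.le (by linarith)) (by positivity)) ?_
    calc q * (θhl - θig) / (θhl * θig) = q / θig * (1 - (θhl / θig)⁻¹) := by field_simp
      _ < q / θig * t₀ := mul_lt_mul_of_pos_left ht₀s (by positivity)
  · rw [← hpeak₀, theta_peakPoint hq hc₀.ne' hc₀q]
    field_simp
  · exact eq_of_apply_eq_of_strictMonoOn_Iic_of_strictAntiOn_Ici
      (strictMonoOn_theta hq hc₀ hc₀q) (strictAntiOn_theta hq hc₀ hc₀q) (hR.trans hpeak₀.symm)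
  have hc : 0 < c := hc₀.trans hc₀c
  obtain ⟨R₁, R₂, hR₁, hR₁₂, hθR₁, hθR₂, hd₁, hd₂, hroots⟩ :=
    exists_pair_theta_eq hq h1 hc (sq_mul_lt_of_lt_sqrt_div h1 hc.le hcb) h2
      (hpeak₀ ▸ strictMonoOn_theta_peakPoint hq h1 ⟨hc₀, hc₀b⟩ ⟨hc, hcb⟩ hc₀c)
  exact ⟨R₁, R₂, hR₁, hR₁₂, hθR₁, hθR₂, hd₁, hd₂, fun R _ => hroots R⟩
end

section
/- Let R > 0 and c > 0 satisfy c·θ_hl > q·R and G(R, c) = 0. Then the partial derivative of G with respect to R at (R,c), namely qc(e^{cR} − 1) − c³·θ_ig·e^{cR}, equals c²(qR − c·θ_hl) and is strictly negative; and the partial derivative of G with respect to c at (R,c), namely qR(e^{cR} − 1) − 2c(θ_ig·e^{cR} − θ_hl) − c²·θ_ig·R·e^{cR}, equals cR(qR − c·θ_hl) − (2q/c)(e^{cR} − 1 − cR) and is strictly negative. -/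
open Set Filter

/-- The transcendental function `G(R,c) = q(e^{cR} − 1 − cR) − c²(θ_ig e^{cR} − θ_hl)`. -/
noncomputable def G (q θig θhl R c : ℝ) : ℝ :=
  q * (Real.exp (c * R) - 1 - c * R) - c ^ 2 * (θig * Real.exp (c * R) - θhl)

/-!
On the zero set of `G` the relation
`c²(θ_ig e^{cR} − θ_hl) = q(e^{cR} − 1 − cR)` eliminates `θ_ig e^{cR}` from them, leaving
`c²(qR − cθ_hl)` and `cR(qR − cθ_hl) − (2q/c)(e^{cR} − 1 − cR)`. Both are negative because
`qR < cθ_hl` and `e^x > 1 + x` for `x ≠ 0`.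
-/

section

variable (q θig θhl : ℝ)

theorem hasDerivAt_G_fst (R c : ℝ) :
    HasDerivAt (fun R' => G q θig θhl R' c)
      (q * c * (Real.exp (c * R) - 1) - c ^ 3 * θig * Real.exp (c * R)) R := by
  have hexp : HasDerivAt (fun R' : ℝ => Real.exp (c * R')) (Real.exp (c * R) * (c * 1)) R :=
    ((hasDerivAt_id R).const_mul c).exp
  refine HasDerivAt.congr_deriv
    ((((hexp.sub_const 1).sub ((hasDerivAt_id R).const_mul c)).const_mul q).sub
      (((hexp.const_mul θig).sub_const θhl).const_mul (c ^ 2))) ?_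
  ring

theorem hasDerivAt_G_snd (R c : ℝ) :
    HasDerivAt (fun c' => G q θig θhl R c')
      (q * R * (Real.exp (c * R) - 1) - 2 * c * (θig * Real.exp (c * R) - θhl)
        - c ^ 2 * θig * R * Real.exp (c * R)) c := by
  have hexp : HasDerivAt (fun c' : ℝ => Real.exp (c' * R)) (Real.exp (c * R) * (1 * R)) c :=
    ((hasDerivAt_id c).mul_const R).exp
  have hsq : HasDerivAt (fun c' : ℝ => c' ^ 2) (2 * c) c := by
    simpa using hasDerivAt_pow 2 c
  refine HasDerivAt.congr_deriv
    ((((hexp.sub_const 1).sub ((hasDerivAt_id c).mul_const R)).const_mul q).sub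
      (hsq.mul ((hexp.const_mul θig).sub_const θhl))) ?_
  ring

variable {q θig θhl}

theorem deriv_G_fst_eq_of_G_eq_zero {R c : ℝ} (hG : G q θig θhl R c = 0) :
    q * c * (Real.exp (c * R) - 1) - c ^ 3 * θig * Real.exp (c * R) =
      c ^ 2 * (q * R - c * θhl) := by
  unfold G at hG
  linear_combination c * hG

theorem deriv_G_snd_eq_of_G_eq_zero {R c : ℝ} (hc : c ≠ 0) (hG : G q θig θhl R c = 0) :
    q * R * (Real.exp (c * R) - 1) - 2 * c * (θig * Real.exp (c * R) - θhl)
        - c ^ 2 * θig * R * Real.exp (c * R) =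
      c * R * (q * R - c * θhl) - (2 * q / c) * (Real.exp (c * R) - 1 - c * R) := by
  unfold G at hG
  set E := Real.exp (c * R)
  field_simp
  linear_combination (2 + R * c) * hG

end

theorem stmt8_general (q θig θhl : ℝ) (hq : 0 < q)
    (R c : ℝ) (hR : 0 < R) (hc : 0 < c) (hQ : q * R < c * θhl)
    (hG : G q θig θhl R c = 0) :
    (deriv (fun R' => G q θig θhl R' c) R =
        q * c * (Real.exp (c * R) - 1) - c ^ 3 * θig * Real.exp (c * R) ∧
      q * c * (Real.exp (c * R) - 1) - c ^ 3 * θig * Real.exp (c * R) =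
        c ^ 2 * (q * R - c * θhl) ∧
      q * c * (Real.exp (c * R) - 1) - c ^ 3 * θig * Real.exp (c * R) < 0) ∧
    (deriv (fun c' => G q θig θhl R c') c =
        q * R * (Real.exp (c * R) - 1) - 2 * c * (θig * Real.exp (c * R) - θhl)
          - c ^ 2 * θig * R * Real.exp (c * R) ∧
      q * R * (Real.exp (c * R) - 1) - 2 * c * (θig * Real.exp (c * R) - θhl)
          - c ^ 2 * θig * R * Real.exp (c * R) =
        c * R * (q * R - c * θhl) - (2 * q / c) * (Real.exp (c * R) - 1 - c * R) ∧
      q * R * (Real.exp (c * R) - 1) - 2 * c * (θig * Real.exp (c * R) - θhl)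
          - c ^ 2 * θig * R * Real.exp (c * R) < 0) := by
  have hcR : 0 < c * R := mul_pos hc hR
  have hgap : q * R - c * θhl < 0 := sub_neg.mpr hQ
  have hexp : 0 < Real.exp (c * R) - 1 - c * R := by
    linarith [Real.add_one_lt_exp hcR.ne']
  have eqR := deriv_G_fst_eq_of_G_eq_zero hG
  have eqc := deriv_G_snd_eq_of_G_eq_zero hc.ne' hG
  refine ⟨⟨(hasDerivAt_G_fst q θig θhl R c).deriv, eqR, ?_⟩,
    ⟨(hasDerivAt_G_snd q θig θhl R c).deriv, eqc, ?_⟩⟩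
  · rw [eqR]
    exact mul_neg_of_pos_of_neg (by positivity) hgap
  · rw [eqc]
    have hpos : 0 < 2 * q / c * (Real.exp (c * R) - 1 - c * R) := by positivity
    linarith [mul_neg_of_pos_of_neg hcR hgap]

/-- If `(R,c)` lies in the interior of `Q₊` and `G(R,c) = 0`, then both partial
derivatives of `G` at `(R,c)` are strictly negative, with the stated explicit
formulas and simplifications. -/
theorem stmt8 (q θig θhl : ℝ) (hq : 0 < q) (h1 : 0 < θig) (h2 : θig < θhl)
    (R c : ℝ) (hR : 0 < R) (hc : 0 < c) (hQ : q * R < c * θhl)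
    (hG : G q θig θhl R c = 0) :
    (deriv (fun R' => G q θig θhl R' c) R =
        q * c * (Real.exp (c * R) - 1) - c ^ 3 * θig * Real.exp (c * R) ∧
      q * c * (Real.exp (c * R) - 1) - c ^ 3 * θig * Real.exp (c * R) =
        c ^ 2 * (q * R - c * θhl) ∧
      q * c * (Real.exp (c * R) - 1) - c ^ 3 * θig * Real.exp (c * R) < 0) ∧
    (deriv (fun c' => G q θig θhl R c') c =
        q * R * (Real.exp (c * R) - 1) - 2 * c * (θig * Real.exp (c * R) - θhl)
          - c ^ 2 * θig * R * Real.exp (c * R) ∧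
      q * R * (Real.exp (c * R) - 1) - 2 * c * (θig * Real.exp (c * R) - θhl)
          - c ^ 2 * θig * R * Real.exp (c * R) =
        c * R * (q * R - c * θhl) - (2 * q / c) * (Real.exp (c * R) - 1 - c * R) ∧
      q * R * (Real.exp (c * R) - 1) - 2 * c * (θig * Real.exp (c * R) - θhl)
          - c ^ 2 * θig * R * Real.exp (c * R) < 0) :=
  stmt8_general q θig θhl hq R c hR hc hQ hG
end

section
/- Let R > 0 and c > 0 satisfy c·θ_hl > q·R and c·R > (θ_hl − θ_ig)/θ_ig. Then the partial derivative of G with respect to c at (R,c), namely qR(e^{cR} − 1) − c·θ_ig·e^{cR}(2 + cR) + 2c·θ_hl, is strictly negative. -/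
open Set Filter

open Real

lemma hasDerivAt_G (q θig θhl R c : ℝ) :
    HasDerivAt (fun c' => G q θig θhl R c')
      (q * R * (exp (c * R) - 1) - c * θig * exp (c * R) * (2 + c * R) + 2 * c * θhl) c := by
  have hlin : HasDerivAt (fun c' => c' * R) R c := hasDerivAt_mul_const R
  have hexp : HasDerivAt (fun c' => exp (c' * R)) (exp (c * R) * R) c := hlin.exp
  refine ((((hexp.sub_const 1).sub hlin).const_mul q).sub
    ((hasDerivAt_pow 2 c).mul ((hexp.const_mul θig).sub_const θhl))).congr_deriv ?_
  ring

/-- With `E = e^{cR} > 1 + cR`: the first term is below `cθ_hl(E - 1)` by `qR < cθ_hl`, and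
`θ_hl(E + 1) < θ_ig(1 + cR)(E + 1) ≤ θ_ig(2 + cR)E`. -/
lemma deriv_G_formula_neg {q θig θhl R c : ℝ} (hθig : 0 ≤ θig) (hR : 0 < R) (hc : 0 < c)
    (hQ : q * R < c * θhl) (hθ : θhl < θig * (1 + c * R)) :
    q * R * (exp (c * R) - 1) - c * θig * exp (c * R) * (2 + c * R) + 2 * c * θhl < 0 := by
  set E := exp (c * R)
  have hE : 1 + c * R < E := by
    linarith [add_one_lt_exp (mul_pos hc hR).ne']
  have hθE : θhl * (E + 1) < θig * (2 + c * R) * E := by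
    nlinarith [mul_lt_mul_of_pos_right hθ (by positivity : 0 < E + 1),
      mul_nonneg hθig (by linarith : 0 ≤ E - 1 - c * R)]
  calc q * R * (E - 1) - c * θig * E * (2 + c * R) + 2 * c * θhl
      < c * θhl * (E - 1) - c * θig * E * (2 + c * R) + 2 * c * θhl := by
        gcongr
        linarith [mul_pos hc hR]
    _ = c * (θhl * (E + 1) - θig * (2 + c * R) * E) := by ring
    _ < 0 := mul_neg_of_pos_of_neg hc (by linarith)

theorem stmt9_general (q θig θhl : ℝ) (h1 : 0 < θig)
    (R c : ℝ) (hR : 0 < R) (hc : 0 < c) (hQ : q * R < c * θhl)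
    (hcR : (θhl - θig) / θig < c * R) :
    deriv (fun c' => G q θig θhl R c') c =
      q * R * (Real.exp (c * R) - 1) - c * θig * Real.exp (c * R) * (2 + c * R)
        + 2 * c * θhl ∧
    q * R * (Real.exp (c * R) - 1) - c * θig * Real.exp (c * R) * (2 + c * R)
        + 2 * c * θhl < 0 := by
  have hθ : θhl < θig * (1 + c * R) := by
    have := (div_lt_iff₀ h1).mp hcR
    linarith
  exact ⟨(hasDerivAt_G q θig θhl R c).deriv, deriv_G_formula_neg h1.le hR hc hQ hθ⟩

/-- If `(R,c)` lies in the interior of `Q₊` and `cR > (θ_hl − θ_ig)/θ_ig`, then the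
partial derivative of `G` with respect to `c` at `(R,c)`, namely
`qR(e^{cR} − 1) − cθ_ig e^{cR}(2 + cR) + 2cθ_hl`, is strictly negative. -/
theorem stmt9 (q θig θhl : ℝ) (hq : 0 < q) (h1 : 0 < θig) (h2 : θig < θhl)
    (R c : ℝ) (hR : 0 < R) (hc : 0 < c) (hQ : q * R < c * θhl)
    (hcR : (θhl - θig) / θig < c * R) :
    deriv (fun c' => G q θig θhl R c') c =
      q * R * (Real.exp (c * R) - 1) - c * θig * Real.exp (c * R) * (2 + c * R)
        + 2 * c * θhl ∧
    q * R * (Real.exp (c * R) - 1) - c * θig * Real.exp (c * R) * (2 + c * R)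
        + 2 * c * θhl < 0 :=
  stmt9_general q θig θhl h1 R c hR hc hQ hcR
end

section
/- On the level set {G = 0} inside Q₊ one has c → +∞ as R → 0⁺; precisely, for every M > 0 there exists δ > 0 such that for all R, c with 0 < R < δ, c·θ_hl ≥ q·R and G(R, c) = 0, one has c > M. -/
/-!
Where `θ_ig e^{cR} < θ_hl`, both terms of `G = q (e^{cR} - 1 - cR) + c² (θ_hl - θ_ig e^{cR})` are
nonnegative and the second is positive for `c ≠ 0`, so `G ≠ 0` there. On `Q₊` we have `c > 0`, and
`c ≤ M`, `R < log (θ_hl / θ_ig) / M` give `cR < log (θ_hl / θ_ig)`, i.e. `θ_ig e^{cR} < θ_hl`.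
-/

open Set Filter

theorem G_pos_of_mul_exp_lt {q θig θhl R c : ℝ} (hq : 0 ≤ q) (hc : c ≠ 0)
    (h : θig * Real.exp (c * R) < θhl) : 0 < G q θig θhl R c := by
  have hG : G q θig θhl R c =
      q * (Real.exp (c * R) - 1 - c * R) + c ^ 2 * (θhl - θig * Real.exp (c * R)) := by
    unfold G; ring
  have hexp : 0 ≤ Real.exp (c * R) - 1 - c * R := by linarith [Real.add_one_le_exp (c * R)]
  rw [hG]
  exact add_pos_of_nonneg_of_pos (mul_nonneg hq hexp)
    (mul_pos (sq_pos_of_ne_zero hc) (sub_pos.2 h))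

theorem mul_exp_lt_of_lt_log_div {a b x : ℝ} (ha : 0 < a) (hb : 0 < b) (hx : x < Real.log (b / a)) :
    a * Real.exp x < b :=
  (lt_div_iff₀' ha).1 ((Real.lt_log_iff_exp_lt (div_pos hb ha)).1 hx)

/-- On the level set `{G = 0}` inside `Q₊`, `c → +∞` as `R → 0⁺`. -/
theorem stmt10 (q θig θhl : ℝ) (hq : 0 < q) (h1 : 0 < θig) (h2 : θig < θhl) :
    ∀ M : ℝ, 0 < M → ∃ δ : ℝ, 0 < δ ∧
      ∀ R c : ℝ, 0 < R → R < δ → q * R ≤ c * θhl → G q θig θhl R c = 0 →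
        M < c := by
  intro M hM
  have hθhl : 0 < θhl := h1.trans h2
  set L := Real.log (θhl / θig)
  have hL : 0 < L := Real.log_pos ((one_lt_div h1).2 h2)
  refine ⟨L / M, div_pos hL hM, fun R c hR hRδ hqc hG => ?_⟩
  by_contra! hcM
  have hc : 0 < c := pos_of_mul_pos_left ((mul_pos hq hR).trans_le hqc) hθhl.le
  have hcR : c * R < L :=
    calc c * R ≤ M * R := mul_le_mul_of_nonneg_right hcM hR.le
      _ < M * (L / M) := mul_lt_mul_of_pos_left hRδ hM
      _ = L := mul_div_cancel₀ L hM.ne'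
  exact (G_pos_of_mul_exp_lt hq.le hc.ne' (mul_exp_lt_of_lt_log_div h1 hθhl hcR)).ne' hG
end

section
/- Along the level set {G = 0} inside Q₊, the product cR tends to ln(θ_hl/θ_ig) as R → 0⁺; precisely, for every ε > 0 there exists δ > 0 such that for all R, c with 0 < R < δ, c·θ_hl ≥ q·R and G(R, c) = 0, one has |cR − ln(θ_hl/θ_ig)| < ε. -/
open Set Filter

/-!
Write `x = cR` and `L = ln(θ_hl/θ_ig)`. On `{G = 0}` we have
`q(e^x − 1 − x) = c²(θ_ig e^x − θ_hl)`, and the left side is positive for `x ≠ 0`, so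
`θ_ig e^x > θ_hl`, i.e. `x > L`. Multiplying by `R²` gives
`qR²(e^x − 1 − x) = x²(θ_ig e^x − θ_hl)`; if `x ≥ L + ε` the bracket on the right is at least
`θ_ig e^x (1 − e^{−ε})`, so `qR² ≥ (L + ε)² θ_ig (1 − e^{−ε})`, which fails for small `R`.
-/

open Real

section LevelSet

variable {q θig θhl R c : ℝ}

theorem G_eq_zero_iff :
    G q θig θhl R c = 0 ↔
      q * (exp (c * R) - 1 - c * R) = c ^ 2 * (θig * exp (c * R) - θhl) :=
  sub_eq_zero

theorem lt_mul_exp_of_G_eq_zero (hq : 0 < q) (hcR : c * R ≠ 0) (hG : G q θig θhl R c = 0) :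
    θhl < θig * exp (c * R) := by
  have hc : c ≠ 0 := left_ne_zero_of_mul hcR
  have hexp : c * R + 1 < exp (c * R) := add_one_lt_exp hcR
  rw [G_eq_zero_iff] at hG
  have hpos : 0 < c ^ 2 * (θig * exp (c * R) - θhl) := hG ▸ mul_pos hq (by linarith)
  exact sub_pos.1 (pos_of_mul_pos_right hpos (sq_nonneg c))

theorem sq_mul_le_of_G_eq_zero {ε : ℝ} (hq : 0 ≤ q) (hcR : -1 ≤ c * R)
    (hθ : θhl * exp ε ≤ θig * exp (c * R)) (hG : G q θig θhl R c = 0) :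
    (c * R) ^ 2 * θig * (1 - exp (-ε)) ≤ q * R ^ 2 := by
  rw [G_eq_zero_iff] at hG
  have hgap : θig * exp (c * R) * (1 - exp (-ε)) ≤ θig * exp (c * R) - θhl := by
    have : θhl ≤ θig * exp (c * R) * exp (-ε) := by
      rwa [← le_div_iff₀ (exp_pos ε), div_eq_mul_inv, ← exp_neg] at hθ
    linarith
  have hscaled :
      q * R ^ 2 * (exp (c * R) - 1 - c * R) = (c * R) ^ 2 * (θig * exp (c * R) - θhl) := by
    linear_combination R ^ 2 * hG
  have hexp : exp (c * R) - 1 - c * R ≤ exp (c * R) := by linarith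
  have key : (c * R) ^ 2 * θig * (1 - exp (-ε)) * exp (c * R) ≤ q * R ^ 2 * exp (c * R) :=
    calc (c * R) ^ 2 * θig * (1 - exp (-ε)) * exp (c * R)
        = (c * R) ^ 2 * (θig * exp (c * R) * (1 - exp (-ε))) := by ring
      _ ≤ (c * R) ^ 2 * (θig * exp (c * R) - θhl) := by gcongr
      _ = q * R ^ 2 * (exp (c * R) - 1 - c * R) := hscaled.symm
      _ ≤ q * R ^ 2 * exp (c * R) := by gcongr
  exact le_of_mul_le_mul_right key (exp_pos _)

end LevelSet

/-- Along the level set `{G = 0}` inside `Q₊`, the product `cR` tends to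
`ln(θ_hl/θ_ig)` as `R → 0⁺`. -/
theorem stmt11 (q θig θhl : ℝ) (hq : 0 < q) (h1 : 0 < θig) (h2 : θig < θhl) :
    ∀ ε : ℝ, 0 < ε → ∃ δ : ℝ, 0 < δ ∧
      ∀ R c : ℝ, 0 < R → R < δ → q * R ≤ c * θhl → G q θig θhl R c = 0 →
        |c * R - Real.log (θhl / θig)| < ε := by
  intro ε hε
  set L := log (θhl / θig)
  have hθhl : 0 < θhl := h1.trans h2
  have hL : 0 < L := log_pos ((one_lt_div h1).2 h2)
  have hgap : 0 < 1 - exp (-ε) := sub_pos.2 (exp_lt_one_iff.2 (neg_lt_zero.2 hε))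
  set m := (L + ε) ^ 2 * θig * (1 - exp (-ε))
  refine ⟨sqrt (m / q), by positivity, fun R c hR hRδ hQ hG => ?_⟩
  have hc : 0 < c := pos_of_mul_pos_left ((mul_pos hq hR).trans_le hQ) hθhl.le
  have hcR : 0 < c * R := mul_pos hc hR
  have hlower : L < c * R :=
    (log_lt_iff_lt_exp (by positivity)).2
      ((div_lt_iff₀' h1).2 (lt_mul_exp_of_G_eq_zero hq hcR.ne' hG))
  have hupper : c * R < L + ε := by
    by_contra! hfar
    have hR2 : q * R ^ 2 < m := (lt_div_iff₀' hq).1 ((lt_sqrt hR.le).1 hRδ)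
    have hθ : θhl * exp ε ≤ θig * exp (c * R) :=
      calc θhl * exp ε = θig * exp (L + ε) := by
            rw [exp_add, exp_log (by positivity)]; field_simp
        _ ≤ θig * exp (c * R) := by gcongr
    have hm : (L + ε) ^ 2 * θig * (1 - exp (-ε)) ≤ (c * R) ^ 2 * θig * (1 - exp (-ε)) := by
      gcongr
    linarith [sq_mul_le_of_G_eq_zero hq.le (by linarith) hθ hG]
  exact abs_sub_lt_iff.2 ⟨by linarith, by linarith⟩
end

section
/- Let b = √(q/θ_ig) and a = (1/b)·(θ_hl/θ_ig − 1). Then there exist ε > 0, an open neighborhood U of (a, b) in ℝ², and a function φ̃ : (a − ε, a + ε) → ℝ such that: φ̃ is C^∞ and strictly decreasing; φ̃(a) = b; G(R, φ̃(R)) = 0 for every R ∈ (a − ε, a + ε); and for every (R, c) ∈ U, G(R, c) = 0 holds if and only if R ∈ (a − ε, a + ε) and c = φ̃(R). -/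
open Set Filter

/-- Partial derivative of `G` in `R`. -/
noncomputable def GR' (q θig θhl R c : ℝ) : ℝ :=
  c * (q * (Real.exp (c * R) - 1) - c ^ 2 * θig * Real.exp (c * R))

/-- Partial derivative of `G` in `c`. -/
noncomputable def Gc' (q θig θhl R c : ℝ) : ℝ :=
  q * (R * Real.exp (c * R) - R) -
    (2 * c * (θig * Real.exp (c * R) - θhl) + c ^ 2 * (θig * (R * Real.exp (c * R))))

lemma contDiff_G (q θig θhl : ℝ) {n : WithTop ℕ∞} :
    ContDiff ℝ n (fun p : ℝ × ℝ => G q θig θhl p.1 p.2) := by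
  unfold G
  have h1 : ContDiff ℝ n (fun p : ℝ × ℝ => p.2 * p.1) := contDiff_snd.mul contDiff_fst
  have hE : ContDiff ℝ n (fun p : ℝ × ℝ => Real.exp (p.2 * p.1)) := Real.contDiff_exp.comp h1
  exact (contDiff_const.mul ((hE.sub contDiff_const).sub h1)).sub
    ((contDiff_snd.pow 2).mul ((contDiff_const.mul hE).sub contDiff_const))

lemma hasDerivAt_G_R (q θig θhl c R : ℝ) :
    HasDerivAt (fun t => G q θig θhl t c) (GR' q θig θhl R c) R := by
  have h1 : HasDerivAt (fun t : ℝ => c * t) c R := by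
    simpa using (hasDerivAt_id R).const_mul c
  have h2 := h1.exp
  have h3 := (((h2.sub_const 1).sub h1).const_mul q).sub
    (((h2.const_mul θig).sub_const θhl).const_mul (c ^ 2))
  refine h3.congr_deriv ?_
  simp only [GR']
  ring

lemma hasDerivAt_G_c (q θig θhl R c : ℝ) :
    HasDerivAt (fun s => G q θig θhl R s) (Gc' q θig θhl R c) c := by
  have h1 : HasDerivAt (fun s : ℝ => s * R) R c := by
    simpa using (hasDerivAt_id c).mul_const R
  have h2 := h1.exp
  have hp : HasDerivAt (fun s : ℝ => s ^ 2) (2 * c) c := by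
    simpa using hasDerivAt_pow 2 c
  have h3 := (((h2.sub_const 1).sub h1).const_mul q).sub
    (hp.mul ((h2.const_mul θig).sub_const θhl))
  refine h3.congr_deriv ?_
  simp only [Gc']
  ring

lemma hasStrictFDerivAt_G (q θig θhl : ℝ) (p : ℝ × ℝ) :
    HasStrictFDerivAt (fun x : ℝ × ℝ => G q θig θhl x.1 x.2)
      (GR' q θig θhl p.1 p.2 • ContinuousLinearMap.fst ℝ ℝ ℝ +
        Gc' q θig θhl p.1 p.2 • ContinuousLinearMap.snd ℝ ℝ ℝ) p := by
  have hfst : HasStrictFDerivAt (fun x : ℝ × ℝ => x.1) (ContinuousLinearMap.fst ℝ ℝ ℝ) p :=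
    hasStrictFDerivAt_fst
  have hsnd : HasStrictFDerivAt (fun x : ℝ × ℝ => x.2) (ContinuousLinearMap.snd ℝ ℝ ℝ) p :=
    hasStrictFDerivAt_snd
  have hm := hsnd.mul hfst
  have hE := hm.exp
  have h3 := (((hE.sub_const 1).sub hm).const_mul q).sub
    ((hsnd.mul hsnd).mul ((hE.const_mul θig).sub_const θhl))
  have hfun : (fun x : ℝ × ℝ => G q θig θhl x.1 x.2) =
      fun x : ℝ × ℝ => q * (Real.exp (x.2 * x.1) - 1 - x.2 * x.1) -
        x.2 * x.2 * (θig * Real.exp (x.2 * x.1) - θhl) := by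
    funext x; simp only [G]; ring
  rw [hfun]
  refine h3.congr_fderiv ?_
  refine ContinuousLinearMap.ext fun v => ?_
  simp [GR', Gc', smul_eq_mul]
  try ring

/-- The shear linear equivalence `(u,v) ↦ (u, gr·u + gc·v)`. -/
noncomputable def shear (gr gc : ℝ) (h : gc ≠ 0) : (ℝ × ℝ) ≃L[ℝ] ℝ × ℝ :=
  { toLinearEquiv :=
    { toFun := fun p => (p.1, gr * p.1 + gc * p.2)
      invFun := fun p => (p.1, (p.2 - gr * p.1) / gc)
      map_add' := by intro p p'; simp [Prod.ext_iff]; ring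
      map_smul' := by intro m p; simp [Prod.ext_iff, smul_eq_mul]; ring
      left_inv := by intro p; simp [Prod.ext_iff]; field_simp
      right_inv := by intro p; simp [Prod.ext_iff]; field_simp; ring }
    continuous_toFun := by fun_prop
    continuous_invFun := by fun_prop }

lemma hasStrictFDerivAt_F (q θig θhl : ℝ) (p : ℝ × ℝ) (h : Gc' q θig θhl p.1 p.2 ≠ 0) :
    HasStrictFDerivAt (fun x : ℝ × ℝ => (x.1, G q θig θhl x.1 x.2))
      (shear (GR' q θig θhl p.1 p.2) (Gc' q θig θhl p.1 p.2) h : (ℝ × ℝ) →L[ℝ] ℝ × ℝ) p := by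
  have := (hasStrictFDerivAt_fst (𝕜 := ℝ) (E := ℝ) (F := ℝ) (p := p)).prodMk
    (hasStrictFDerivAt_G q θig θhl p)
  exact this.congr_fderiv (ContinuousLinearMap.ext fun v => rfl)

/-- Local Implicit Function Theorem at the point `A = (a, b)`: the level set
`{G = 0}` near `A` is the graph of a smooth, strictly decreasing function `φ̃`
defined on `(a − ε, a + ε)`, with `φ̃(a) = b`. -/
theorem stmt12 (q θig θhl : ℝ) (hq : 0 < q) (h1 : 0 < θig) (h2 : θig < θhl)
    (a b : ℝ) (hb : b = Real.sqrt (q / θig)) (ha : a = (1 / b) * (θhl / θig - 1)) :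
    ∃ ε : ℝ, 0 < ε ∧ ∃ U : Set (ℝ × ℝ), IsOpen U ∧ (a, b) ∈ U ∧
      ∃ φ : ℝ → ℝ,
        ContDiffOn ℝ (⊤ : ℕ∞) φ (Ioo (a - ε) (a + ε)) ∧
        StrictAntiOn φ (Ioo (a - ε) (a + ε)) ∧
        φ a = b ∧
        (∀ R ∈ Ioo (a - ε) (a + ε), G q θig θhl R (φ R) = 0) ∧
        (∀ p ∈ U, (G q θig θhl p.1 p.2 = 0 ↔
          p.1 ∈ Ioo (a - ε) (a + ε) ∧ p.2 = φ p.1)) := by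
  have hθ : (0:ℝ) < q / θig := div_pos hq h1
  have hbpos : 0 < b := hb ▸ Real.sqrt_pos.2 hθ
  have hbne : b ≠ 0 := ne_of_gt hbpos
  have hb2 : θig * b ^ 2 = q := by
    rw [hb, Real.sq_sqrt hθ.le]; field_simp
  have hk : b * a = θhl / θig - 1 := by
    rw [ha]; field_simp
  have hkpos : 0 < b * a := by
    rw [hk]
    have : 1 < θhl / θig := (one_lt_div h1).2 h2
    linarith
  have hEgt : θhl / θig < Real.exp (b * a) := by
    have h := Real.add_one_lt_exp (ne_of_gt hkpos)
    linarith [hk]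
  have hθE : θhl < θig * Real.exp (b * a) := by
    have := (div_lt_iff₀ h1).1 hEgt
    linarith
  -- the value, and the two partial derivatives, at (a,b)
  have hG0 : G q θig θhl a b = 0 := by
    have h' : G q θig θhl a b = b ^ 2 * (θhl - θig - θig * (b * a)) := by
      simp only [G]; rw [← hb2]; ring
    rw [h', hk]
    have hθhl : θig * (θhl / θig - 1) = θhl - θig := by field_simp
    rw [hθhl]; ring
  have hGR0 : GR' q θig θhl a b < 0 := by
    have h' : GR' q θig θhl a b = -(θig * b ^ 3) := by
      simp only [GR']; rw [← hb2]; ring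
    rw [h']
    have : 0 < θig * b ^ 3 := by positivity
    linarith
  have hGc0 : Gc' q θig θhl a b < 0 := by
    have h' : Gc' q θig θhl a b =
        -(θig * b) * (b * a) - 2 * b * θig * Real.exp (b * a) + 2 * b * θhl := by
      simp only [Gc']; rw [← hb2]; ring
    have e : θig * (b * a) = θhl - θig := by rw [hk]; field_simp
    have h'' : Gc' q θig θhl a b = b * (θig + θhl - 2 * (θig * Real.exp (b * a))) := by
      linear_combination h' - b * e
    rw [h'']
    have : θig + θhl - 2 * (θig * Real.exp (b * a)) < 0 := by nlinarith
    exact mul_neg_of_pos_of_neg hbpos this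
  -- an open rectangle around (a,b) on which both partials are negative
  set W : Set (ℝ × ℝ) :=
    {p : ℝ × ℝ | GR' q θig θhl p.1 p.2 < 0 ∧ Gc' q θig θhl p.1 p.2 < 0} with hW
  have hWopen : IsOpen W := by
    have hcR : Continuous fun p : ℝ × ℝ => GR' q θig θhl p.1 p.2 := by
      unfold GR'; fun_prop
    have hcc : Continuous fun p : ℝ × ℝ => Gc' q θig θhl p.1 p.2 := by
      unfold Gc'; fun_prop
    exact (isOpen_lt hcR continuous_const).inter (isOpen_lt hcc continuous_const)
  obtain ⟨δ, hδpos, hδsub⟩ := Metric.isOpen_iff.1 hWopen (a, b) ⟨hGR0, hGc0⟩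
  set Q : Set (ℝ × ℝ) := Ioo (a - δ) (a + δ) ×ˢ Ioo (b - δ) (b + δ) with hQ
  have hQsub : Q ⊆ W := by
    rw [hQ, ← Real.ball_eq_Ioo, ← Real.ball_eq_Ioo, ball_prod_same]
    exact hδsub
  have hQopen : IsOpen Q := isOpen_Ioo.prod isOpen_Ioo
  have hQab : (a, b) ∈ Q :=
    ⟨⟨by linarith, by linarith⟩, ⟨by linarith, by linarith⟩⟩
  -- inverse function theorem setup
  have hGcne : Gc' q θig θhl a b ≠ 0 := ne_of_lt hGc0
  have hF := hasStrictFDerivAt_F q θig θhl (a, b) hGcne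
  set H := hF.toOpenPartialHomeomorph _ with hHdef
  have hcoe : ⇑H = fun x : ℝ × ℝ => (x.1, G q θig θhl x.1 x.2) := rfl
  have hsrc : (a, b) ∈ H.source := hF.mem_toOpenPartialHomeomorph_source
  have hFab : H (a, b) = (a, 0) := by
    rw [hcoe]; simp [hG0]
  have htgt : (a, 0) ∈ H.target := by rw [← hFab]; exact H.map_source hsrc
  have hsymm_ab : H.symm (a, 0) = (a, b) := by rw [← hFab]; exact H.left_inv hsrc
  have hkey : ∀ y ∈ H.target,
      (H.symm y).1 = y.1 ∧ G q θig θhl (H.symm y).1 (H.symm y).2 = y.2 := by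
    intro y hy
    have h := H.right_inv hy
    rw [hcoe] at h
    have h' : ((H.symm y).1, G q θig θhl (H.symm y).1 (H.symm y).2) = y := h
    exact ⟨(Prod.ext_iff.1 h').1, (Prod.ext_iff.1 h').2⟩
  -- the neighborhood V of (a, 0)
  set V : Set (ℝ × ℝ) := H.target ∩ H.symm ⁻¹' Q with hV
  have hVopen : IsOpen V := H.isOpen_inter_preimage_symm hQopen
  have hVmem : (a, 0) ∈ V := ⟨htgt, by simp only [mem_preimage, hsymm_ab]; exact hQab⟩
  obtain ⟨ε, hεpos, hεsub⟩ := Metric.isOpen_iff.1 hVopen (a, 0) hVmem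
  have hIooV : ∀ R ∈ Ioo (a - ε) (a + ε), ((R, (0:ℝ)) : ℝ × ℝ) ∈ V := by
    intro R hR
    apply hεsub
    rw [← ball_prod_same]
    exact ⟨by rw [Real.ball_eq_Ioo]; exact hR, Metric.mem_ball_self hεpos⟩
  refine ⟨ε, hεpos, H.source ∩ (Ioo (a - ε) (a + ε) ×ˢ (univ : Set ℝ)),
    H.open_source.inter (isOpen_Ioo.prod isOpen_univ),
    ⟨hsrc, ⟨⟨by linarith, by linarith⟩, trivial⟩⟩,
    fun R => (H.symm (R, 0)).2, ?_, ?_, ?_, ?_, ?_⟩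
  · -- smoothness
    intro R hR
    have hy := hIooV R hR
    have hxQ : H.symm (R, 0) ∈ Q := hy.2
    have hxW := hQsub hxQ
    have hGcx : Gc' q θig θhl (H.symm (R, 0)).1 (H.symm (R, 0)).2 ≠ 0 := ne_of_lt hxW.2
    have hsymmCD : ContDiffAt ℝ (⊤ : ℕ∞) H.symm (R, 0) := by
      apply H.contDiffAt_symm hy.1
        (f₀' := shear _ _ hGcx)
      · rw [hcoe]
        exact (hasStrictFDerivAt_F q θig θhl _ hGcx).hasFDerivAt
      · rw [hcoe]
        exact (contDiff_fst.prodMk (contDiff_G q θig θhl)).contDiffAt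
    have h2 : ContDiffAt ℝ (⊤ : ℕ∞) (fun t : ℝ => H.symm (t, 0)) R :=
      hsymmCD.comp R (contDiffAt_id.prodMk contDiffAt_const)
    exact (contDiffAt_snd.comp R h2).contDiffWithinAt
  · -- strict antitonicity
    intro R1 hR1 R2 hR2 h12
    have hy1 := hIooV R1 hR1
    have hy2 := hIooV R2 hR2
    obtain ⟨hf1, hg1⟩ := hkey _ hy1.1
    obtain ⟨hf2, hg2⟩ := hkey _ hy2.1
    have hf1' : (H.symm (R1, 0)).1 = R1 := hf1
    have hf2' : (H.symm (R2, 0)).1 = R2 := hf2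
    set c1 := (H.symm (R1, 0)).2 with hc1
    set c2 := (H.symm (R2, 0)).2 with hc2
    have hx1Q : ((R1, c1) : ℝ × ℝ) ∈ Q := by
      have : H.symm (R1, 0) = (R1, c1) := Prod.ext hf1' rfl
      rw [← this]; exact hy1.2
    have hx2Q : ((R2, c2) : ℝ × ℝ) ∈ Q := by
      have : H.symm (R2, 0) = (R2, c2) := Prod.ext hf2' rfl
      rw [← this]; exact hy2.2
    have hG1 : G q θig θhl R1 c1 = 0 := by rw [← hf1']; exact hg1
    have hG2 : G q θig θhl R2 c2 = 0 := by rw [← hf2']; exact hg2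
    have hGcont : Continuous fun p : ℝ × ℝ => G q θig θhl p.1 p.2 :=
      (contDiff_G q θig θhl (n := 1)).continuous
    -- step 1 : G(R2, c1) < 0
    have hanti1 : StrictAntiOn (fun t => G q θig θhl t c1) (Icc R1 R2) := by
      apply strictAntiOn_of_deriv_neg (convex_Icc _ _)
      · exact (hGcont.comp (continuous_id.prodMk continuous_const)).continuousOn
      · intro x hx
        rw [interior_Icc] at hx
        rw [(hasDerivAt_G_R q θig θhl c1 x).deriv]
        have hxQ : ((x, c1) : ℝ × ℝ) ∈ Q := by
          refine ⟨⟨?_, ?_⟩, hx1Q.2⟩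
          · have := hx1Q.1.1; linarith [hx.1]
          · have := hx2Q.1.2; linarith [hx.2]
        exact (hQsub hxQ).1
    have hstep1 : G q θig θhl R2 c1 < 0 := by
      have h := hanti1 ⟨le_refl R1, h12.le⟩ ⟨h12.le, le_refl R2⟩ h12
      simp only at h
      linarith [hG1]
    -- step 2 : conclude c2 < c1
    show c2 < c1
    by_contra hcon
    push_neg at hcon
    rcases eq_or_lt_of_le hcon with heq | hlt
    · rw [← heq] at hG2
      linarith
    · have hanti2 : StrictAntiOn (fun s => G q θig θhl R2 s) (Icc c1 c2) := by
        apply strictAntiOn_of_deriv_neg (convex_Icc _ _)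
        · exact (hGcont.comp (continuous_const.prodMk continuous_id)).continuousOn
        · intro s hs
          rw [interior_Icc] at hs
          rw [(hasDerivAt_G_c q θig θhl R2 s).deriv]
          have hsQ : ((R2, s) : ℝ × ℝ) ∈ Q := by
            refine ⟨hx2Q.1, ⟨?_, ?_⟩⟩
            · have := hx1Q.2.1; linarith [hs.1]
            · have := hx2Q.2.2; linarith [hs.2]
          exact (hQsub hsQ).2
      have h := hanti2 ⟨le_refl c1, hcon⟩ ⟨hcon, le_refl c2⟩ hlt
      simp only at h
      linarith [hG1, hG2, hstep1]
  · -- φ a = b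
    show (H.symm (a, 0)).2 = b
    rw [hsymm_ab]
  · -- zeros
    intro R hR
    obtain ⟨hf, hg⟩ := hkey _ (hIooV R hR).1
    have hf' : (H.symm (R, 0)).1 = R := hf
    rw [hf'] at hg
    exact hg
  · -- characterization
    intro p hp
    constructor
    · intro hGp
      refine ⟨hp.2.1, ?_⟩
      have hFp : H p = (p.1, 0) := by
        rw [hcoe]; simp [hGp]
      have h := H.left_inv hp.1
      rw [hFp] at h
      show p.2 = (H.symm (p.1, 0)).2
      rw [h]
    · rintro ⟨hp1, hp2⟩
      obtain ⟨hf, hg⟩ := hkey _ (hIooV p.1 hp1).1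
      have hf' : (H.symm (p.1, 0)).1 = p.1 := hf
      rw [hf'] at hg
      rw [hp2]
      exact hg
end

section
/- For every c > 0 and every R ∈ ℝ there exists a twice continuously differentiable function θ : [R, +∞) → ℝ such that θ''(x) − c·θ'(x) + F(θ(x)) = 0 for all x ≥ R, θ(R) = θ_hl, θ'(x) > 0 for all x ≥ R, θ(x) ∈ [θ_hl, θ₊) for all x ≥ R, and θ(x) → θ₊ as x → +∞. -/
open Set Filter MeasureTheory intervalIntegral

/-- Monotonicity helper via HasDerivAt on open interval. -/
lemma mono_aux {f g : ℝ → ℝ} {a b : ℝ}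
    (hf : ContinuousOn f (Icc a b))
    (hd : ∀ x ∈ Ioo a b, HasDerivAt f (g x) x)
    (h0 : ∀ x ∈ Ioo a b, 0 ≤ g x) : MonotoneOn f (Icc a b) := by
  apply monotoneOn_of_deriv_nonneg (convex_Icc a b) hf
  · rw [interior_Icc]
    exact fun x hx => (hd x hx).differentiableAt.differentiableWithinAt
  · rw [interior_Icc]
    intro x hx
    rw [(hd x hx).deriv]
    exact h0 x hx

lemma anti_aux {f g : ℝ → ℝ} {a b : ℝ}
    (hf : ContinuousOn f (Icc a b))
    (hd : ∀ x ∈ Ioo a b, HasDerivAt f (g x) x)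
    (h0 : ∀ x ∈ Ioo a b, g x ≤ 0) : AntitoneOn f (Icc a b) := by
  apply antitoneOn_of_deriv_nonpos (convex_Icc a b) hf
  · rw [interior_Icc]
    exact fun x hx => (hd x hx).differentiableAt.differentiableWithinAt
  · rw [interior_Icc]
    intro x hx
    rw [(hd x hx).deriv]
    exact h0 x hx

/-- Existence of the shooting solution with initial value ε > 0, staying above the
barrier `min (k s) m'`. -/
lemma eps_sol {G : ℝ → ℝ} {S c k m' : ℝ} (hS : 0 < S) (hc : 0 < c)
    (hG : Continuous G) (hGnn : ∀ s ∈ Icc 0 S, 0 ≤ G s)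
    (hk : 0 < k) (hm' : 0 < m')
    (hkey : ∀ s ∈ Ioc 0 S, ∀ y : ℝ, 0 < y → y ≤ min (k*s) m' → (c + k + 1) * y ≤ G s)
    {ε : ℝ} (hε : 0 < ε) :
    ∃ w : ℝ → ℝ, Continuous w ∧ w 0 = ε ∧
      (∀ s, w s = w (max 0 (min s S))) ∧
      (∀ s ∈ Icc 0 S, ε - c * s ≤ w s) ∧
      (∀ s ∈ Icc 0 S, min (k*s) m' ≤ w s) ∧
      (∀ s ∈ Ioo 0 S, HasDerivAt w (G s / w s - c) s) := by
  -- the cutoff function ψ and its positive lower bound δ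
  set ψ : ℝ → ℝ := fun s => max (min (k*s) m') (ε - 2*c*s) / 2 with hψdef
  have hψcont : Continuous ψ := by
    apply Continuous.div_const
    exact (((continuous_const.mul continuous_id).min continuous_const).max
      (continuous_const.sub (continuous_const.mul continuous_id)))
  set δ : ℝ := min (ε/4) (min (k*(ε/(4*c))) m' / 2) with hδdef
  have hminpos : 0 < min (k*(ε/(4*c))) m' := lt_min (by positivity) hm'
  have hδpos : 0 < δ := lt_min (by positivity) (by positivity)
  have hδψ : ∀ s : ℝ, δ ≤ ψ s := by
    intro s
    show δ ≤ max (min (k*s) m') (ε - 2*c*s) / 2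
    rcases le_or_gt s (ε/(4*c)) with h | h
    · have h1 : 2*c*s ≤ 2*c*(ε/(4*c)) := by
        have := mul_le_mul_of_nonneg_left h (by positivity : (0:ℝ) ≤ 2*c)
        linarith
      have h2 : 2*c*(ε/(4*c)) = ε/2 := by field_simp; ring
      rw [h2] at h1
      have h3 := le_max_right (min (k*s) m') (ε - 2*c*s)
      have h4 := min_le_left (ε/4) (min (k*(ε/(4*c))) m' / 2)
      rw [← hδdef] at h4
      linarith
    · have h1 : k*(ε/(4*c)) ≤ k*s := mul_le_mul_of_nonneg_left h.le hk.le
      have h2 : min (k*(ε/(4*c))) m' ≤ min (k*s) m' := min_le_min h1 (le_refl _)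
      have h3 := le_max_left (min (k*s) m') (ε - 2*c*s)
      have h4 := min_le_right (ε/4) (min (k*(ε/(4*c))) m' / 2)
      rw [← hδdef] at h4
      linarith
  -- bound on G
  obtain ⟨xM, hxM, hxMmax⟩ := isCompact_Icc.exists_isMaxOn
    (nonempty_Icc.2 hS.le) hG.continuousOn
  set M : ℝ := max (G xM) 1 with hMdef
  have hM1 : 0 < M := lt_of_lt_of_le zero_lt_one (le_max_right _ _)
  have hM : ∀ s ∈ Icc 0 S, G s ≤ M := fun s hs =>
    le_trans (hxMmax hs) (le_max_left _ _)
  -- the modified vector field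
  set g : ℝ → ℝ → ℝ := fun t x => G t / max x (ψ t) - c with hgdef
  have hgles : ∀ t x, t ∈ Icc 0 S → G t / max x (ψ t) ∈ Icc (0:ℝ) (M/δ) := by
    intro t x ht
    constructor
    · exact div_nonneg (hGnn t ht) (le_trans hδpos.le (le_trans (hδψ t) (le_max_right _ _)))
    · exact div_le_div₀ hM1.le (hM t ht) hδpos (le_trans (hδψ t) (le_max_right _ _))
  set Λ : NNReal := Real.toNNReal (M/δ^2) with hΛdef
  set Cb : ℝ := M/δ + c with hCbdef
  set Rr : ℝ := (M/δ + c)*S with hRrdef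
  have hCb0 : 0 ≤ Cb := by rw [hCbdef]; positivity
  have hRr0 : 0 ≤ Rr := by rw [hRrdef]; positivity
  have hpl : IsPicardLindelof g (tmin := 0) (tmax := S) ⟨0, left_mem_Icc.2 hS.le⟩ ε
      (Real.toNNReal Rr) 0 (Real.toNNReal Cb) Λ := by
    constructor
    · intro t ht
      apply LipschitzOnWith.of_dist_le_mul
      intro x _ y _
      set A : ℝ := max x (ψ t) with hA
      set B : ℝ := max y (ψ t) with hB
      have hδA : δ ≤ A := le_trans (hδψ t) (le_max_right _ _)
      have hδB : δ ≤ B := le_trans (hδψ t) (le_max_right _ _)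
      have hA0 : 0 < A := lt_of_lt_of_le hδpos hδA
      have hB0 : 0 < B := lt_of_lt_of_le hδpos hδB
      have hdiff : g t x - g t y = G t * (B - A) / (A * B) := by
        show (G t / A - c) - (G t / B - c) = G t * (B - A) / (A * B)
        field_simp
        ring
      have habs : |B - A| ≤ |y - x| := by
        simpa [hA, hB] using abs_max_sub_max_le_abs y x (ψ t)
      have hGt : |G t| ≤ M := by
        rw [abs_of_nonneg (hGnn t ht)]; exact hM t ht
      calc dist (g t x) (g t y) = |G t * (B - A) / (A * B)| := by
            rw [Real.dist_eq, hdiff]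
        _ = |G t| * |B - A| / (A * B) := by
            rw [abs_div, abs_mul, abs_of_pos (mul_pos hA0 hB0)]
        _ ≤ M * |y - x| / (δ * δ) := by
            apply div_le_div₀ (by positivity) (mul_le_mul hGt habs (abs_nonneg _) hM1.le)
              (by positivity) (mul_le_mul hδA hδB hδpos.le hA0.le)
        _ = M / δ^2 * |y - x| := by ring
        _ = ↑Λ * dist x y := by
            rw [hΛdef, Real.coe_toNNReal _ (by positivity : (0:ℝ) ≤ M/δ^2),
              dist_comm, Real.dist_eq]
    · intro x _
      apply Continuous.continuousOn
      exact (hG.div (continuous_const.max hψcont)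
        (fun t => ne_of_gt (lt_of_lt_of_le hδpos (le_trans (hδψ t) (le_max_right _ _))))).sub
        continuous_const
    · intro t ht x _
      have h1 := hgles t x ht
      rw [Real.norm_eq_abs, Real.coe_toNNReal _ hCb0]
      apply abs_le.2
      constructor
      · have : (0:ℝ) ≤ M/δ := le_trans h1.1 h1.2
        show -(M/δ + c) ≤ G t / max x (ψ t) - c
        linarith [h1.1]
      · show G t / max x (ψ t) - c ≤ M/δ + c
        linarith [h1.2]
    · have e1 : ((Real.toNNReal Cb : NNReal) : ℝ) = Cb := Real.coe_toNNReal _ hCb0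
      have e2 : ((Real.toNNReal Rr : NNReal) : ℝ) = Rr := Real.coe_toNNReal _ hRr0
      simp only [e1, e2, NNReal.coe_zero, sub_zero, sub_self, max_eq_left hS.le]
      rw [hRrdef, hCbdef]
  obtain ⟨f, hf0, hfd⟩ := hpl.exists_eq_forall_mem_Icc_hasDerivWithinAt₀
  have hfc : ContinuousOn f (Icc 0 S) := fun t ht => (hfd t ht).continuousWithinAt
  -- the clamped solution
  set clamp : ℝ → ℝ := fun s => max 0 (min s S) with hclampdef
  have hclampcont : Continuous clamp := continuous_const.max (continuous_id.min continuous_const)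
  have hclampmem : ∀ s, clamp s ∈ Icc 0 S :=
    fun s => ⟨le_max_left _ _, max_le hS.le (min_le_right _ _)⟩
  have hclampid : ∀ s ∈ Icc 0 S, clamp s = s := by
    intro s hs
    show max 0 (min s S) = s
    rw [min_eq_left hs.2, max_eq_right hs.1]
  set w : ℝ → ℝ := fun s => f (clamp s) with hwdef
  have hwcont : Continuous w := hfc.comp_continuous hclampcont hclampmem
  have hweq : ∀ s ∈ Icc 0 S, w s = f s := fun s hs => by
    show f (clamp s) = f s; rw [hclampid s hs]
  have hw0 : w 0 = ε := by
    rw [hweq 0 (left_mem_Icc.2 hS.le)]; exact hf0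
  have hwclamp : ∀ s, w s = w (max 0 (min s S)) := by
    intro s
    show f (clamp s) = f (clamp (clamp s))
    rw [hclampid _ (hclampmem s)]
  -- derivative of w (with the modified field) on the open interval
  have hwd : ∀ t ∈ Ioo 0 S, HasDerivAt w (g t (w t)) t := by
    intro t ht
    have h1 : HasDerivAt f (g t (f t)) t :=
      (hfd t (Ioo_subset_Icc_self ht)).hasDerivAt (Icc_mem_nhds ht.1 ht.2)
    have h2 : w =ᶠ[nhds t] f :=
      eventuallyEq_of_mem (isOpen_Ioo.mem_nhds ht)
        (fun s hs => hweq s (Ioo_subset_Icc_self hs))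
    have h3 := h1.congr_of_eventuallyEq h2
    rwa [hweq t (Ioo_subset_Icc_self ht)] at *
  -- (P1) : w s ≥ ε - c s
  have hP1 : ∀ s ∈ Icc 0 S, ε - c * s ≤ w s := by
    intro s hs
    have hmono : MonotoneOn (fun s => w s + c*s) (Icc 0 S) := by
      apply mono_aux (f := fun s => w s + c*s) (g := fun t => g t (w t) + c)
        (hwcont.add (continuous_const.mul continuous_id)).continuousOn
      · intro x hx
        have h2 : HasDerivAt (fun y : ℝ => c * y) c x := by
          simpa using (hasDerivAt_id x).const_mul c
        exact (hwd x hx).add h2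
      · intro x hx
        have := (hgles x (w x) (Ioo_subset_Icc_self hx)).1
        show 0 ≤ G x / max (w x) (ψ x) - c + c
        linarith
    have := hmono (left_mem_Icc.2 hS.le) hs hs.1
    simp only [mul_zero, add_zero, hw0] at this
    linarith
  -- (P2) : w s ≥ min (k s) m'
  have hP2 : ∀ s ∈ Icc 0 S, min (k*s) m' ≤ w s := by
    by_contra hcon
    push_neg at hcon
    obtain ⟨s', hs', hlt⟩ := hcon
    set A : Set ℝ := Icc 0 s' ∩ {s | min (k*s) m' ≤ w s} with hAdef
    have h0A : (0:ℝ) ∈ A := by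
      constructor
      · exact ⟨le_refl 0, hs'.1⟩
      · show min (k*0) m' ≤ w 0
        rw [hw0, mul_zero, min_eq_left hm'.le]
        exact hε.le
    have hAcl : IsClosed A := isClosed_Icc.inter
      (isClosed_le (((continuous_const.mul continuous_id).min continuous_const)) hwcont)
    have hAcomp : IsCompact A := isCompact_Icc.inter_right
      (isClosed_le (((continuous_const.mul continuous_id).min continuous_const)) hwcont)
    set s₀ : ℝ := sSup A with hs₀def
    have hs₀A : s₀ ∈ A := hAcomp.sSup_mem ⟨0, h0A⟩
    have hs₀I : s₀ ∈ Icc 0 s' := hs₀A.1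
    have hws₀ : min (k*s₀) m' ≤ w s₀ := hs₀A.2
    have hs₀lt : s₀ < s' := by
      rcases lt_or_eq_of_le hs₀I.2 with h | h
      · exact h
      · exfalso; rw [h] at hws₀; linarith
    have hAfter : ∀ t ∈ Ioc s₀ s', w t < min (k*t) m' := by
      intro t ht
      by_contra h
      push_neg at h
      have htA : t ∈ A := ⟨⟨le_trans hs₀I.1 ht.1.le, ht.2⟩, h⟩
      have := le_csSup hAcomp.bddAbove htA
      rw [← hs₀def] at this
      linarith [ht.1]
    have hmono : MonotoneOn (fun t => w t - (k+1)*t) (Icc s₀ s') := by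
      apply mono_aux (g := fun t => g t (w t) - (k+1))
        (hwcont.sub (continuous_const.mul continuous_id)).continuousOn
      · intro t ht
        have htIoo : t ∈ Ioo 0 S :=
          ⟨lt_of_le_of_lt hs₀I.1 ht.1, lt_of_lt_of_le ht.2 hs'.2⟩
        have h2 : HasDerivAt (fun y : ℝ => (k+1) * y) (k+1) t := by
          simpa using (hasDerivAt_id t).const_mul (k+1)
        exact (hwd t htIoo).sub h2
      · intro t ht
        have htIoo : t ∈ Ioo 0 S :=
          ⟨lt_of_le_of_lt hs₀I.1 ht.1, lt_of_lt_of_le ht.2 hs'.2⟩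
        have hwt : w t < min (k*t) m' := hAfter t ⟨ht.1, ht.2.le⟩
        set y : ℝ := max (w t) (ψ t) with hydef
        have hy0 : 0 < y := lt_of_lt_of_le hδpos (le_trans (hδψ t) (le_max_right _ _))
        have hmin0 : 0 ≤ min (k*t) m' :=
          le_min (mul_nonneg hk.le htIoo.1.le) hm'.le
        have hψle : ψ t ≤ min (k*t) m' := by
          rcases le_or_gt (ε - 2*c*t) (min (k*t) m') with hcase | hcase
          · show max (min (k*t) m') (ε - 2*c*t) / 2 ≤ min (k*t) m'
            have := max_le (le_refl (min (k*t) m')) hcase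
            linarith [hmin0]
          · exfalso
            have hp1 := hP1 t (Ioo_subset_Icc_self htIoo)
            have : ε - c*t ≥ ε - 2*c*t := by nlinarith [htIoo.1.le]
            linarith
        have hyle : y ≤ min (k*t) m' := max_le hwt.le hψle
        have hkeyt := hkey t ⟨htIoo.1, htIoo.2.le⟩ y hy0 hyle
        have hdiv : c + k + 1 ≤ G t / y := (le_div_iff₀ hy0).2 (by linarith)
        show 0 ≤ G t / max (w t) (ψ t) - c - (k+1)
        rw [← hydef]
        linarith
    have h1 := hmono (left_mem_Icc.2 hs₀lt.le) (right_mem_Icc.2 hs₀lt.le) hs₀lt.le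
    have hd0 : 0 ≤ k*(s'-s₀) := by nlinarith
    have h2 : min (k*s') m' ≤ min (k*s₀) m' + k*(s'-s₀) := by
      have hklin : k*s' = k*s₀ + k*(s'-s₀) := by ring
      rw [hklin]
      calc min (k*s₀ + k*(s'-s₀)) (m') ≤ min (k*s₀ + k*(s'-s₀)) (m' + k*(s'-s₀)) :=
            min_le_min (le_refl _) (by linarith)
        _ = min (k*s₀) m' + k*(s'-s₀) := min_add_add_right _ _ _
    have h3 : w s₀ - (k+1)*s₀ ≤ w s' - (k+1)*s' := h1
    linarith [hws₀, hlt, hs₀lt]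
  -- true ODE
  refine ⟨w, hwcont, hw0, hwclamp, hP1, hP2, ?_⟩
  intro t ht
  have hge : ψ t ≤ w t := by
    have h1 : min (k*t) m' / 2 ≤ w t := by
      have := hP2 t (Ioo_subset_Icc_self ht)
      have hmin0 : 0 ≤ min (k*t) m' := le_min (mul_nonneg hk.le ht.1.le) hm'.le
      linarith
    have h2 : (ε - 2*c*t) / 2 ≤ w t := by
      have := hP1 t (Ioo_subset_Icc_self ht)
      have : ε - c*t ≥ (ε - 2*c*t)/2 := by nlinarith [ht.1.le, hε.le]
      linarith [hP1 t (Ioo_subset_Icc_self ht)]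
    show max (min (k*t) m') (ε - 2*c*t) / 2 ≤ w t
    rcases max_cases (min (k*t) m') (ε - 2*c*t) with ⟨heq, _⟩ | ⟨heq, _⟩ <;> rw [heq]
    · exact h1
    · exact h2
  have := hwd t ht
  have hmax : max (w t) (ψ t) = w t := max_eq_left hge
  show HasDerivAt w (G t / w t - c) t
  rw [← hmax]
  exact this

/-- Solutions with smaller initial values stay below: no-crossing. -/
lemma compare {G : ℝ → ℝ} {S c k m' : ℝ}
    (hGnn : ∀ s ∈ Icc 0 S, 0 ≤ G s) (hk : 0 < k) (hm' : 0 < m')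
    {w₁ w₂ : ℝ → ℝ} {ε₁ ε₂ : ℝ} (hε : ε₁ < ε₂)
    (hc₁ : Continuous w₁) (hc₂ : Continuous w₂)
    (h0₁ : w₁ 0 = ε₁) (h0₂ : w₂ 0 = ε₂)
    (hb₁ : ∀ s ∈ Icc 0 S, min (k*s) m' ≤ w₁ s)
    (hb₂ : ∀ s ∈ Icc 0 S, min (k*s) m' ≤ w₂ s)
    (hd₁ : ∀ s ∈ Ioo 0 S, HasDerivAt w₁ (G s / w₁ s - c) s)
    (hd₂ : ∀ s ∈ Ioo 0 S, HasDerivAt w₂ (G s / w₂ s - c) s) :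
    ∀ s ∈ Icc 0 S, w₁ s ≤ w₂ s := by
  by_contra hcon
  push_neg at hcon
  obtain ⟨s', hs', hlt⟩ := hcon
  set A : Set ℝ := Icc 0 s' ∩ {s | w₁ s ≤ w₂ s} with hAdef
  have h0A : (0:ℝ) ∈ A := ⟨⟨le_refl 0, hs'.1⟩, by show w₁ 0 ≤ w₂ 0; rw [h0₁, h0₂]; exact hε.le⟩
  have hAcomp : IsCompact A := isCompact_Icc.inter_right (isClosed_le hc₁ hc₂)
  set s₀ : ℝ := sSup A with hs₀def
  have hs₀A : s₀ ∈ A := hAcomp.sSup_mem ⟨0, h0A⟩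
  have hs₀I : s₀ ∈ Icc 0 s' := hs₀A.1
  have hs₀lt : s₀ < s' := by
    rcases lt_or_eq_of_le hs₀I.2 with h | h
    · exact h
    · exfalso; have := hs₀A.2; rw [h] at this; exact absurd this (not_le.2 hlt)
  have hAfter : ∀ t ∈ Ioc s₀ s', w₂ t < w₁ t := by
    intro t ht
    by_contra h
    push_neg at h
    have htA : t ∈ A := ⟨⟨le_trans hs₀I.1 ht.1.le, ht.2⟩, h⟩
    have := le_csSup hAcomp.bddAbove htA
    rw [← hs₀def] at this
    linarith [ht.1]
  have heq : w₁ s₀ = w₂ s₀ := by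
    refine le_antisymm hs₀A.2 ?_
    have ht : Tendsto (fun t => w₂ t - w₁ t) (nhdsWithin s₀ (Ioi s₀))
        (nhds (w₂ s₀ - w₁ s₀)) :=
      ((hc₂.sub hc₁).tendsto s₀).mono_left nhdsWithin_le_nhds
    have hev : ∀ᶠ t in nhdsWithin s₀ (Ioi s₀), w₂ t - w₁ t ≤ 0 := by
      filter_upwards [Ioc_mem_nhdsGT hs₀lt] with t ht
      linarith [hAfter t ht]
    have := le_of_tendsto ht hev
    linarith
  have hs₀pos : 0 < s₀ := by
    rcases lt_or_eq_of_le hs₀I.1 with h | h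
    · exact h
    · exfalso; rw [← h] at heq; rw [h0₁, h0₂] at heq; linarith
  -- w₁ - w₂ is antitone on [s₀, s']
  have hanti : AntitoneOn (fun t => w₁ t - w₂ t) (Icc s₀ s') := by
    apply anti_aux (g := fun t => (G t / w₁ t - c) - (G t / w₂ t - c))
      (hc₁.sub hc₂).continuousOn
    · intro t ht
      have htIoo : t ∈ Ioo 0 S := ⟨lt_trans hs₀pos ht.1, lt_of_lt_of_le ht.2 hs'.2⟩
      exact (hd₁ t htIoo).sub (hd₂ t htIoo)
    · intro t ht
      have htIcc : t ∈ Icc 0 S :=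
        ⟨le_trans hs₀pos.le ht.1.le, le_trans ht.2.le hs'.2⟩
      have htpos : 0 < t := lt_trans hs₀pos ht.1
      have hminpos : 0 < min (k*t) m' := lt_min (mul_pos hk htpos) hm'
      have hw₂pos : 0 < w₂ t := lt_of_lt_of_le hminpos (hb₂ t htIcc)
      have hw₁pos : 0 < w₁ t := lt_of_lt_of_le hminpos (hb₁ t htIcc)
      have hle : w₂ t ≤ w₁ t := (hAfter t ⟨ht.1, ht.2.le⟩).le
      have := div_le_div_of_nonneg_left (hGnn t htIcc) hw₂pos hle
      linarith
  have h1 := hanti (left_mem_Icc.2 hs₀lt.le) (right_mem_Icc.2 hs₀lt.le) hs₀lt.le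
  simp only at h1
  rw [heq] at h1
  simp only [sub_self] at h1
  linarith

/-- The singular solution `w` with `w 0 = 0`, obtained as decreasing limit of the
shooting solutions. -/
lemma core {G : ℝ → ℝ} {S c k m' s₁ L : ℝ} (hS : 0 < S) (hc : 0 < c)
    (hG : Continuous G) (hGnn : ∀ s ∈ Icc 0 S, 0 ≤ G s)
    (hk : 0 < k) (hm' : 0 < m')
    (hkey : ∀ s ∈ Ioc 0 S, ∀ y : ℝ, 0 < y → y ≤ min (k*s) m' → (c + k + 1) * y ≤ G s)
    (hs₁ : 0 < s₁) (hs₁S : s₁ ≤ S) (hL : 0 < L)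
    (hGlin : ∀ s ∈ Icc 0 s₁, G s ≤ L * s) :
    ∃ w : ℝ → ℝ, Continuous w ∧ w 0 = 0 ∧
      (∀ s ∈ Ioc 0 S, min (k*s) m' ≤ w s) ∧
      (∀ s ∈ Ioo 0 S, HasDerivAt w (G s / w s - c) s) ∧
      (∀ s ∈ Icc 0 (min s₁ (m'/k)), w s ≤ (L/k + c) * s) := by
  -- the family of shooting solutions
  have hfam : ∀ n : ℕ, (0:ℝ) < 1/((n:ℝ)+1) := fun n => by positivity
  choose wseq hwc hw0 hwclamp hwP1 hwP2 hwd using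
    fun n : ℕ => eps_sol hS hc hG hGnn hk hm' hkey (hfam n)
  -- basic facts
  have hclampmem : ∀ s : ℝ, max 0 (min s S) ∈ Icc 0 S :=
    fun s => ⟨le_max_left _ _, max_le hS.le (min_le_right _ _)⟩
  have hminnn : ∀ s ∈ Icc (0:ℝ) S, 0 ≤ min (k*s) m' :=
    fun s hs => le_min (mul_nonneg hk.le hs.1) hm'.le
  have hnn : ∀ n s, 0 ≤ wseq n s := by
    intro n s
    rw [hwclamp n s]
    exact le_trans (hminnn _ (hclampmem s)) (hwP2 n _ (hclampmem s))
  -- monotonicity in n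
  have hdecr : ∀ n : ℕ, ∀ s, wseq (n+1) s ≤ wseq n s := by
    intro n s
    have hord : 1/((n:ℝ)+1+1) < 1/((n:ℝ)+1) := by
      apply one_div_lt_one_div_of_lt (by positivity)
      linarith
    have := compare hGnn hk hm' (by exact_mod_cast hord) (hwc (n+1)) (hwc n)
      (by rw [hw0 (n+1)]; push_cast; ring) (hw0 n) (hwP2 (n+1)) (hwP2 n)
      (hwd (n+1)) (hwd n)
    rw [hwclamp (n+1) s, hwclamp n s]
    exact this _ (hclampmem s)
  have hanti : ∀ s, Antitone fun n => wseq n s :=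
    fun s => antitone_nat_of_succ_le (fun n => hdecr n s)
  have hbdd : ∀ s, BddBelow (range fun n => wseq n s) :=
    fun s => ⟨0, fun x ⟨n, hn⟩ => hn ▸ hnn n s⟩
  -- the limit function
  set w : ℝ → ℝ := fun s => ⨅ n, wseq n s with hwdef
  have hlim : ∀ s, Tendsto (fun n => wseq n s) atTop (nhds (w s)) :=
    fun s => tendsto_atTop_ciInf (hanti s) (hbdd s)
  have hwnn : ∀ s, 0 ≤ w s := fun s => le_ciInf (fun n => hnn n s)
  have hwlb : ∀ s ∈ Icc 0 S, min (k*s) m' ≤ w s :=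
    fun s hs => le_ciInf (fun n => hwP2 n s hs)
  have hwposIoc : ∀ s ∈ Ioc 0 S, 0 < w s := fun s hs =>
    lt_of_lt_of_le (lt_min (mul_pos hk hs.1) hm') (hwlb s ⟨hs.1.le, hs.2⟩)
  have hw0' : w 0 = 0 := by
    refine tendsto_nhds_unique (hlim 0) ?_
    have : (fun n : ℕ => wseq n 0) = fun n : ℕ => 1/((n:ℝ)+1) := funext fun n => hw0 n
    rw [this]
    exact tendsto_one_div_add_atTop_nhds_zero_nat
  have hwclamp' : ∀ s, w s = w (max 0 (min s S)) := by
    intro s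
    exact iInf_congr (fun n => hwclamp n s)
  -- measurability of the limit
  have hwm : Measurable w :=
    Measurable.iInf (fun n => (hwc n).measurable)
  -- positivity of the approximations
  have hwpos_n : ∀ n, ∀ σ ∈ Icc (0:ℝ) S, 0 < wseq n σ := by
    intro n σ hσ
    rcases eq_or_lt_of_le hσ.1 with h | h
    · rw [← h, hw0 n]; exact hfam n
    · exact lt_of_lt_of_le (lt_min (mul_pos hk h) hm') (hwP2 n σ hσ)
  -- ratio bounds
  set s₂ : ℝ := min s₁ (m'/k) with hs₂def
  have hs₂pos : 0 < s₂ := lt_min hs₁ (by positivity)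
  have hs₂S : s₂ ≤ S := le_trans (min_le_left _ _) hs₁S
  obtain ⟨xM, hxM, hxMmax⟩ := isCompact_Icc.exists_isMaxOn
    (nonempty_Icc.2 hS.le) hG.continuousOn
  set M : ℝ := max (G xM) 1 with hMdef
  have hM1 : 0 < M := lt_of_lt_of_le zero_lt_one (le_max_right _ _)
  have hM : ∀ s ∈ Icc 0 S, G s ≤ M := fun s hs =>
    le_trans (hxMmax hs) (le_max_left _ _)
  set β : ℝ := min (k*s₂) m' with hβdef
  have hβpos : 0 < β := lt_min (mul_pos hk hs₂pos) hm'
  set D : ℝ := max (L/k) (M/β) with hDdef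
  have hD0 : 0 ≤ D := le_trans (by positivity) (le_max_left (L/k) (M/β))
  have hratio1 : ∀ σ, σ ∈ Ioc 0 S → σ ≤ s₂ → ∀ y : ℝ,
      min (k*σ) m' ≤ y → G σ / y ≤ L/k := by
    intro σ hσ hσ2 y hy
    have hkm : k * (m'/k) = m' := by field_simp
    have hkσ : k*σ ≤ m' := by
      have := mul_le_mul_of_nonneg_left (le_trans hσ2 (min_le_right s₁ (m'/k))) hk.le
      rwa [hkm] at this
    rw [min_eq_left hkσ] at hy
    have hypos : 0 < y := lt_of_lt_of_le (mul_pos hk hσ.1) hy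
    have hGσ : G σ ≤ L * σ := hGlin σ ⟨hσ.1.le, le_trans hσ2 (min_le_left _ _)⟩
    rw [div_le_div_iff₀ hypos hk]
    nlinarith
  have hratio2 : ∀ σ ∈ Ioc 0 S, ∀ y : ℝ, min (k*σ) m' ≤ y → G σ / y ≤ D := by
    intro σ hσ y hy
    rcases le_or_gt σ s₂ with h | h
    · exact le_trans (hratio1 σ hσ h y hy) (le_max_left _ _)
    · have hβy : β ≤ y := le_trans (min_le_min
        (mul_le_mul_of_nonneg_left h.le hk.le) (le_refl m')) hy
      exact le_trans (div_le_div₀ hM1.le (hM σ ⟨hσ.1.le, hσ.2⟩) hβpos hβy)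
        (le_max_right _ _)
  have habsτ : ∀ v : ℝ → ℝ, (∀ σ ∈ Icc (0:ℝ) S, min (k*σ) m' ≤ v σ) →
      ∀ σ ∈ Ioc (0:ℝ) S, |G σ / v σ - c| ≤ D + c := by
    intro v hv σ hσ
    have h1 : 0 < v σ := lt_of_lt_of_le (lt_min (mul_pos hk hσ.1) hm')
      (hv σ ⟨hσ.1.le, hσ.2⟩)
    have h2 : 0 ≤ G σ / v σ := div_nonneg (hGnn σ ⟨hσ.1.le, hσ.2⟩) h1.le
    have h3 : G σ / v σ ≤ D := hratio2 σ hσ _ (hv σ ⟨hσ.1.le, hσ.2⟩)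
    rw [abs_le]
    constructor <;> linarith
  -- integral identity for the approximations
  set τ : ℝ → ℝ := fun σ => G σ / w σ - c with hτdef
  have hτm : Measurable τ := (hG.measurable.div hwm).sub measurable_const
  have hIn : ∀ n : ℕ, ∀ s ∈ Icc 0 S,
      ∫ σ in (0:ℝ)..s, (G σ / wseq n σ - c) = wseq n s - 1/((n:ℝ)+1) := by
    intro n s hs
    have h := integral_eq_sub_of_hasDeriv_right_of_le hs.1
      (f := wseq n) (f' := fun σ => G σ / wseq n σ - c)
      ((hwc n).continuousOn)
      (fun x hx => ((hwd n x ⟨hx.1, lt_of_lt_of_le hx.2 hs.2⟩).hasDerivWithinAt))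
      (ContinuousOn.intervalIntegrable (by
        rw [uIcc_of_le hs.1]
        exact ((hG.continuousOn).div ((hwc n).continuousOn)
          (fun σ hσ => ne_of_gt (hwpos_n n σ ⟨hσ.1, le_trans hσ.2 hs.2⟩))).sub
          continuousOn_const))
    rw [h, hw0 n]
  -- integral identity for the limit
  have hIw : ∀ s ∈ Icc 0 S, w s = ∫ σ in (0:ℝ)..s, τ σ := by
    intro s hs
    have hsub : Ioc (0:ℝ) s ⊆ Ioc 0 S := Ioc_subset_Ioc (le_refl _) hs.2
    have h1 : Tendsto (fun n => ∫ σ in (0:ℝ)..s, (G σ / wseq n σ - c)) atTop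
        (nhds (∫ σ in (0:ℝ)..s, τ σ)) := by
      apply intervalIntegral.tendsto_integral_filter_of_dominated_convergence (fun _ => D + c)
      · exact Eventually.of_forall (fun n =>
          (((hG.measurable.div (hwc n).measurable).sub
            measurable_const).aestronglyMeasurable))
      · apply Eventually.of_forall
        intro n
        apply ae_of_all
        intro σ hσ
        rw [uIoc_of_le hs.1] at hσ
        exact habsτ (wseq n) (hwP2 n) σ (hsub hσ)
      · exact intervalIntegrable_const
      · apply ae_of_all
        intro σ hσ
        rw [uIoc_of_le hs.1] at hσ
        exact (tendsto_const_nhds.div (hlim σ)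
          (ne_of_gt (hwposIoc σ (hsub hσ)))).sub tendsto_const_nhds
    have h2 : Tendsto (fun n => ∫ σ in (0:ℝ)..s, (G σ / wseq n σ - c)) atTop
        (nhds (w s)) := by
      apply Tendsto.congr (fun n => (hIn n s hs).symm)
      simpa using (hlim s).sub tendsto_one_div_add_atTop_nhds_zero_nat
    exact tendsto_nhds_unique h2 h1
  -- integrability of τ
  have hτint : ∀ u ∈ Icc (0:ℝ) S, IntervalIntegrable τ volume 0 u := by
    intro u hu
    rw [intervalIntegrable_iff_integrableOn_Ioc_of_le hu.1]
    apply Integrable.mono' (g := fun _ => D + c)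
      (integrableOn_const measure_Ioc_lt_top.ne)
      (hτm.aestronglyMeasurable.restrict)
    rw [ae_restrict_iff' measurableSet_Ioc]
    apply ae_of_all
    intro σ hσ
    exact habsτ w hwlb σ (Ioc_subset_Ioc (le_refl _) hu.2 hσ)
  -- Lipschitz continuity of w
  have hwdist : ∀ x ∈ Icc (0:ℝ) S, ∀ y ∈ Icc (0:ℝ) S, |w x - w y| ≤ (D+c)*|x-y| := by
    intro x hx y hy
    have hkey2 : w x - w y = ∫ σ in y..x, τ σ := by
      rw [hIw x hx, hIw y hy]
      exact integral_interval_sub_left (hτint x hx) (hτint y hy)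
    have hb : ∀ σ ∈ Set.uIoc y x, ‖τ σ‖ ≤ D + c := by
      intro σ hσ
      have hσ' : σ ∈ Ioc (0:ℝ) S := by
        rcases le_total y x with h | h
        · rw [uIoc_of_le h] at hσ
          exact ⟨lt_of_le_of_lt hy.1 hσ.1, le_trans hσ.2 hx.2⟩
        · rw [uIoc_of_ge h] at hσ
          exact ⟨lt_of_le_of_lt hx.1 hσ.1, le_trans hσ.2 hy.2⟩
      exact habsτ w hwlb σ hσ'
    have h := intervalIntegral.norm_integral_le_of_norm_le_const hb
    rw [Real.norm_eq_abs] at h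
    rw [hkey2]
    exact h
  have hwcontOn : ContinuousOn w (Icc 0 S) := by
    apply LipschitzOnWith.continuousOn (K := Real.toNNReal (D+c))
    apply LipschitzOnWith.of_dist_le_mul
    intro x hx y hy
    rw [Real.dist_eq, Real.dist_eq, Real.coe_toNNReal _ (by positivity : (0:ℝ) ≤ D + c)]
    exact hwdist x hx y hy
  have hwcont : Continuous w := by
    have h1 : Continuous fun s => w (max 0 (min s S)) :=
      hwcontOn.comp_continuous
        (continuous_const.max (continuous_id.min continuous_const)) hclampmem
    have h2 : (fun s => w (max 0 (min s S))) = w := funext (fun s => (hwclamp' s).symm)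
    rwa [h2] at h1
  -- derivative of w
  have hderivw : ∀ s ∈ Ioo (0:ℝ) S, HasDerivAt w (G s / w s - c) s := by
    intro s hs
    have hca : ContinuousAt τ s :=
      (hG.continuousAt.div hwcont.continuousAt
        (ne_of_gt (hwposIoc s ⟨hs.1, hs.2.le⟩))).sub continuousAt_const
    have h0 : HasDerivAt (fun u => ∫ σ in (0:ℝ)..u, τ σ) (τ s) s :=
      integral_hasDerivAt_right (hτint s ⟨hs.1.le, hs.2.le⟩)
        ⟨univ, univ_mem, hτm.aestronglyMeasurable.restrict⟩ hca
    have hev : w =ᶠ[nhds s] fun u => ∫ σ in (0:ℝ)..u, τ σ :=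
      eventuallyEq_of_mem (isOpen_Ioo.mem_nhds hs)
        (fun u hu => hIw u ⟨hu.1.le, hu.2.le⟩)
    exact h0.congr_of_eventuallyEq hev
  -- linear upper bound near 0
  have hlinear : ∀ s ∈ Icc (0:ℝ) s₂, w s ≤ (L/k + c) * s := by
    intro s hs
    have hsS : s ≤ S := le_trans hs.2 hs₂S
    rw [hIw s ⟨hs.1, hsS⟩]
    have hb : ∀ σ ∈ Set.uIoc (0:ℝ) s, ‖τ σ‖ ≤ L/k + c := by
      intro σ hσ
      rw [uIoc_of_le hs.1] at hσ
      have hσ' : σ ∈ Ioc (0:ℝ) S := ⟨hσ.1, le_trans hσ.2 hsS⟩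
      have h1 : 0 < w σ := hwposIoc σ hσ'
      have h2 : 0 ≤ G σ / w σ := div_nonneg (hGnn σ ⟨hσ.1.le, hσ'.2⟩) h1.le
      have h3 : G σ / w σ ≤ L/k := hratio1 σ hσ' (le_trans hσ.2 hs.2) _
        (hwlb σ ⟨hσ.1.le, hσ'.2⟩)
      rw [Real.norm_eq_abs, abs_le]
      constructor <;> linarith
    have := intervalIntegral.norm_integral_le_of_norm_le_const hb
    rw [Real.norm_eq_abs, sub_zero, abs_of_nonneg hs.1] at this
    exact le_trans (le_abs_self _) this
  exact ⟨w, hwcont, hw0', fun s hs => hwlb s ⟨hs.1.le, hs.2⟩, hderivw, hlinear⟩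

/-- Stage 1: the phase-plane solution `v` on `(a,b)`, positive on `[a,b)`, vanishing at `b`
with a linear bound near `b`, satisfying `v' = c - F/v`. -/
lemma stage1 {F : ℝ → ℝ} {a b c : ℝ} (hab : a < b) (hc : 0 < c)
    (hFc : ContinuousOn F (Icc a b))
    (hFpos : ∀ u ∈ Ico a b, 0 < F u) (hFb : F b = 0)
    {m s₁ L : ℝ} (hm : 0 < m) (hs₁ : 0 < s₁) (hs₁ab : s₁ ≤ b - a) (hL : 0 < L)
    (hlow : ∀ u, b - s₁ ≤ u → u ≤ b → m * (b - u) ≤ F u)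
    (hup : ∀ u, b - s₁ ≤ u → u ≤ b → F u ≤ L * (b - u)) :
    ∃ v : ℝ → ℝ, Continuous v ∧ (∀ u ∈ Ico a b, 0 < v u) ∧
      (∀ u ∈ Ioo a b, HasDerivAt v (c - F u / v u) u) ∧
      (∃ K s₂, 0 < K ∧ 0 < s₂ ∧ s₂ ≤ b - a ∧
        ∀ u, b - s₂ ≤ u → u ≤ b → v u ≤ K * (b - u)) := by
  set S : ℝ := b - a with hSdef
  have hS : 0 < S := by simp [hSdef]; linarith
  have hclampmem : ∀ s : ℝ, max 0 (min s S) ∈ Icc 0 S :=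
    fun s => ⟨le_max_left _ _, max_le hS.le (min_le_right _ _)⟩
  have hclampid : ∀ s ∈ Icc (0:ℝ) S, max 0 (min s S) = s := by
    intro s hs
    rw [min_eq_left hs.2, max_eq_right hs.1]
  set G : ℝ → ℝ := fun s => F (b - max 0 (min s S)) with hGdef
  have hbmem : ∀ s : ℝ, b - max 0 (min s S) ∈ Icc a b := by
    intro s
    have := hclampmem s
    constructor
    · simp only [hSdef] at this ⊢; linarith [this.2]
    · linarith [this.1]
  have hG : Continuous G := by
    apply hFc.comp_continuous _ hbmem
    exact continuous_const.sub (continuous_const.max (continuous_id.min continuous_const))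
  have hGs : ∀ s ∈ Icc (0:ℝ) S, G s = F (b - s) := by
    intro s hs
    simp only [hGdef, hclampid s hs]
  have hFnn : ∀ u ∈ Icc a b, 0 ≤ F u := by
    intro u hu
    rcases eq_or_lt_of_le hu.2 with h | h
    · rw [h, hFb]
    · exact (hFpos u ⟨hu.1, h⟩).le
  have hGnn : ∀ s ∈ Icc (0:ℝ) S, 0 ≤ G s := by
    intro s hs
    rw [hGs s hs]
    apply hFnn
    constructor
    · simp only [hSdef] at hs ⊢; linarith [hs.2]
    · linarith [hs.1]
  have hGlin : ∀ s ∈ Icc (0:ℝ) s₁, G s ≤ L * s := by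
    intro s hs
    have hsS : s ∈ Icc (0:ℝ) S := ⟨hs.1, le_trans hs.2 hs₁ab⟩
    rw [hGs s hsS]
    have := hup (b - s) (by linarith [hs.2]) (by linarith [hs.1])
    simpa using this
  -- the minimum of F away from b
  have hne : a ≤ b - s₁ := by linarith
  obtain ⟨xμ, hxμ, hμmin⟩ := isCompact_Icc.exists_isMinOn
    (nonempty_Icc.2 hne) (hFc.mono (Icc_subset_Icc (le_refl a) (by linarith)))
  set μ : ℝ := F xμ with hμdef
  have hμpos : 0 < μ := hFpos xμ ⟨hxμ.1, by linarith [hxμ.2]⟩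
  -- constants
  set k : ℝ := min 1 (m/(c+2)) with hkdef
  have hk : 0 < k := lt_min zero_lt_one (by positivity)
  have hk1 : k ≤ 1 := min_le_left _ _
  have hkm : k * (c+2) ≤ m := by
    have h1 : k ≤ m/(c+2) := min_le_right _ _
    rw [← le_div_iff₀ (by positivity)]
    exact h1
  set m' : ℝ := μ/(c+2) with hm'def
  have hm' : 0 < m' := by positivity
  have hkey : ∀ s ∈ Ioc (0:ℝ) S, ∀ y : ℝ, 0 < y → y ≤ min (k*s) m' →
      (c + k + 1) * y ≤ G s := by
    intro s hs y hy0 hyle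
    rw [hGs s ⟨hs.1.le, hs.2⟩]
    rcases le_or_gt s s₁ with h | h
    · have hFlow : m * s ≤ F (b - s) := by
        have := hlow (b - s) (by linarith) (by linarith [hs.1.le])
        simpa using this
      have h1 : y ≤ k * s := le_trans hyle (min_le_left _ _)
      nlinarith [hs.1.le, hy0.le]
    · have hFge : μ ≤ F (b - s) := by
        apply hμmin
        constructor
        · simp only [hSdef] at hs; linarith [hs.2]
        · linarith
      have h1 : y ≤ m' := le_trans hyle (min_le_right _ _)
      have h2 : (c + k + 1) * y ≤ (c + 2) * m' := by nlinarith
      have h3 : (c+2) * m' = μ := by rw [hm'def]; field_simp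
      linarith
  obtain ⟨w, hwc, hw0, hwlb, hwd, hwlin⟩ :=
    core hS hc hG hGnn hk hm' hkey hs₁ hs₁ab hL hGlin
  set v : ℝ → ℝ := fun u => w (b - u) with hvdef
  have hvc : Continuous v := hwc.comp (continuous_const.sub continuous_id)
  have hvpos : ∀ u ∈ Ico a b, 0 < v u := by
    intro u hu
    have h1 : b - u ∈ Ioc (0:ℝ) S := ⟨by linarith [hu.2], by simp only [hSdef]; linarith [hu.1]⟩
    exact lt_of_lt_of_le (lt_min (mul_pos hk h1.1) hm') (hwlb _ h1)
  have hvd : ∀ u ∈ Ioo a b, HasDerivAt v (c - F u / v u) u := by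
    intro u hu
    have h1 : b - u ∈ Ioo (0:ℝ) S := ⟨by linarith [hu.2], by simp only [hSdef]; linarith [hu.1]⟩
    have h2 := hwd _ h1
    have h3 : HasDerivAt (fun x : ℝ => b - x) (-1) u := by
      simpa using (hasDerivAt_id u).const_sub b
    have h4 := HasDerivAt.comp u h2 h3
    have h5 : G (b - u) = F u := by
      rw [hGs _ ⟨h1.1.le, h1.2.le⟩]; ring_nf
    refine h4.congr_deriv (Eq.symm ?_)
    show c - F u / v u = (G (b-u) / w (b-u) - c) * (-1)
    rw [h5]
    show c - F u / v u = (F u / v u - c) * (-1)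
    ring
  refine ⟨v, hvc, hvpos, hvd, L/k + c, min s₁ (m'/k), by positivity,
    lt_min hs₁ (by positivity), le_trans (min_le_left _ _) hs₁ab, ?_⟩
  intro u h1 h2
  have h3 : b - u ∈ Icc (0:ℝ) (min s₁ (m'/k)) := ⟨by linarith, by linarith⟩
  exact hwlin _ h3

/-- Stage 2: from the phase plane solution `v` construct the traveling wave profile. -/
lemma stage2 {F v : ℝ → ℝ} {a' θhl θp c R K s₂ : ℝ}
    (ha' : a' < θhl) (hh : θhl < θp) (hc : 0 < c)
    (hFW : ContinuousOn F (Icc a' θp))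
    (hvc : Continuous v)
    (hvpos : ∀ u ∈ Ico a' θp, 0 < v u)
    (hvd : ∀ u ∈ Ioo a' θp, HasDerivAt v (c - F u / v u) u)
    (hK : 0 < K) (hs₂ : 0 < s₂)
    (hvlin : ∀ u, θp - s₂ ≤ u → u ≤ θp → v u ≤ K * (θp - u)) :
    ∃ θ : ℝ → ℝ,
      ContDiffOn ℝ 2 θ (Ici R) ∧
      (∀ x ∈ Ici R, derivWithin (derivWithin θ (Ici R)) (Ici R) x
          - c * derivWithin θ (Ici R) x + F (θ x) = 0) ∧
      θ R = θhl ∧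
      (∀ x ∈ Ici R, 0 < derivWithin θ (Ici R) x) ∧
      (∀ x ∈ Ici R, θ x ∈ Ico θhl θp) ∧
      Tendsto θ atTop (nhds θp) := by
  classical
  have hvpos' : ∀ u ∈ Ioo a' θp, 0 < v u := fun u hu => hvpos u ⟨hu.1.le, hu.2⟩
  have hθhlI : θhl ∈ Ioo a' θp := ⟨ha', hh⟩
  -- the "time" function T
  set T : ℝ → ℝ := fun u => R + ∫ τ in θhl..u, (v τ)⁻¹ with hTdef
  have hTd : ∀ u ∈ Ioo a' θp, HasDerivAt T (v u)⁻¹ u := by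
    intro u hu
    have hsub : uIcc θhl u ⊆ Ioo a' θp := (ordConnected_Ioo).uIcc_subset hθhlI hu
    have hint : IntervalIntegrable (fun τ => (v τ)⁻¹) volume θhl u :=
      ContinuousOn.intervalIntegrable
        ((hvc.continuousOn).inv₀ (fun τ hτ => ne_of_gt (hvpos' τ (hsub hτ))))
    have h1 : HasDerivAt (fun u' => ∫ τ in θhl..u', (v τ)⁻¹) (v u)⁻¹ u :=
      integral_hasDerivAt_right hint
        ⟨univ, univ_mem, (hvc.measurable.inv.aestronglyMeasurable).restrict⟩
        (hvc.continuousAt.inv₀ (ne_of_gt (hvpos' u hu)))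
    simpa [hTdef] using h1.const_add R
  have hTc : ContinuousOn T (Ioo a' θp) :=
    fun u hu => (hTd u hu).continuousAt.continuousWithinAt
  have hTmono : StrictMonoOn T (Ioo a' θp) := by
    apply strictMonoOn_of_deriv_pos (convex_Ioo a' θp) hTc
    rw [interior_Ioo]
    intro x hx
    rw [(hTd x hx).deriv]
    exact inv_pos.2 (hvpos' x hx)
  have hTR : T θhl = R := by simp [hTdef]
  -- divergence of T near θp
  set s₃ : ℝ := min s₂ (θp - θhl) with hs₃def
  have hs₃pos : 0 < s₃ := lt_min hs₂ (by linarith)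
  set u₂ : ℝ := θp - s₃ with hu₂def
  have hu₂ : θhl ≤ u₂ := by
    have := min_le_right s₂ (θp - θhl); simp only [hu₂def]; linarith
  have hu₂I : u₂ ∈ Ioo a' θp := ⟨lt_of_lt_of_le ha' hu₂, by simp only [hu₂def]; linarith⟩
  set φ : ℝ → ℝ := fun u => T u + K⁻¹ * Real.log (θp - u) with hφdef
  have hTbig : ∀ x : ℝ, ∃ u', θhl ≤ u' ∧ u' < θp ∧ x < T u' := by
    intro x
    set δ : ℝ := min (s₃/2) (Real.exp (K * (φ u₂ - x - 1))) with hδdef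
    have hδpos : 0 < δ := lt_min (by linarith) (Real.exp_pos _)
    set u' : ℝ := θp - δ with hu'def
    have hδs₃ : δ ≤ s₃/2 := min_le_left _ _
    have hu'mem : u' ∈ Ioo a' θp := by
      constructor
      · have : u₂ ≤ u' := by simp only [hu'def, hu₂def]; linarith
        linarith [hu₂I.1]
      · simp only [hu'def]; linarith
    have hu₂u' : u₂ ≤ u' := by simp only [hu'def, hu₂def]; linarith
    have hφmono : MonotoneOn φ (Icc u₂ u') := by
      have hsub : Icc u₂ u' ⊆ Ioo a' θp := fun t ht =>
        ⟨lt_of_lt_of_le hu₂I.1 ht.1, lt_of_le_of_lt ht.2 hu'mem.2⟩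
      apply mono_aux (g := fun u => (v u)⁻¹ - K⁻¹ * (θp - u)⁻¹)
      · apply ContinuousOn.add (hTc.mono hsub)
        apply ContinuousOn.mul continuousOn_const
        apply ContinuousOn.log
        · exact (continuous_const.sub continuous_id).continuousOn
        · intro t ht
          have h2 := (hsub ht).2
          intro hcon
          have := sub_eq_zero.1 hcon
          linarith
      · intro t ht
        have htI : t ∈ Ioo a' θp := ⟨lt_trans hu₂I.1 ht.1, lt_trans ht.2 hu'mem.2⟩
        have h1 : HasDerivAt (fun u => θp - u) (-1) t := by
          simpa using (hasDerivAt_id t).const_sub θp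
        have h2 : (0:ℝ) < θp - t := by linarith [htI.2]
        have h3 : HasDerivAt (fun u => Real.log (θp - u)) ((θp - t)⁻¹ * (-1)) t :=
          (Real.hasDerivAt_log (ne_of_gt h2)).comp t h1
        have h4 := (hTd t htI).add (h3.const_mul K⁻¹)
        refine h4.congr_deriv (Eq.symm ?_)
        ring
      · intro t ht
        have htI : t ∈ Ioo a' θp := ⟨lt_trans hu₂I.1 ht.1, lt_trans ht.2 hu'mem.2⟩
        have h2 : (0:ℝ) < θp - t := by linarith [htI.2]
        have hlin := hvlin t (by
          have : u₂ ≤ t := ht.1.le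
          simp only [hu₂def] at this
          have := min_le_left s₂ (θp - θhl)
          simp only [hs₃def] at *
          linarith) (by linarith)
        have h5 : (K * (θp - t))⁻¹ ≤ (v t)⁻¹ :=
          inv_anti₀ (hvpos' t htI) hlin
        rw [mul_inv] at h5
        linarith
    have hmo := hφmono (left_mem_Icc.2 hu₂u') (right_mem_Icc.2 hu₂u') hu₂u'
    have hlog : Real.log (θp - u') ≤ K * (φ u₂ - x - 1) := by
      have h1 : θp - u' = δ := by simp [hu'def]
      rw [h1]
      calc Real.log δ ≤ Real.log (Real.exp (K * (φ u₂ - x - 1))) :=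
            Real.log_le_log hδpos (min_le_right _ _)
        _ = K * (φ u₂ - x - 1) := Real.log_exp _
    refine ⟨u', le_trans hu₂ hu₂u', hu'mem.2, ?_⟩
    have hfu' : φ u' = T u' + K⁻¹ * Real.log (θp - u') := rfl
    have h5 := mul_le_mul_of_nonneg_left hlog (inv_pos.2 hK).le
    have h7 : K⁻¹ * (K * (φ u₂ - x - 1)) = φ u₂ - x - 1 := by field_simp
    have e1 : φ u₂ ≤ T u' + K⁻¹ * Real.log (θp - u') := hfu' ▸ hmo
    have e2 : K⁻¹ * Real.log (θp - u') ≤ φ u₂ - x - 1 := h7 ▸ h5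
    linarith
  -- inverse function domain
  have hIVT : ∀ lo, lo ∈ Ioo a' θp → lo ≤ θhl → ∀ x, T lo ≤ x → x ≤ R ∨ R ≤ x →
      ∃ u, u ∈ Ioo a' θp ∧ lo ≤ u ∧ u < θp ∧ T u = x := by
    intro lo hlo hloθ x hx _
    obtain ⟨u', hu'1, hu'2, hu'3⟩ := hTbig x
    have hlou' : lo ≤ u' := le_trans hloθ hu'1
    have hsub : Icc lo u' ⊆ Ioo a' θp := fun t ht =>
      ⟨lt_of_lt_of_le hlo.1 ht.1, lt_of_le_of_lt ht.2 hu'2⟩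
    have := intermediate_value_Icc hlou' (hTc.mono hsub)
    have hxmem : x ∈ Icc (T lo) (T u') := ⟨hx, hu'3.le⟩
    obtain ⟨u, huI, huT⟩ := this hxmem
    exact ⟨u, hsub huI, huI.1, lt_of_le_of_lt huI.2 hu'2, huT⟩
  -- the inverse function θ
  set θ : ℝ → ℝ := fun x => if h : ∃ u, u ∈ Ioo a' θp ∧ T u = x then h.choose else θhl
    with hθdef
  have hθspec : ∀ x : ℝ, (∃ u, u ∈ Ioo a' θp ∧ T u = x) →
      θ x ∈ Ioo a' θp ∧ T (θ x) = x := by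
    intro x h
    simp only [hθdef, dif_pos h]
    exact h.choose_spec
  have hθval : ∀ u ∈ Ioo a' θp, θ (T u) = u := by
    intro u hu
    have h : ∃ u', u' ∈ Ioo a' θp ∧ T u' = T u := ⟨u, hu, rfl⟩
    have h2 := hθspec _ h
    exact hTmono.injOn h2.1 hu h2.2
  set u₁ : ℝ := (a' + θhl)/2 with hu₁def
  have hu₁I : u₁ ∈ Ioo a' θp := ⟨by simp only [hu₁def]; linarith, by simp only [hu₁def]; linarith⟩
  have hu₁θhl : u₁ < θhl := by simp only [hu₁def]; linarith
  set R' : ℝ := T u₁ with hR'def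
  have hR'R : R' < R := by
    rw [hR'def, ← hTR]
    exact hTmono hu₁I hθhlI hu₁θhl
  have hdom : ∀ x, R' < x → θ x ∈ Ioo a' θp ∧ T (θ x) = x ∧ u₁ < θ x := by
    intro x hx
    have hex : ∃ u, u ∈ Ioo a' θp ∧ T u = x := by
      rcases le_or_gt R x with h | h
      · obtain ⟨u, hu, _, _, hTu⟩ := hIVT θhl hθhlI (le_refl _) x (hTR ▸ h) (Or.inr h)
        exact ⟨u, hu, hTu⟩
      · obtain ⟨u, hu, _, _, hTu⟩ := hIVT u₁ hu₁I hu₁θhl.le x hx.le (Or.inl h.le)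
        exact ⟨u, hu, hTu⟩
    obtain ⟨h1, h2⟩ := hθspec x hex
    refine ⟨h1, h2, ?_⟩
    by_contra hcon
    push_neg at hcon
    have := hTmono.monotoneOn h1 hu₁I hcon
    rw [h2, ← hR'def] at this
    linarith
  have hθmono : ∀ x y, R' < x → R' < y → x < y → θ x < θ y := by
    intro x y hx hy hxy
    have h1 := hdom x hx
    have h2 := hdom y hy
    have := hTmono.lt_iff_lt h1.1 h2.1
    apply this.1
    rw [h1.2.1, h2.2.1]
    exact hxy
  have hθle : ∀ x y, R' < x → R' < y → x ≤ y → θ x ≤ θ y := by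
    intro x y hx hy hxy
    rcases eq_or_lt_of_le hxy with h | h
    · rw [h]
    · exact (hθmono x y hx hy h).le
  -- continuity of θ
  have hθcont : ∀ x, R' < x → ContinuousAt θ x := by
    intro x hx
    obtain ⟨hmem, hTx, hu₁x⟩ := hdom x hx
    rw [Metric.continuousAt_iff]
    intro ε hε
    set u : ℝ := θ x
    set ε' : ℝ := min ε (min ((u - u₁)/2) ((θp - u)/2)) with hε'def
    have hε'pos : 0 < ε' :=
      lt_min hε (lt_min (by linarith) (by linarith [hmem.2]))
    have hε'1 : ε' ≤ (u - u₁)/2 := le_trans (min_le_right _ _) (min_le_left _ _)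
    have hε'2 : ε' ≤ (θp - u)/2 := le_trans (min_le_right _ _) (min_le_right _ _)
    have hloI : u - ε' ∈ Ioo a' θp :=
      ⟨by linarith [hu₁I.1], by linarith [hmem.2]⟩
    have hhiI : u + ε' ∈ Ioo a' θp := ⟨by linarith [hmem.1], by linarith⟩
    have hu₁lo : u₁ < u - ε' := by linarith
    have hTlo : T (u - ε') < x := by
      rw [← hTx]; exact hTmono hloI hmem (by linarith)
    have hThi : x < T (u + ε') := by
      rw [← hTx]; exact hTmono hmem hhiI (by linarith)
    have hR'lo : R' < T (u - ε') := hTmono hu₁I hloI hu₁lo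
    refine ⟨min (x - T (u - ε')) (T (u + ε') - x),
      lt_min (by linarith) (by linarith), ?_⟩
    intro y hy
    rw [Real.dist_eq] at hy
    rw [Real.dist_eq]
    have hy1 : T (u - ε') < y := by
      have := abs_lt.1 (lt_of_lt_of_le hy (min_le_left _ _))
      linarith [this.1]
    have hy2 : y < T (u + ε') := by
      have := abs_lt.1 (lt_of_lt_of_le hy (min_le_right _ _))
      linarith [this.2]
    have hR'y : R' < y := lt_trans hR'lo hy1
    have hlo2 : u - ε' < θ y := by
      have := hθmono _ _ hR'lo hR'y hy1
      rwa [hθval _ hloI] at this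
    have hhi2 : θ y < u + ε' := by
      have hR'hi : R' < T (u + ε') := lt_trans hR'y hy2
      have := hθmono _ _ hR'y hR'hi hy2
      rwa [hθval _ hhiI] at this
    have : |θ y - u| < ε' := abs_lt.2 ⟨by linarith, by linarith⟩
    exact lt_of_lt_of_le this (le_trans (min_le_left _ _) (le_refl _))
  -- derivative of θ
  have hθd : ∀ x, R' < x → HasDerivAt θ (v (θ x)) x := by
    intro x hx
    obtain ⟨hmem, hTx, _⟩ := hdom x hx
    have hfg : ∀ᶠ y in nhds x, T (θ y) = y :=
      eventually_of_mem (isOpen_Ioi.mem_nhds hx) (fun y hy => (hdom y hy).2.1)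
    have h1 := HasDerivAt.of_local_left_inverse (hθcont x hx) (hTd (θ x) hmem)
      (ne_of_gt (inv_pos.2 (hvpos' _ hmem))) hfg
    rwa [inv_inv] at h1
  -- derivative of v ∘ θ
  have hθd2 : ∀ x, R' < x → HasDerivAt (fun y => v (θ y)) (c * v (θ x) - F (θ x)) x := by
    intro x hx
    obtain ⟨hmem, _, _⟩ := hdom x hx
    have h1 := (hvd (θ x) hmem).comp x (hθd x hx)
    have h2 : (c - F (θ x) / v (θ x)) * v (θ x) = c * v (θ x) - F (θ x) := by
      rw [sub_mul, div_mul_cancel₀ _ (ne_of_gt (hvpos' _ hmem))]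
    rwa [h2] at h1
  -- basic values
  have hRmem : ∀ x, x ∈ Ici R → R' < x := fun x hx => lt_of_lt_of_le hR'R hx
  have hθR : θ R = θhl := by rw [← hTR]; exact hθval θhl hθhlI
  have hθmem : ∀ x ∈ Ici R, θ x ∈ Ico θhl θp := by
    intro x hx
    obtain ⟨hmem, _, _⟩ := hdom x (hRmem x hx)
    refine ⟨?_, hmem.2⟩
    have := hθle R x hR'R (hRmem x hx) hx
    rwa [hθR] at this
  -- derivWithin computations
  have hdW1 : ∀ x ∈ Ici R, derivWithin θ (Ici R) x = v (θ x) := by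
    intro x hx
    exact ((hθd x (hRmem x hx)).hasDerivWithinAt).derivWithin (uniqueDiffOn_Ici R x hx)
  have hdW2 : ∀ x ∈ Ici R, derivWithin (derivWithin θ (Ici R)) (Ici R) x
      = c * v (θ x) - F (θ x) := by
    intro x hx
    have hcongr : derivWithin (derivWithin θ (Ici R)) (Ici R) x
        = derivWithin (fun y => v (θ y)) (Ici R) x :=
      derivWithin_congr hdW1 (hdW1 x hx)
    rw [hcongr]
    exact ((hθd2 x (hRmem x hx)).hasDerivWithinAt).derivWithin (uniqueDiffOn_Ici R x hx)
  -- smoothness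
  have hsm : ContDiffOn ℝ 2 θ (Ici R) := by
    have hU : IsOpen (Ioi R') := isOpen_Ioi
    have hvθcont : ContinuousOn (fun y => v (θ y)) (Ioi R') :=
      fun x hx => ((hθd2 x hx).differentiableAt.continuousAt).continuousWithinAt
    have hθcontOn : ContinuousOn θ (Ioi R') := fun x hx => (hθcont x hx).continuousWithinAt
    have hmain : ContDiffOn ℝ 2 θ (Ioi R') := by
      have h2eq : (2 : WithTop ℕ∞) = 1 + 1 := by norm_num
      rw [h2eq, contDiffOn_succ_iff_deriv_of_isOpen hU]
      refine ⟨fun x hx => (hθd x hx).differentiableAt.differentiableWithinAt, ?_, ?_⟩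
      · intro h; exact absurd h (by norm_num)
      · have hder : ∀ x ∈ Ioi R', deriv θ x = v (θ x) := fun x hx => (hθd x hx).deriv
        apply ContDiffOn.congr _ hder
        have h1eq : (1 : WithTop ℕ∞) = 0 + 1 := by norm_num
        rw [h1eq, contDiffOn_succ_iff_deriv_of_isOpen hU]
        refine ⟨fun x hx => (hθd2 x hx).differentiableAt.differentiableWithinAt, ?_, ?_⟩
        · intro h; exact absurd h (by norm_num)
        · rw [contDiffOn_zero]
          have hder2 : ∀ x ∈ Ioi R', deriv (fun y => v (θ y)) x
              = c * v (θ x) - F (θ x) := fun x hx => (hθd2 x hx).deriv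
          apply ContinuousOn.congr _ hder2
          exact (continuousOn_const.mul hvθcont).sub
            (hFW.comp hθcontOn (fun x hx => Ioo_subset_Icc_self (hdom x hx).1))
    exact hmain.mono (fun x hx => lt_of_lt_of_le hR'R hx)
  -- convergence at infinity
  have htend : Tendsto θ atTop (nhds θp) := by
    rw [tendsto_order]
    constructor
    · intro aa haa
      rcases lt_or_ge aa θhl with h | h
      · filter_upwards [eventually_ge_atTop R] with x hx
        exact lt_of_lt_of_le h (hθmem x hx).1
      · have haaI : aa ∈ Ioo a' θp := ⟨lt_of_lt_of_le ha' h, haa⟩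
        filter_upwards [eventually_gt_atTop (max R (T aa))] with x hx
        have hx1 : T aa < x := lt_of_le_of_lt (le_max_right _ _) hx
        have hR'aa : R' < T aa := hTmono hu₁I haaI (lt_of_lt_of_le hu₁θhl h)
        have := hθmono _ _ hR'aa (lt_trans hR'aa hx1) hx1
        rwa [hθval _ haaI] at this
    · intro bb hbb
      filter_upwards [eventually_ge_atTop R] with x hx
      exact lt_trans (hθmem x hx).2 hbb
  refine ⟨θ, hsm, ?_, hθR, ?_, hθmem, htend⟩
  · intro x hx
    rw [hdW2 x hx, hdW1 x hx]
    ring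
  · intro x hx
    rw [hdW1 x hx]
    have h1 := hθmem x hx
    exact hvpos _ ⟨le_of_lt (lt_of_lt_of_le ha' h1.1), h1.2⟩


/-- Existence of the monotone heteroclinic solution: for every `c > 0` and `R ∈ ℝ`
there is a `C²` solution `θ` on `[R, ∞)` of `θ'' − cθ' + F(θ) = 0` with
`θ(R) = θ_hl`, `θ' > 0`, values in `[θ_hl, θ₊)`, and `θ(x) → θ₊` as `x → +∞`.
(Derivatives on `[R, ∞)` are taken within `[R, ∞)`.) -/
theorem stmt13 (θhl θp : ℝ) (h0 : 0 < θhl) (h1 : θhl < θp)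
    (F : ℝ → ℝ) (W : Set ℝ) (hW : IsOpen W) (hWsub : Icc θhl θp ⊆ W)
    (hF : ContDiffOn ℝ (⊤ : ℕ∞) F W) (hFzero : F θp = 0)
    (hFpos : ∀ u ∈ Ico θhl θp, 0 < F u) (hF' : deriv F θp < 0)
    (c : ℝ) (hc : 0 < c) (R : ℝ) :
    ∃ θ : ℝ → ℝ,
      ContDiffOn ℝ 2 θ (Ici R) ∧
      (∀ x ∈ Ici R, derivWithin (derivWithin θ (Ici R)) (Ici R) x
          - c * derivWithin θ (Ici R) x + F (θ x) = 0) ∧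
      θ R = θhl ∧
      (∀ x ∈ Ici R, 0 < derivWithin θ (Ici R) x) ∧
      (∀ x ∈ Ici R, θ x ∈ Ico θhl θp) ∧
      Tendsto θ atTop (nhds θp) := by
  -- extend the left endpoint slightly
  have hθhlW : θhl ∈ W := hWsub ⟨le_refl _, h1.le⟩
  obtain ⟨η₁, hη₁pos, hη₁⟩ := Metric.isOpen_iff.1 hW θhl hθhlW
  have hFcontθhl : ContinuousAt F θhl :=
    (hF.continuousOn.continuousAt (hW.mem_nhds hθhlW))
  have hFθhl : 0 < F θhl := hFpos θhl ⟨le_refl _, h1⟩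
  have hmem : Ioi (0:ℝ) ∈ nhds (F θhl) := isOpen_Ioi.mem_nhds hFθhl
  obtain ⟨η₂, hη₂pos, hη₂⟩ := Metric.mem_nhds_iff.1 (hFcontθhl.preimage_mem_nhds hmem)
  set a' : ℝ := θhl - min η₁ η₂ / 2 with ha'def
  have hminη : 0 < min η₁ η₂ := lt_min hη₁pos hη₂pos
  have ha' : a' < θhl := by simp only [ha'def]; linarith
  have hIccW : Icc a' θp ⊆ W := by
    intro u hu
    rcases le_or_gt θhl u with h | h
    · exact hWsub ⟨h, hu.2⟩
    · apply hη₁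
      rw [Metric.mem_ball, Real.dist_eq, abs_of_nonpos (by linarith)]
      have := hu.1
      simp only [ha'def] at this
      have h2 := min_le_left η₁ η₂
      linarith
  have hFc : ContinuousOn F (Icc a' θp) := hF.continuousOn.mono hIccW
  have hFpos' : ∀ u ∈ Ico a' θp, 0 < F u := by
    intro u hu
    rcases le_or_gt θhl u with h | h
    · exact hFpos u ⟨h, hu.2⟩
    · have : u ∈ Metric.ball θhl η₂ := by
        rw [Metric.mem_ball, Real.dist_eq, abs_of_nonpos (by linarith)]
        have := hu.1
        simp only [ha'def] at this
        have h2 := min_le_right η₁ η₂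
        linarith
      exact hη₂ this
  -- derivative bounds near θp
  have hθpW : θp ∈ W := hWsub ⟨h1.le, le_refl _⟩
  have hFdiff : DifferentiableAt ℝ F θp :=
    (hF.contDiffAt (hW.mem_nhds hθpW)).differentiableAt (by simp)
  have hdF : HasDerivAt F (deriv F θp) θp := hFdiff.hasDerivAt
  set m : ℝ := -(deriv F θp) / 2 with hmdef
  have hm : 0 < m := by simp only [hmdef]; linarith
  have hlo := hasDerivAt_iff_isLittleO.1 hdF
  have heps := hlo.def (show (0:ℝ) < m from hm)
  rw [Metric.eventually_nhds_iff] at heps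
  obtain ⟨ε, hεpos, hε⟩ := heps
  set s₁ : ℝ := min (ε/2) (θp - θhl) with hs₁def
  have hs₁pos : 0 < s₁ := lt_min (by linarith) (by linarith)
  have hs₁ab : s₁ ≤ θp - a' := by
    have h2 := min_le_right (ε/2) (θp - θhl)
    simp only [hs₁def, ha'def] at *
    linarith
  have hbound : ∀ u, θp - s₁ ≤ u → u ≤ θp →
      m * (θp - u) ≤ F u ∧ F u ≤ 3 * m * (θp - u) := by
    intro u hu1 hu2
    have hd : dist u θp < ε := by
      rw [Real.dist_eq, abs_of_nonpos (by linarith)]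
      have := min_le_left (ε/2) (θp - θhl)
      simp only [hs₁def] at hu1
      linarith
    have h3 := hε hd
    rw [Real.norm_eq_abs, Real.norm_eq_abs, hFzero] at h3
    have h4 : (u - θp) • deriv F θp = (u - θp) * (-(2*m)) := by
      rw [smul_eq_mul]
      congr 1
      simp only [hmdef]
      ring
    rw [h4] at h3
    have h5 : |u - θp| = θp - u := by
      rw [abs_of_nonpos (by linarith)]; ring
    rw [h5] at h3
    have h6 := abs_le.1 h3
    constructor
    · nlinarith [h6.1]
    · nlinarith [h6.2]
  -- stage 1
  obtain ⟨v, hvc, hvpos, hvd, K, s₂, hK, hs₂, _, hvlin⟩ :=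
    stage1 (lt_trans ha' h1) hc hFc hFpos' hFzero hm hs₁pos hs₁ab
      (by linarith : (0:ℝ) < 3*m)
      (fun u hu1 hu2 => (hbound u hu1 hu2).1)
      (fun u hu1 hu2 => (hbound u hu1 hu2).2)
  -- stage 2
  exact stage2 ha' h1 hc hFc hvc hvpos hvd hK hs₂ hvlin
end

section
/- For every c > 0 and R ∈ ℝ, if θ₁, θ₂ : [R, +∞) → ℝ are twice continuously differentiable, satisfy θ'' − c·θ' + F(θ) = 0 on [R, +∞), θᵢ(R) = θ_hl, θᵢ'(x) > 0 for all x ≥ R, and θᵢ(x) → θ₊ as x → +∞ (i = 1, 2), then θ₁ = θ₂; in particular θ₁'(R) = θ₂'(R), i.e. the initial slope of such a monotone heteroclinic solution is uniquely determined by c. -/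
open Set Filter

section FrontAux

/-- Bundle of hypotheses on a monotone heteroclinic front. -/
structure IsFront (θhl θp c R : ℝ) (F θ : ℝ → ℝ) : Prop where
  reg : ContDiffOn ℝ 2 θ (Set.Ici R)
  ode : ∀ x ∈ Set.Ici R, derivWithin (derivWithin θ (Set.Ici R)) (Set.Ici R) x
      - c * derivWithin θ (Set.Ici R) x + F (θ x) = 0
  val : θ R = θhl
  pos : ∀ x ∈ Set.Ici R, 0 < derivWithin θ (Set.Ici R) x
  lim : Filter.Tendsto θ Filter.atTop (nhds θp)

variable {θhl θp c R : ℝ} {F θ : ℝ → ℝ}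

lemma IsFront.contOn (hf : IsFront θhl θp c R F θ) : ContinuousOn θ (Ici R) :=
  hf.reg.continuousOn

lemma IsFront.vContOn (hf : IsFront θhl θp c R F θ) :
    ContinuousOn (derivWithin θ (Ici R)) (Ici R) :=
  (ContDiffOn.derivWithin (m := 1) hf.reg (uniqueDiffOn_Ici R) (by norm_num)).continuousOn

lemma IsFront.hasDerivWithinAt (hf : IsFront θhl θp c R F θ) {x : ℝ} (hx : x ∈ Ici R) :
    HasDerivWithinAt θ (derivWithin θ (Ici R) x) (Ici R) x :=
  (hf.reg.differentiableOn (by norm_num) x hx).hasDerivWithinAt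

lemma IsFront.hasDerivAt (hf : IsFront θhl θp c R F θ) {x : ℝ} (hx : R < x) :
    HasDerivAt θ (derivWithin θ (Ici R) x) x :=
  (hf.hasDerivWithinAt (le_of_lt hx)).hasDerivAt (Ici_mem_nhds hx)

lemma IsFront.vHasDerivWithinAt (hf : IsFront θhl θp c R F θ) {x : ℝ} (hx : x ∈ Ici R) :
    HasDerivWithinAt (derivWithin θ (Ici R))
      (c * derivWithin θ (Ici R) x - F (θ x)) (Ici R) x := by
  have hdiff : DifferentiableOn ℝ (derivWithin θ (Ici R)) (Ici R) :=
    (ContDiffOn.derivWithin (m := 1) hf.reg (uniqueDiffOn_Ici R)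
      (by norm_num)).differentiableOn (by norm_num)
  have h := (hdiff x hx).hasDerivWithinAt
  have heq := hf.ode x hx
  have : derivWithin (derivWithin θ (Ici R)) (Ici R) x
      = c * derivWithin θ (Ici R) x - F (θ x) := by linarith
  rwa [this] at h

lemma IsFront.vHasDerivAt (hf : IsFront θhl θp c R F θ) {x : ℝ} (hx : R < x) :
    HasDerivAt (derivWithin θ (Ici R))
      (c * derivWithin θ (Ici R) x - F (θ x)) x :=
  (hf.vHasDerivWithinAt (le_of_lt hx)).hasDerivAt (Ici_mem_nhds hx)

lemma IsFront.mono (hf : IsFront θhl θp c R F θ) : StrictMonoOn θ (Ici R) := by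
  apply strictMonoOn_of_deriv_pos (convex_Ici R) hf.contOn
  intro x hx
  rw [interior_Ici] at hx
  rw [(hf.hasDerivAt hx).deriv]
  exact hf.pos x (mem_Ici.2 (le_of_lt hx))

lemma IsFront.le_top (hf : IsFront θhl θp c R F θ) {x : ℝ} (hx : x ∈ Ici R) : θ x ≤ θp := by
  refine ge_of_tendsto hf.lim ?_
  filter_upwards [eventually_ge_atTop x] with y hy
  rcases eq_or_lt_of_le hy with rfl | h
  · exact le_rfl
  · exact (hf.mono hx (le_trans hx hy) h).le

lemma IsFront.lt_top (hf : IsFront θhl θp c R F θ) {x : ℝ} (hx : x ∈ Ici R) : θ x < θp :=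
  lt_of_lt_of_le (hf.mono hx (mem_Ici.2 (le_trans (mem_Ici.1 hx) (by linarith))) (by linarith : x < x + 1))
    (hf.le_top (mem_Ici.2 (le_trans (mem_Ici.1 hx) (by linarith : x ≤ x + 1))))

lemma IsFront.ge_bot (hf : IsFront θhl θp c R F θ) {x : ℝ} (hx : x ∈ Ici R) : θhl ≤ θ x := by
  rw [← hf.val]
  rcases eq_or_lt_of_le (mem_Ici.1 hx) with rfl | h
  · exact le_rfl
  · exact (hf.mono self_mem_Ici hx h).le

lemma IsFront.mem_Ico (hf : IsFront θhl θp c R F θ) {x : ℝ} (hx : x ∈ Ici R) :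
    θ x ∈ Ico θhl θp := ⟨hf.ge_bot hx, hf.lt_top hx⟩

lemma IsFront.surj (hf : IsFront θhl θp c R F θ) {u : ℝ} (hu : u ∈ Ico θhl θp) :
    ∃ x, x ∈ Ici R ∧ θ x = u := by
  obtain ⟨X, hX1, hX2⟩ := ((hf.lim.eventually (eventually_gt_nhds hu.2)).and
    (eventually_ge_atTop R)).exists
  have hRX : R ≤ X := hX2
  have : u ∈ Icc (θ R) (θ X) := ⟨hf.val ▸ hu.1, hX1.le⟩
  obtain ⟨x, hx, hxu⟩ := intermediate_value_Icc hRX (hf.contOn.mono Icc_subset_Ici_self) this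
  exact ⟨x, hx.1, hxu⟩

/-- The slope gets arbitrarily small arbitrarily far out. -/
lemma IsFront.small_slope (hf : IsFront θhl θp c R F θ) {ε : ℝ} (hε : 0 < ε) (N : ℝ) :
    ∃ x, R ≤ x ∧ N ≤ x ∧ derivWithin θ (Ici R) x < ε := by
  by_contra hcon
  push_neg at hcon
  set N' : ℝ := max N R with hN'
  have hN'R : R ≤ N' := le_max_right _ _
  have hge : ∀ x ∈ Ici N', ε ≤ derivWithin θ (Ici R) x := fun x hx =>
    hcon x (le_trans hN'R hx) (le_trans (le_max_left _ _) hx)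
  have hmono : MonotoneOn (fun x => θ x - ε * x) (Ici N') := by
    apply monotoneOn_of_deriv_nonneg (convex_Ici N')
      ((hf.contOn.mono (Ici_subset_Ici.2 hN'R)).sub (continuousOn_const.mul continuousOn_id))
    · intro x hx
      rw [interior_Ici] at hx
      have hxR : R < x := lt_of_le_of_lt hN'R hx
      exact ((hf.hasDerivAt hxR).sub ((hasDerivAt_id x).const_mul ε)).differentiableAt
        |>.differentiableWithinAt
    · intro x hx
      rw [interior_Ici] at hx
      have hxR : R < x := lt_of_le_of_lt hN'R hx
      rw [show deriv (θ - (fun _ => ε) * id) x = derivWithin θ (Ici R) x - ε * 1 from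
        ((hf.hasDerivAt hxR).sub ((hasDerivAt_id x).const_mul ε)).deriv]
      have := hge x (mem_Ici.2 (le_of_lt hx))
      simp only [mul_one]
      linarith
  set X : ℝ := N' + (θp - θ N' + 1) / ε with hX
  have hnn : 0 ≤ (θp - θ N' + 1) / ε := by
    apply div_nonneg _ hε.le
    have := hf.le_top (show N' ∈ Ici R from hN'R)
    linarith
  have hXN' : N' ≤ X := le_add_of_nonneg_right hnn
  have := hmono (self_mem_Ici) (show X ∈ Ici N' from hXN') hXN'
  have hXval : θ X ≤ θp := hf.le_top (mem_Ici.2 (le_trans hN'R hXN'))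
  have hεX : ε * X = ε * N' + (θp - θ N' + 1) := by
    rw [hX, mul_add, mul_div_cancel₀ _ hε.ne']
  simp only at this
  rw [hεX] at this
  linarith

end FrontAux

open Classical in
/-- Choice-based inverse of the front on `[θhl, θp)`. -/
noncomputable def frontInv (R : ℝ) (θ : ℝ → ℝ) (u : ℝ) : ℝ :=
  if h : ∃ x, x ∈ Set.Ici R ∧ θ x = u then h.choose else R

section InvAux

variable {θhl θp c R : ℝ} {F θ : ℝ → ℝ}

lemma IsFront.inv_spec (hf : IsFront θhl θp c R F θ) {u : ℝ} (hu : u ∈ Ico θhl θp) :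
    frontInv R θ u ∈ Ici R ∧ θ (frontInv R θ u) = u := by
  have h := hf.surj hu
  unfold frontInv
  rw [dif_pos h]
  exact h.choose_spec

lemma IsFront.inv_apply (hf : IsFront θhl θp c R F θ) {x : ℝ} (hx : x ∈ Ici R) :
    frontInv R θ (θ x) = x := by
  have hu : θ x ∈ Ico θhl θp := hf.mem_Ico hx
  have h := hf.inv_spec hu
  exact hf.mono.injOn h.1 hx h.2

lemma IsFront.inv_bot (hf : IsFront θhl θp c R F θ) (h1 : θhl < θp) :
    frontInv R θ θhl = R := by
  have := hf.inv_apply (self_mem_Ici : R ∈ Ici R)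
  rwa [hf.val] at this

lemma IsFront.inv_gt (hf : IsFront θhl θp c R F θ) {u : ℝ} (hu : u ∈ Ico θhl θp)
    (h : θhl < u) : R < frontInv R θ u := by
  obtain ⟨hmem, hval⟩ := hf.inv_spec hu
  rcases eq_or_lt_of_le (mem_Ici.1 hmem) with heq | hlt
  · exfalso; rw [← heq, hf.val] at hval; linarith
  · exact hlt

lemma IsFront.inv_continuousWithinAt (hf : IsFront θhl θp c R F θ)
    {u₀ : ℝ} (hu₀ : u₀ ∈ Ico θhl θp) :
    ContinuousWithinAt (frontInv R θ) (Ico θhl θp) u₀ := by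
  rw [Metric.continuousWithinAt_iff]
  intro ε hε
  obtain ⟨hx₀mem, hx₀val⟩ := hf.inv_spec hu₀
  set x₀ : ℝ := frontInv R θ u₀ with hx₀
  have hx₀R : R ≤ x₀ := hx₀mem
  -- right bound
  have hbR : x₀ < x₀ + ε / 2 := by linarith
  have hb : u₀ < θ (x₀ + ε / 2) := by
    rw [← hx₀val]; exact hf.mono hx₀mem (by simp only [mem_Ici]; linarith) hbR
  -- left bound
  set a : ℝ := if R < x₀ then θ (max (x₀ - ε / 2) R) else u₀ - 1 with ha
  have halt : a < u₀ := by
    rw [ha]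
    split_ifs with hR
    · rw [← hx₀val]
      apply hf.mono (mem_Ici.2 (le_max_right _ _)) hx₀mem
      apply max_lt (by linarith) hR
    · linarith
  refine ⟨min (θ (x₀ + ε / 2) - u₀) (u₀ - a), lt_min (by linarith) (by linarith), ?_⟩
  intro u hu hdist
  rw [Real.dist_eq] at hdist ⊢
  obtain ⟨hxmem, hxval⟩ := hf.inv_spec hu
  set x : ℝ := frontInv R θ u with hx
  have hxR : R ≤ x := hxmem
  have hub : u < θ (x₀ + ε / 2) := by
    have := abs_lt.1 hdist
    have h2 := lt_of_lt_of_le this.2 (min_le_left _ _)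
    linarith
  have hua : a < u := by
    have h1' := (abs_lt.1 hdist).1
    have h2' : min (θ (x₀ + ε / 2) - u₀) (u₀ - a) ≤ u₀ - a := min_le_right _ _
    linarith
  -- upper: x < x₀ + ε/2
  have hxu : x < x₀ + ε / 2 := by
    by_contra hcontra
    push_neg at hcontra
    have : θ (x₀ + ε / 2) ≤ θ x := by
      rcases eq_or_lt_of_le hcontra with heq | hlt
      · rw [heq]
      · exact (hf.mono (by simp only [mem_Ici]; linarith) hxmem hlt).le
    rw [hxval] at this
    linarith
  -- lower: x₀ - ε/2 < x
  have hxl : x₀ - ε / 2 < x := by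
    by_cases hR : R < x₀
    · by_contra hcontra
      push_neg at hcontra
      have hxle : x ≤ max (x₀ - ε / 2) R := le_max_of_le_left hcontra
      have : θ x ≤ a := by
        rw [ha, if_pos hR]
        rcases eq_or_lt_of_le hxle with heq | hlt
        · rw [heq]
        · exact (hf.mono hxmem (mem_Ici.2 (le_max_right _ _)) hlt).le
      rw [hxval] at this
      linarith
    · push_neg at hR
      have : R = x₀ := le_antisymm hx₀mem hR
      have : x₀ ≤ x := this ▸ hxmem
      linarith
  rw [abs_lt]
  constructor <;> linarith

lemma IsFront.inv_hasDerivAt (hf : IsFront θhl θp c R F θ)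
    {u₀ : ℝ} (hu₀ : u₀ ∈ Ioo θhl θp) :
    HasDerivAt (frontInv R θ) (derivWithin θ (Ici R) (frontInv R θ u₀))⁻¹ u₀ := by
  have hu₀' : u₀ ∈ Ico θhl θp := ⟨hu₀.1.le, hu₀.2⟩
  have hnhds : Ico θhl θp ∈ nhds u₀ := Ico_mem_nhds hu₀.1 hu₀.2
  have hcont : ContinuousAt (frontInv R θ) u₀ :=
    (hf.inv_continuousWithinAt hu₀').continuousAt hnhds
  have hgt : R < frontInv R θ u₀ := hf.inv_gt hu₀' hu₀.1
  have hθ : HasDerivAt θ (derivWithin θ (Ici R) (frontInv R θ u₀)) (frontInv R θ u₀) :=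
    hf.hasDerivAt hgt
  have hne : derivWithin θ (Ici R) (frontInv R θ u₀) ≠ 0 :=
    (hf.pos _ hgt.le).ne'
  refine HasDerivAt.of_local_left_inverse hcont hθ hne ?_
  filter_upwards [hnhds] with u hu
  exact (hf.inv_spec hu).2

end InvAux

/-- The slope as a function of the value (phase-plane representation). -/
noncomputable def slopeFn (R : ℝ) (θ : ℝ → ℝ) (u : ℝ) : ℝ :=
  derivWithin θ (Set.Ici R) (frontInv R θ u)

section SlopeAux

variable {θhl θp c R : ℝ} {F θ : ℝ → ℝ}

lemma IsFront.slope_pos (hf : IsFront θhl θp c R F θ) {u : ℝ} (hu : u ∈ Ico θhl θp) :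
    0 < slopeFn R θ u :=
  hf.pos _ (hf.inv_spec hu).1

lemma IsFront.slope_contOn (hf : IsFront θhl θp c R F θ) :
    ContinuousOn (slopeFn R θ) (Ico θhl θp) := by
  apply hf.vContOn.comp (fun u hu => hf.inv_continuousWithinAt hu)
  exact fun u hu => (hf.inv_spec hu).1

lemma IsFront.slope_hasDerivAt (hf : IsFront θhl θp c R F θ)
    {u : ℝ} (hu : u ∈ Ioo θhl θp) :
    HasDerivAt (slopeFn R θ)
      ((c * slopeFn R θ u - F u) / slopeFn R θ u) u := by
  have hu' : u ∈ Ico θhl θp := ⟨hu.1.le, hu.2⟩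
  have hgt : R < frontInv R θ u := hf.inv_gt hu' hu.1
  have hv : HasDerivAt (derivWithin θ (Ici R))
      (c * derivWithin θ (Ici R) (frontInv R θ u) - F (θ (frontInv R θ u)))
      (frontInv R θ u) := hf.vHasDerivAt hgt
  have hg := hf.inv_hasDerivAt hu
  have hcomp := HasDerivAt.comp u hv hg
  have hval : θ (frontInv R θ u) = u := (hf.inv_spec hu').2
  rw [hval] at hcomp
  have : (c * derivWithin θ (Ici R) (frontInv R θ u) - F u) *
      (derivWithin θ (Ici R) (frontInv R θ u))⁻¹
      = (c * slopeFn R θ u - F u) / slopeFn R θ u := by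
    rw [slopeFn, div_eq_mul_inv]
  rw [this] at hcomp
  exact hcomp

end SlopeAux

section Comparison

variable {θhl θp c R : ℝ} {F θ₁ θ₂ : ℝ → ℝ}

/-- Core comparison: initial slope of front 1 is at most that of front 2. -/
lemma front_slope_le (h1 : θhl < θp) (hFpos : ∀ u ∈ Ico θhl θp, 0 < F u)
    (hf1 : IsFront θhl θp c R F θ₁) (hf2 : IsFront θhl θp c R F θ₂) :
    derivWithin θ₁ (Ici R) R ≤ derivWithin θ₂ (Ici R) R := by
  by_contra hcon
  push_neg at hcon
  set w : ℝ → ℝ := fun u => slopeFn R θ₁ u - slopeFn R θ₂ u with hw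
  set δ : ℝ := derivWithin θ₁ (Ici R) R - derivWithin θ₂ (Ici R) R with hδ
  have hδpos : 0 < δ := by rw [hδ]; linarith
  have hwθhl : w θhl = δ := by
    rw [hw, hδ]
    simp only [slopeFn, hf1.inv_bot h1, hf2.inv_bot h1]
  have hwcont : ContinuousOn w (Ico θhl θp) := hf1.slope_contOn.sub hf2.slope_contOn
  have hwderiv : ∀ u ∈ Ioo θhl θp, HasDerivAt w
      (F u * w u / (slopeFn R θ₁ u * slopeFn R θ₂ u)) u := by
    intro u hu
    have hu' : u ∈ Ico θhl θp := ⟨hu.1.le, hu.2⟩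
    have hp1 := hf1.slope_pos hu'
    have hp2 := hf2.slope_pos hu'
    have h := (hf1.slope_hasDerivAt hu).sub (hf2.slope_hasDerivAt hu)
    have heq : (c * slopeFn R θ₁ u - F u) / slopeFn R θ₁ u
        - (c * slopeFn R θ₂ u - F u) / slopeFn R θ₂ u
        = F u * w u / (slopeFn R θ₁ u * slopeFn R θ₂ u) := by
      rw [hw]
      field_simp
      ring
    rwa [heq] at h
  -- Claim: δ ≤ w u for all u in Ico θhl θp
  have hclaim : ∀ u ∈ Ico θhl θp, δ ≤ w u := by
    by_contra hcc
    push_neg at hcc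
    obtain ⟨u₀, hu₀, hwu₀⟩ := hcc
    set A : Set ℝ := {u | u ∈ Icc θhl u₀ ∧ ∀ t ∈ Icc θhl u, δ ≤ w t} with hA
    have hAne : θhl ∈ A := by
      refine ⟨⟨le_refl _, hu₀.1⟩, fun t ht => ?_⟩
      have : t = θhl := le_antisymm ht.2 ht.1
      rw [this, hwθhl]
    have hAbdd : BddAbove A := ⟨u₀, fun a ha => ha.1.2⟩
    set T : ℝ := sSup A with hT
    have hTmem : θhl ≤ T := le_csSup hAbdd hAne
    have hTle : T ≤ u₀ := csSup_le ⟨θhl, hAne⟩ fun a ha => ha.1.2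
    have hTlt : T < θp := lt_of_le_of_lt hTle hu₀.2
    have hIccsub : Icc θhl u₀ ⊆ Ico θhl θp := fun t ht => ⟨ht.1, lt_of_le_of_lt ht.2 hu₀.2⟩
    -- all t < T satisfy δ ≤ w t
    have hbelow : ∀ t ∈ Ico θhl T, δ ≤ w t := by
      intro t ht
      obtain ⟨a, haA, hta⟩ := exists_lt_of_lt_csSup ⟨θhl, hAne⟩ ht.2
      exact haA.2 t ⟨ht.1, hta.le⟩
    -- δ ≤ w T
    have hwT : δ ≤ w T := by
      rcases eq_or_lt_of_le hTmem with heq | hlt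
      · rw [← heq, hwθhl]
      · have hTmem' : T ∈ Icc θhl u₀ := ⟨hTmem, hTle⟩
        have hclos : T ∈ closure (Ico θhl T) := by
          rw [closure_Ico (ne_of_lt hlt)]
          exact ⟨hTmem, le_refl _⟩
        have hne : (nhdsWithin T (Ico θhl T)).NeBot :=
          mem_closure_iff_nhdsWithin_neBot.1 hclos
        have htend : Tendsto w (nhdsWithin T (Ico θhl T)) (nhds (w T)) := by
          apply (hwcont T (hIccsub hTmem')).mono_left
          apply nhdsWithin_mono
          intro t ht
          exact hIccsub ⟨ht.1, le_trans ht.2.le hTle⟩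
        exact ge_of_tendsto htend (eventually_nhdsWithin_of_forall fun t ht => hbelow t ht)
    have hTA : T ∈ A := by
      refine ⟨⟨hTmem, hTle⟩, fun t ht => ?_⟩
      rcases eq_or_lt_of_le ht.2 with heq | hlt
      · rw [heq]; exact hwT
      · exact hbelow t ⟨ht.1, hlt⟩
    -- T < u₀ leads to contradiction; T = u₀ contradicts w u₀ < δ
    rcases eq_or_lt_of_le hTle with heq | hTlt'
    · have := hTA.2 u₀ ⟨hu₀.1, heq.ge⟩
      linarith
    · -- extend past T
      have hcontT : ContinuousWithinAt w (Icc θhl u₀) T :=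
        (hwcont.mono hIccsub) T ⟨hTmem, hTle⟩
      rw [Metric.continuousWithinAt_iff] at hcontT
      obtain ⟨η, hηpos, hη⟩ := hcontT (δ / 2) (by linarith)
      set T' : ℝ := min (T + η / 2) u₀ with hT'
      have hTT' : T < T' := lt_min (by linarith) hTlt'
      have hT'le : T' ≤ u₀ := min_le_right _ _
      have hwpos : ∀ t ∈ Icc θhl T', 0 < w t := by
        intro t ht
        by_cases hcase : t ≤ T
        · have := hTA.2 t ⟨ht.1, hcase⟩; linarith
        · push_neg at hcase
          have htmem : t ∈ Icc θhl u₀ := ⟨ht.1, le_trans ht.2 hT'le⟩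
          have hdist : dist t T < η := by
            rw [Real.dist_eq, abs_lt]
            have h2 : t ≤ T + η / 2 := le_trans ht.2 (min_le_left _ _)
            constructor <;> linarith
          have := hη htmem hdist
          rw [Real.dist_eq, abs_lt] at this
          have h1' : -(δ / 2) < w t - w T := this.1
          have h2' : δ ≤ w T := hwT
          have h3' : (0:ℝ) < δ := hδpos
          clear_value w δ T T'
          linarith [h1', h2', h3']
      have hmonoW : MonotoneOn w (Icc θhl T') := by
        apply monotoneOn_of_deriv_nonneg (convex_Icc θhl T')
        · apply hwcont.mono
          intro t ht
          exact hIccsub ⟨ht.1, le_trans ht.2 hT'le⟩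
        · intro t ht
          rw [interior_Icc] at ht
          have htIoo : t ∈ Ioo θhl θp :=
            ⟨ht.1, lt_of_lt_of_le ht.2 (le_trans hT'le hu₀.2.le)⟩
          exact (hwderiv t htIoo).differentiableAt.differentiableWithinAt
        · intro t ht
          rw [interior_Icc] at ht
          have htIoo : t ∈ Ioo θhl θp :=
            ⟨ht.1, lt_of_lt_of_le ht.2 (le_trans hT'le hu₀.2.le)⟩
          rw [(hwderiv t htIoo).deriv]
          have hF := hFpos t ⟨ht.1.le, htIoo.2⟩
          have hwt := hwpos t ⟨ht.1.le, ht.2.le⟩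
          have hp1 := hf1.slope_pos ⟨ht.1.le, htIoo.2⟩
          have hp2 := hf2.slope_pos ⟨ht.1.le, htIoo.2⟩
          positivity
      have hT'A : T' ∈ A := by
        refine ⟨⟨le_trans hTmem hTT'.le, hT'le⟩, fun t ht => ?_⟩
        have := hmonoW (left_mem_Icc.2 (le_trans hTmem hTT'.le)) ht ht.1
        rw [hwθhl] at this
        linarith
      have := le_csSup hAbdd hT'A
      rw [← hT] at this
      linarith
  -- Final contradiction using small slope of θ₁
  obtain ⟨x, hxR, _, hxsmall⟩ := hf1.small_slope hδpos R
  have hxmem : x ∈ Ici R := hxR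
  set u : ℝ := θ₁ x with hu
  have humem : u ∈ Ico θhl θp := hf1.mem_Ico hxmem
  have hp1u : slopeFn R θ₁ u = derivWithin θ₁ (Ici R) x := by
    rw [slopeFn, hu, hf1.inv_apply hxmem]
  have hwu := hclaim u humem
  have hp2pos := hf2.slope_pos humem
  rw [hw] at hwu
  simp only at hwu
  rw [hp1u] at hwu
  linarith

end Comparison

/-- Uniqueness of the monotone heteroclinic solution: two `C²` solutions on
`[R, ∞)` of `θ'' − cθ' + F(θ) = 0` with `θ(R) = θ_hl`, `θ' > 0` and `θ → θ₊`
coincide on `[R, ∞)`; in particular their initial slopes at `R` agree.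
(Derivatives on `[R, ∞)` are taken within `[R, ∞)`.) -/
theorem stmt14 (θhl θp : ℝ) (h0 : 0 < θhl) (h1 : θhl < θp)
    (F : ℝ → ℝ) (W : Set ℝ) (hW : IsOpen W) (hWsub : Icc θhl θp ⊆ W)
    (hF : ContDiffOn ℝ (⊤ : ℕ∞) F W) (hFzero : F θp = 0)
    (hFpos : ∀ u ∈ Ico θhl θp, 0 < F u) (hF' : deriv F θp < 0)
    (c : ℝ) (hc : 0 < c) (R : ℝ) (θ₁ θ₂ : ℝ → ℝ)
    (hreg₁ : ContDiffOn ℝ 2 θ₁ (Ici R))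
    (hode₁ : ∀ x ∈ Ici R, derivWithin (derivWithin θ₁ (Ici R)) (Ici R) x
        - c * derivWithin θ₁ (Ici R) x + F (θ₁ x) = 0)
    (hval₁ : θ₁ R = θhl)
    (hpos₁ : ∀ x ∈ Ici R, 0 < derivWithin θ₁ (Ici R) x)
    (hlim₁ : Tendsto θ₁ atTop (nhds θp))
    (hreg₂ : ContDiffOn ℝ 2 θ₂ (Ici R))
    (hode₂ : ∀ x ∈ Ici R, derivWithin (derivWithin θ₂ (Ici R)) (Ici R) x
        - c * derivWithin θ₂ (Ici R) x + F (θ₂ x) = 0)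
    (hval₂ : θ₂ R = θhl)
    (hpos₂ : ∀ x ∈ Ici R, 0 < derivWithin θ₂ (Ici R) x)
    (hlim₂ : Tendsto θ₂ atTop (nhds θp)) :
    Set.EqOn θ₁ θ₂ (Ici R) ∧
    derivWithin θ₁ (Ici R) R = derivWithin θ₂ (Ici R) R := by
  have hf1 : IsFront θhl θp c R F θ₁ := ⟨hreg₁, hode₁, hval₁, hpos₁, hlim₁⟩
  have hf2 : IsFront θhl θp c R F θ₂ := ⟨hreg₂, hode₂, hval₂, hpos₂, hlim₂⟩
  have hslope : derivWithin θ₁ (Ici R) R = derivWithin θ₂ (Ici R) R :=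
    le_antisymm (front_slope_le h1 hFpos hf1 hf2) (front_slope_le h1 hFpos hf2 hf1)
  refine ⟨?_, hslope⟩
  -- ODE uniqueness forward from R
  -- Lipschitz constant for F on Icc θhl θp
  obtain ⟨KF, hKF⟩ : ∃ KF : NNReal, LipschitzOnWith KF F (Icc θhl θp) := by
    have hFdiff : ∀ x ∈ Icc θhl θp, DifferentiableAt ℝ F x := by
      intro x hx
      exact (hF.contDiffAt (hW.mem_nhds (hWsub hx))).differentiableAt (by norm_num)
    have hderivCont : ContinuousOn (deriv F) W :=
      hF.continuousOn_deriv_of_isOpen hW (by norm_num)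
    obtain ⟨C, hC⟩ := (isCompact_Icc : IsCompact (Icc θhl θp)).exists_bound_of_continuousOn
      (hderivCont.mono hWsub)
    refine ⟨⟨max C 0, le_max_right _ _⟩, ?_⟩
    apply (convex_Icc θhl θp).lipschitzOnWith_of_nnnorm_deriv_le hFdiff
    intro x hx
    have := hC x hx
    apply NNReal.coe_le_coe.1
    exact le_trans this (le_max_left _ _)
  set K : NNReal := ⟨c, hc.le⟩ + KF + 1 with hK
  set vf : ℝ → ℝ × ℝ → ℝ × ℝ := fun _ q => (q.2, c * q.2 - F q.1) with hvf
  set s : ℝ → Set (ℝ × ℝ) := fun _ => Icc θhl θp ×ˢ (univ : Set ℝ) with hs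
  have hlip : ∀ t : ℝ, LipschitzOnWith K (vf t) (s t) := by
    intro t
    apply LipschitzOnWith.of_dist_le_mul
    intro p hp q hq
    rw [Prod.dist_eq, Prod.dist_eq]
    have hF1 : dist (F p.1) (F q.1) ≤ (KF : ℝ) * dist p.1 q.1 :=
      hKF.dist_le_mul p.1 hp.1 q.1 hq.1
    have hd1 : dist p.1 q.1 ≤ max (dist p.1 q.1) (dist p.2 q.2) := le_max_left _ _
    have hd2 : dist p.2 q.2 ≤ max (dist p.1 q.1) (dist p.2 q.2) := le_max_right _ _
    have hKc : (K : ℝ) = c + KF + 1 := by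
      rw [hK]; push_cast; rfl
    have hD : (0:ℝ) ≤ max (dist p.1 q.1) (dist p.2 q.2) :=
      le_trans dist_nonneg hd1
    have hK1 : (1:ℝ) ≤ (K : ℝ) := by
      have := NNReal.coe_nonneg KF
      rw [hKc]; linarith
    apply max_le
    · calc dist p.2 q.2 ≤ max (dist p.1 q.1) (dist p.2 q.2) := hd2
        _ ≤ (K : ℝ) * max (dist p.1 q.1) (dist p.2 q.2) := by nlinarith
    · have hsub : dist (c * p.2 - F p.1) (c * q.2 - F q.1)
          ≤ c * dist p.2 q.2 + (KF : ℝ) * dist p.1 q.1 := by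
        rw [Real.dist_eq, Real.dist_eq, Real.dist_eq]
        have heq2 : c * p.2 - F p.1 - (c * q.2 - F q.1)
            = c * (p.2 - q.2) - (F p.1 - F q.1) := by ring
        rw [heq2]
        calc |c * (p.2 - q.2) - (F p.1 - F q.1)|
            ≤ |c * (p.2 - q.2)| + |F p.1 - F q.1| := abs_sub _ _
          _ = c * |p.2 - q.2| + |F p.1 - F q.1| := by rw [abs_mul, abs_of_pos hc]
          _ ≤ c * |p.2 - q.2| + (KF : ℝ) * |p.1 - q.1| := by
              rw [Real.dist_eq, Real.dist_eq] at hF1; linarith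
      calc dist (c * p.2 - F p.1) (c * q.2 - F q.1)
          ≤ c * dist p.2 q.2 + (KF : ℝ) * dist p.1 q.1 := hsub
        _ ≤ c * max (dist p.1 q.1) (dist p.2 q.2)
            + (KF : ℝ) * max (dist p.1 q.1) (dist p.2 q.2) := by
            have := NNReal.coe_nonneg KF
            nlinarith
        _ ≤ (K : ℝ) * max (dist p.1 q.1) (dist p.2 q.2) := by
            rw [hKc]; nlinarith
  intro X hX
  set f : ℝ → ℝ × ℝ := fun t => (θ₁ t, derivWithin θ₁ (Ici R) t) with hff
  set g : ℝ → ℝ × ℝ := fun t => (θ₂ t, derivWithin θ₂ (Ici R) t) with hgg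
  have key : EqOn f g (Icc R X) := by
    apply ODE_solution_unique_of_mem_Icc_right (fun t _ => hlip t)
    · exact ((hf1.contOn.mono Icc_subset_Ici_self).prodMk
        (hf1.vContOn.mono Icc_subset_Ici_self))
    · intro t ht
      have htR : t ∈ Ici R := ht.1
      have hIci : Ici t ⊆ Ici R := Ici_subset_Ici.2 ht.1
      exact HasDerivWithinAt.prodMk ((hf1.hasDerivWithinAt htR).mono hIci)
        ((hf1.vHasDerivWithinAt htR).mono hIci)
    · intro t ht
      exact ⟨⟨hf1.ge_bot ht.1, hf1.le_top ht.1⟩, trivial⟩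
    · exact ((hf2.contOn.mono Icc_subset_Ici_self).prodMk
        (hf2.vContOn.mono Icc_subset_Ici_self))
    · intro t ht
      have htR : t ∈ Ici R := ht.1
      have hIci : Ici t ⊆ Ici R := Ici_subset_Ici.2 ht.1
      exact HasDerivWithinAt.prodMk ((hf2.hasDerivWithinAt htR).mono hIci)
        ((hf2.vHasDerivWithinAt htR).mono hIci)
    · intro t ht
      exact ⟨⟨hf2.ge_bot ht.1, hf2.le_top ht.1⟩, trivial⟩
    · rw [hff, hgg]
      simp only [Prod.mk.injEq]
      exact ⟨hval₁.trans hval₂.symm, hslope⟩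
  have hkeyX := congrArg Prod.fst (key ⟨hX, le_refl X⟩)
  simpa [hff, hgg] using hkeyX
end

section
/- Let 0 ≤ c₁ < c₂. Suppose that for i = 1, 2 the function θᵢ : [0, +∞) → ℝ is twice continuously differentiable, satisfies θᵢ'' − cᵢ·θᵢ' + F(θᵢ) = 0 on [0, +∞), θᵢ(0) = θ_hl, θᵢ'(x) > 0 for all x ≥ 0, and θᵢ(x) → θ₊ as x → +∞. Then θ₂'(0) < θ₁'(0): the slope of the stable separatrix of the saddle (θ₊, 0), evaluated at u = θ_hl, is strictly decreasing in the wave speed c. -/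
open Set Filter Topology

section Aux
variable {θhl θp c : ℝ} {F θ : ℝ → ℝ}

/-- the derivative function -/
private noncomputable abbrev vv (θ : ℝ → ℝ) : ℝ → ℝ := derivWithin θ (Ici 0)

private lemma hasDW (hreg : ContDiffOn ℝ 2 θ (Ici 0)) {x : ℝ} (hx : x ∈ Ici (0:ℝ)) :
    HasDerivWithinAt θ (vv θ x) (Ici 0) x :=
  ((hreg.differentiableOn (by norm_num)) x hx).hasDerivWithinAt

private lemma contv (hreg : ContDiffOn ℝ 2 θ (Ici 0)) : ContinuousOn (vv θ) (Ici 0) :=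
  hreg.continuousOn_derivWithin (uniqueDiffOn_Ici 0) (by norm_num)

private lemma hasDWv (hreg : ContDiffOn ℝ 2 θ (Ici 0))
    (hode : ∀ x ∈ Ici (0 : ℝ), derivWithin (derivWithin θ (Ici 0)) (Ici 0) x
        - c * derivWithin θ (Ici 0) x + F (θ x) = 0)
    {x : ℝ} (hx : x ∈ Ici (0:ℝ)) :
    HasDerivWithinAt (vv θ) (c * vv θ x - F (θ x)) (Ici 0) x := by
  have hc1 : ContDiffOn ℝ 1 (vv θ) (Ici 0) :=
    hreg.derivWithin (uniqueDiffOn_Ici 0) (by norm_num)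
  have hd : DifferentiableOn ℝ (vv θ) (Ici 0) := hc1.differentiableOn (by norm_num)
  have := (hd x hx).hasDerivWithinAt
  have he : derivWithin (vv θ) (Ici 0) x = c * vv θ x - F (θ x) := by
    have := hode x hx; unfold vv; linarith
  rwa [he] at this

private lemma monoθ (hreg : ContDiffOn ℝ 2 θ (Ici 0))
    (hpos : ∀ x ∈ Ici (0:ℝ), 0 < derivWithin θ (Ici 0) x) : StrictMonoOn θ (Ici 0) := by
  apply strictMonoOn_of_hasDerivWithinAt_pos (convex_Ici 0) (hreg.continuousOn)
    (f' := vv θ)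
  · intro x hx
    rw [interior_Ici] at hx
    exact (hasDW hreg (mem_Ici.2 (le_of_lt (mem_Ioi.1 hx)))).mono (by rw [interior_Ici]; exact Ioi_subset_Ici_self)
  · intro x hx
    rw [interior_Ici] at hx
    exact hpos x (mem_Ici.2 (le_of_lt (mem_Ioi.1 hx)))

private lemma theta_lt (hreg : ContDiffOn ℝ 2 θ (Ici 0))
    (hpos : ∀ x ∈ Ici (0:ℝ), 0 < derivWithin θ (Ici 0) x)
    (hlim : Tendsto θ atTop (nhds θp)) {x : ℝ} (hx : x ∈ Ici (0:ℝ)) : θ x < θp := by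
  have hm := monoθ hreg hpos
  simp only [mem_Ici] at hx
  have hx1 : (x:ℝ) + 1 ∈ Ici (0:ℝ) := by simp; linarith
  have hle : θ (x+1) ≤ θp := by
    apply ge_of_tendsto hlim
    filter_upwards [eventually_ge_atTop (x+1)] with y hy
    exact (hm.monotoneOn) hx1 (le_trans hx1 hy) hy
  have := hm hx hx1 (by linarith)
  linarith

private lemma theta_mem (hreg : ContDiffOn ℝ 2 θ (Ici 0))
    (hval : θ 0 = θhl)
    (hpos : ∀ x ∈ Ici (0:ℝ), 0 < derivWithin θ (Ici 0) x)
    (hlim : Tendsto θ atTop (nhds θp)) {x : ℝ} (hx : x ∈ Ici (0:ℝ)) :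
    θ x ∈ Ico θhl θp := by
  constructor
  · rw [← hval]
    exact (monoθ hreg hpos).monotoneOn (self_mem_Ici) hx hx
  · exact theta_lt hreg hpos hlim hx

/-- if the derivative stays ≥ δ > 0 on a tail, contradiction with boundedness -/
private lemma growth_contra (hreg : ContDiffOn ℝ 2 θ (Ici 0))
    (hpos : ∀ x ∈ Ici (0:ℝ), 0 < derivWithin θ (Ici 0) x)
    (hlim : Tendsto θ atTop (nhds θp))
    {y₀ δ : ℝ} (hy₀ : 0 ≤ y₀) (hδ : 0 < δ)
    (h : ∀ y, y₀ ≤ y → δ ≤ vv θ y) : False := by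
  -- θ x - δ x is monotone on [y₀, ∞)
  have hmono : MonotoneOn (fun x => θ x - δ * x) (Ici y₀) := by
    apply monotoneOn_of_hasDerivWithinAt_nonneg (convex_Ici y₀)
      (f' := fun x => vv θ x - δ)
    · exact (hreg.continuousOn.mono (Ici_subset_Ici.2 hy₀)).sub
        (continuousOn_const.mul continuousOn_id)
    · intro x hx
      rw [interior_Ici] at hx
      have hx0 : x ∈ Ici (0:ℝ) := le_trans hy₀ (le_of_lt hx)
      have h1 : HasDerivWithinAt θ (vv θ x) (interior (Ici y₀)) x :=
        (hasDW hreg hx0).mono (by rw [interior_Ici]; exact fun z hz => le_trans hy₀ (le_of_lt hz))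
      have h2 : HasDerivWithinAt (fun x : ℝ => δ * x) δ (interior (Ici y₀)) x := by
        simpa using ((hasDerivAt_id x).const_mul δ).hasDerivWithinAt
      exact h1.sub h2
    · intro x hx
      rw [interior_Ici] at hx
      have := h x (le_of_lt hx)
      simp only [sub_nonneg]; linarith
  -- contradiction: θ x ≥ θ y₀ + δ (x - y₀) → ∞, but θ x < θp
  have hub : ∀ x, y₀ ≤ x → θ y₀ + δ * (x - y₀) ≤ θ x := by
    intro x hx
    have h5 := hmono (self_mem_Ici) (mem_Ici.2 hx) hx
    simp only at h5
    linarith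
  obtain ⟨x, hx1, hx2⟩ : ∃ x, y₀ ≤ x ∧ θp ≤ θ y₀ + δ * (x - y₀) := by
    refine ⟨max y₀ ((θp - θ y₀)/δ + y₀), le_max_left _ _, ?_⟩
    have : (θp - θ y₀)/δ + y₀ ≤ max y₀ ((θp - θ y₀)/δ + y₀) := le_max_right _ _
    have h3 : (θp - θ y₀) ≤ δ * (max y₀ ((θp - θ y₀)/δ + y₀) - y₀) := by
      calc θp - θ y₀ = δ * ((θp - θ y₀)/δ) := by field_simp
      _ ≤ δ * (max y₀ ((θp - θ y₀)/δ + y₀) - y₀) := by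
          apply mul_le_mul_of_nonneg_left (by linarith) (le_of_lt hδ)
    linarith
  have := hub x hx1
  have := theta_lt hreg hpos hlim (le_trans hy₀ hx1)
  linarith

/-- surjectivity onto [θhl, θp) -/
private lemma surj (hreg : ContDiffOn ℝ 2 θ (Ici 0))
    (hval : θ 0 = θhl)
    (hlim : Tendsto θ atTop (nhds θp))
    {u : ℝ} (hu : u ∈ Ico θhl θp) : ∃ y, 0 ≤ y ∧ θ y = u := by
  obtain ⟨x₁, hx₁⟩ : ∃ x₁, 0 ≤ x₁ ∧ u < θ x₁ := by
    have : ∀ᶠ x in atTop, u < θ x := hlim.eventually (eventually_gt_nhds hu.2)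
    obtain ⟨x₁, hx₁⟩ := (this.and (eventually_ge_atTop 0)).exists
    exact ⟨x₁, hx₁.2, hx₁.1⟩
  have hcont : ContinuousOn θ (Icc 0 x₁) :=
    hreg.continuousOn.mono (Icc_subset_Ici_self)
  have : u ∈ Icc (θ 0) (θ x₁) := ⟨hval ▸ hu.1, le_of_lt hx₁.2⟩
  obtain ⟨y, hy1, hy2⟩ := intermediate_value_Icc hx₁.1 hcont this
  exact ⟨y, hy1.1, hy2⟩

end Aux

/-- Strict monotonicity in `c` of the separatrix slope: if `0 ≤ c₁ < c₂` and `θᵢ`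
is the monotone heteroclinic solution for speed `cᵢ` starting at `θ_hl` at `x = 0`,
then `θ₂'(0) < θ₁'(0)`. (Derivatives on `[0, ∞)` are taken within `[0, ∞)`.) -/
theorem stmt15 (θhl θp : ℝ) (h0 : 0 < θhl) (h1 : θhl < θp)
    (F : ℝ → ℝ) (W : Set ℝ) (hW : IsOpen W) (hWsub : Icc θhl θp ⊆ W)
    (hF : ContDiffOn ℝ (⊤ : ℕ∞) F W) (hFzero : F θp = 0)
    (hFpos : ∀ u ∈ Ico θhl θp, 0 < F u) (hF' : deriv F θp < 0)
    (c₁ c₂ : ℝ) (hc₁ : 0 ≤ c₁) (hc₁₂ : c₁ < c₂) (θ₁ θ₂ : ℝ → ℝ)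
    (hreg₁ : ContDiffOn ℝ 2 θ₁ (Ici 0))
    (hode₁ : ∀ x ∈ Ici (0 : ℝ), derivWithin (derivWithin θ₁ (Ici 0)) (Ici 0) x
        - c₁ * derivWithin θ₁ (Ici 0) x + F (θ₁ x) = 0)
    (hval₁ : θ₁ 0 = θhl)
    (hpos₁ : ∀ x ∈ Ici (0 : ℝ), 0 < derivWithin θ₁ (Ici 0) x)
    (hlim₁ : Tendsto θ₁ atTop (nhds θp))
    (hreg₂ : ContDiffOn ℝ 2 θ₂ (Ici 0))
    (hode₂ : ∀ x ∈ Ici (0 : ℝ), derivWithin (derivWithin θ₂ (Ici 0)) (Ici 0) x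
        - c₂ * derivWithin θ₂ (Ici 0) x + F (θ₂ x) = 0)
    (hval₂ : θ₂ 0 = θhl)
    (hpos₂ : ∀ x ∈ Ici (0 : ℝ), 0 < derivWithin θ₂ (Ici 0) x)
    (hlim₂ : Tendsto θ₂ atTop (nhds θp)) :
    derivWithin θ₂ (Ici 0) 0 < derivWithin θ₁ (Ici 0) 0 := by
  by_contra hcon
  push_neg at hcon
  -- hcon : derivWithin θ₁ (Ici 0) 0 ≤ derivWithin θ₂ (Ici 0) 0
  set K := c₂ - c₁ with hK
  have hKpos : 0 < K := by simp [hK]; linarith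
  have hmono₁ := monoθ hreg₁ hpos₁
  have hmono₂ := monoθ hreg₂ hpos₂
  have hmem₁ : ∀ x ∈ Ici (0:ℝ), θ₁ x ∈ Ico θhl θp := fun x hx => theta_mem hreg₁ hval₁ hpos₁ hlim₁ hx
  have hmem₂ : ∀ x ∈ Ici (0:ℝ), θ₂ x ∈ Ico θhl θp := fun x hx => theta_mem hreg₂ hval₂ hpos₂ hlim₂ hx
  -- the inverse function ψ of θ₂
  have hsurj : ∀ u : ℝ, ∃ y, 0 ≤ y ∧ (u ∈ Ico θhl θp → θ₂ y = u) := by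
    intro u
    by_cases hu : u ∈ Ico θhl θp
    · obtain ⟨y, hy1, hy2⟩ := surj hreg₂ hval₂ hlim₂ hu
      exact ⟨y, hy1, fun _ => hy2⟩
    · exact ⟨0, le_refl 0, fun h => absurd h hu⟩
  choose ψ hψ0 hψval' using hsurj
  have hψval : ∀ u ∈ Ico θhl θp, θ₂ (ψ u) = u := fun u hu => hψval' u hu
  have hψhl : ψ θhl = 0 := by
    have h2 : θ₂ (ψ θhl) = θ₂ 0 := by rw [hψval θhl ⟨le_refl _, h1⟩, hval₂]
    exact hmono₂.injOn (hψ0 θhl) self_mem_Ici h2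
  have hψpos : ∀ u ∈ Ico θhl θp, θhl < u → 0 < ψ u := by
    intro u hu hlt
    rcases (hψ0 u).lt_or_eq with h | h
    · exact h
    · exfalso; rw [← hψval u hu, ← h, hval₂] at hlt; exact lt_irrefl _ hlt
  -- continuity of ψ within Ico θhl θp
  have hψcont : ∀ u ∈ Ico θhl θp, ContinuousWithinAt ψ (Ico θhl θp) u := by
    intro u hu
    rw [ContinuousWithinAt, tendsto_order]
    constructor
    · intro b hb
      rcases lt_or_ge b 0 with hb0 | hb0
      · filter_upwards [eventually_mem_nhdsWithin] with u' hu'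
        exact lt_of_lt_of_le hb0 (hψ0 u')
      · have h2 : θ₂ b < u := by
          rw [← hψval u hu]; exact hmono₂ hb0 (hψ0 u) hb
        filter_upwards [eventually_mem_nhdsWithin,
          eventually_nhdsWithin_of_eventually_nhds (eventually_gt_nhds h2)] with u' hmem hgt
        by_contra hge
        push_neg at hge
        have := hmono₂.monotoneOn (hψ0 u') hb0 hge
        rw [hψval u' hmem] at this
        linarith
    · intro b hb
      have hb0 : (0:ℝ) ≤ b := le_of_lt (lt_of_le_of_lt (hψ0 u) hb)
      have h2 : u < θ₂ b := by
        rw [← hψval u hu]; exact hmono₂ (hψ0 u) hb0 hb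
      filter_upwards [eventually_mem_nhdsWithin,
        eventually_nhdsWithin_of_eventually_nhds (eventually_lt_nhds h2)] with u' hmem hlt
      by_contra hge
      push_neg at hge
      have := hmono₂.monotoneOn hb0 (hψ0 u') hge
      rw [hψval u' hmem] at this
      linarith
  -- derivative of ψ at interior points
  have hψd : ∀ u ∈ Ioo θhl θp, HasDerivAt ψ (derivWithin θ₂ (Ici 0) (ψ u))⁻¹ u := by
    intro u hu
    have hu' : u ∈ Ico θhl θp := Ioo_subset_Ico_self hu
    have hψu0 : 0 < ψ u := hψpos u hu' hu.1
    apply HasDerivAt.of_local_left_inverse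
    · exact (hψcont u hu').continuousAt
        (Filter.mem_of_superset (isOpen_Ioo.mem_nhds hu) Ioo_subset_Ico_self)
    · exact (hasDW hreg₂ (le_of_lt hψu0)).hasDerivAt (Ici_mem_nhds hψu0)
    · exact ne_of_gt (hpos₂ _ (le_of_lt hψu0))
    · exact eventually_of_mem (isOpen_Ioo.mem_nhds hu)
        (fun y hy => hψval y (Ioo_subset_Ico_self hy))
  -- σ, w, D, G
  set σ : ℝ → ℝ := fun x => ψ (θ₁ x) with hσ
  set w : ℝ → ℝ := fun x => derivWithin θ₂ (Ici 0) (σ x) with hw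
  set D : ℝ → ℝ := fun x => w x - derivWithin θ₁ (Ici 0) x with hD
  have hσval : ∀ x ∈ Ici (0:ℝ), θ₂ (σ x) = θ₁ x := fun x hx => hψval _ (hmem₁ x hx)
  have hσ0 : ∀ x, 0 ≤ σ x := fun x => hψ0 _
  have hσzero : σ 0 = 0 := by simp only [hσ]; rw [hval₁, hψhl]
  have hσpos : ∀ x : ℝ, 0 < x → 0 < σ x := by
    intro x hx
    apply hψpos _ (hmem₁ x (le_of_lt hx))
    rw [← hval₁]; exact hmono₁ self_mem_Ici (le_of_lt hx) hx
  have hwpos : ∀ x, 0 ≤ x → 0 < w x := fun x hx => hpos₂ _ (hσ0 x)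
  have hD0 : 0 ≤ D 0 := by
    simp only [hD, hw, hσzero]; linarith
  -- continuity of σ, w, D on Ici 0
  have hσcont : ContinuousOn σ (Ici 0) := by
    intro x hx
    exact (hψcont (θ₁ x) (hmem₁ x hx)).comp
      (hreg₁.continuousOn.continuousWithinAt hx) (fun t ht => hmem₁ t ht)
  have hwcont : ContinuousOn w (Ici 0) := by
    intro x hx
    exact ((contv hreg₂) (σ x) (hσ0 x)).comp (hσcont x hx) (fun t _ => hσ0 t)
  have hDcont : ContinuousOn D (Ici 0) := hwcont.sub (contv hreg₁)
  -- derivatives at interior points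
  have hθ₁at : ∀ x : ℝ, 0 < x → HasDerivAt θ₁ (derivWithin θ₁ (Ici 0) x) x :=
    fun x hx => (hasDW hreg₁ (le_of_lt hx)).hasDerivAt (Ici_mem_nhds hx)
  have hv₁at : ∀ x : ℝ, 0 < x →
      HasDerivAt (derivWithin θ₁ (Ici 0)) (c₁ * derivWithin θ₁ (Ici 0) x - F (θ₁ x)) x :=
    fun x hx => (hasDWv hreg₁ hode₁ (le_of_lt hx)).hasDerivAt (Ici_mem_nhds hx)
  have hv₂at : ∀ y : ℝ, 0 < y →
      HasDerivAt (derivWithin θ₂ (Ici 0)) (c₂ * derivWithin θ₂ (Ici 0) y - F (θ₂ y)) y :=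
    fun y hy => (hasDWv hreg₂ hode₂ (le_of_lt hy)).hasDerivAt (Ici_mem_nhds hy)
  have hDderiv : ∀ x : ℝ, 0 < x →
      HasDerivAt D (K * derivWithin θ₁ (Ici 0) x + (F (θ₁ x) / w x) * D x) x := by
    intro x hx
    have hθ₁x : θ₁ x ∈ Ioo θhl θp := by
      refine ⟨?_, (hmem₁ x (le_of_lt hx)).2⟩
      rw [← hval₁]; exact hmono₁ self_mem_Ici (le_of_lt hx) hx
    have hσd : HasDerivAt σ ((derivWithin θ₂ (Ici 0) (σ x))⁻¹ * derivWithin θ₁ (Ici 0) x) x :=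
      (hψd (θ₁ x) hθ₁x).comp x (hθ₁at x hx)
    have hwd : HasDerivAt w ((c₂ * derivWithin θ₂ (Ici 0) (σ x) - F (θ₂ (σ x))) *
        ((derivWithin θ₂ (Ici 0) (σ x))⁻¹ * derivWithin θ₁ (Ici 0) x)) x :=
      (hv₂at (σ x) (hσpos x hx)).comp x hσd
    rw [hσval x (le_of_lt hx)] at hwd
    have hDd := hwd.sub (hv₁at x hx)
    refine hDd.congr_deriv ?_
    have hwne : w x ≠ 0 := ne_of_gt (hwpos x (le_of_lt hx))
    have hwx : derivWithin θ₂ (Ici 0) (σ x) = w x := rfl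
    rw [hwx]
    have hDx : D x = w x - derivWithin θ₁ (Ici 0) x := rfl
    rw [hDx]
    field_simp
    ring
  -- the key monotonicity claim
  have hclaim : ∀ b : ℝ, 0 < b → (∀ t ∈ Ico (0:ℝ) b, 0 ≤ D t) →
      ∀ x ∈ Icc (0:ℝ) b, K * (θ₁ x - θhl) ≤ D x := by
    intro b hb hDnn
    set G : ℝ → ℝ := fun t => D t - K * (θ₁ t - θhl) with hG
    have hGcont : ContinuousOn G (Icc 0 b) :=
      (hDcont.mono Icc_subset_Ici_self).sub
        (continuousOn_const.mul
          ((hreg₁.continuousOn.mono Icc_subset_Ici_self).sub continuousOn_const))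
    have hGmono : MonotoneOn G (Icc 0 b) := by
      apply monotoneOn_of_hasDerivWithinAt_nonneg (convex_Icc 0 b) hGcont
        (f' := fun t => (F (θ₁ t) / w t) * D t)
      · intro t ht
        rw [interior_Icc] at ht
        have h1 : HasDerivAt G ((F (θ₁ t) / w t) * D t) t := by
          have h2 := (hDderiv t ht.1).sub (((hθ₁at t ht.1).sub_const θhl).const_mul K)
          refine h2.congr_deriv ?_
          ring
        exact h1.hasDerivWithinAt
      · intro t ht
        rw [interior_Icc] at ht
        have hDt : 0 ≤ D t := hDnn t ⟨le_of_lt ht.1, ht.2⟩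
        have hFt := hFpos (θ₁ t) (hmem₁ t (le_of_lt ht.1))
        have hwt := hwpos t (le_of_lt ht.1)
        exact mul_nonneg (div_nonneg (le_of_lt hFt) (le_of_lt hwt)) hDt
    intro x hx
    have h3 := hGmono (left_mem_Icc.2 (le_of_lt hb)) hx hx.1
    simp only [hG, hval₁, sub_self, mul_zero, sub_zero] at h3
    linarith [hD0]
  -- D dominates K (θ₁ x - θhl) everywhere
  have hDlb : ∀ x : ℝ, 0 ≤ x → K * (θ₁ x - θhl) ≤ D x := by
    set A : Set ℝ := {x | 0 ≤ x ∧ D x < 0} with hA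
    by_cases hAne : A.Nonempty
    · exfalso
      have hbdd : BddBelow A := ⟨0, fun a ha => ha.1⟩
      set m := sInf A with hm
      have hm0 : 0 ≤ m := le_csInf hAne (fun a ha => ha.1)
      have hIco : ∀ t ∈ Ico (0:ℝ) m, 0 ≤ D t := by
        intro t ht
        by_contra hlt; push_neg at hlt
        exact (notMem_of_lt_csInf ht.2 hbdd) ⟨ht.1, hlt⟩
      rcases hm0.lt_or_eq with hmpos | hmzero
      · -- m > 0
        have hmcl : m ∈ closure A := csInf_mem_closure hAne hbdd
        have hDm : D m ≤ 0 := by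
          have hne : (𝓝[A] m).NeBot := mem_closure_iff_nhdsWithin_neBot.1 hmcl
          have ht : Tendsto D (𝓝[A] m) (𝓝 (D m)) :=
            (hDcont m (le_of_lt hmpos)).mono (fun a ha => ha.1)
          exact le_of_tendsto ht
            (eventually_of_mem self_mem_nhdsWithin (fun a ha => le_of_lt ha.2))
        have h4 := hclaim m hmpos hIco m ⟨hm0, le_refl m⟩
        have hθm : θhl < θ₁ m := by
          rw [← hval₁]; exact hmono₁ self_mem_Ici hm0 hmpos
        have := mul_pos hKpos (show (0:ℝ) < θ₁ m - θhl by linarith)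
        linarith
      · -- m = 0 : local argument near 0
        have hv₁0 : 0 < derivWithin θ₁ (Ici 0) 0 := hpos₁ 0 self_mem_Ici
        set v₁0 := derivWithin θ₁ (Ici 0) 0 with hv₁0def
        have hw0 : 0 < w 0 := hwpos 0 le_rfl
        set B := F θhl + 1 with hB
        have hBpos : 0 < B := by
          have := hFpos θhl ⟨le_rfl, h1⟩; simp only [hB]; linarith
        set R := B / (w 0 / 2) with hR
        have hRpos : 0 < R := by positivity
        set ε₀ := K * (v₁0 / 2) * (w 0 / 2) / B with hε₀
        have hε₀pos : 0 < ε₀ := by positivity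
        have hRε : R * ε₀ = K * (v₁0 / 2) := by
          rw [hR, hε₀]; field_simp
        have e1 : ∀ᶠ t in 𝓝[Ici 0] 0, v₁0/2 < derivWithin θ₁ (Ici 0) t :=
          (contv hreg₁ 0 self_mem_Ici).eventually (eventually_gt_nhds (by linarith))
        have e2 : ∀ᶠ t in 𝓝[Ici 0] 0, w 0/2 < w t :=
          (hwcont 0 self_mem_Ici).eventually (eventually_gt_nhds (by linarith))
        have e3 : ∀ᶠ t in 𝓝[Ici 0] 0, F (θ₁ t) < B := by
          have hθhlW : θhl ∈ W := hWsub ⟨le_rfl, le_of_lt h1⟩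
          have hFc : ContinuousAt F (θ₁ 0) := by
            rw [hval₁]; exact hF.continuousOn.continuousAt (hW.mem_nhds hθhlW)
          have h5 : ContinuousWithinAt θ₁ (Ici 0) 0 :=
            hreg₁.continuousOn.continuousWithinAt self_mem_Ici
          have hcomp := hFc.comp_continuousWithinAt h5
          have hFB : F (θ₁ 0) < B := by rw [hval₁]; simp only [hB]; linarith
          exact hcomp.eventually (eventually_lt_nhds hFB)
        have e4 : ∀ᶠ t in 𝓝[Ici 0] 0, -ε₀ < D t :=
          (hDcont 0 self_mem_Ici).eventually (eventually_gt_nhds (by linarith [hD0]))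
        obtain ⟨η, hη, hIcc⟩ := (nhdsGE_basis_Icc (a := (0:ℝ))).eventually_iff.1
          (e1.and (e2.and (e3.and e4)))
        have hmonoD : MonotoneOn D (Icc 0 η) := by
          apply monotoneOn_of_hasDerivWithinAt_nonneg (convex_Icc 0 η)
            (hDcont.mono Icc_subset_Ici_self)
            (f' := fun t => K * derivWithin θ₁ (Ici 0) t + (F (θ₁ t) / w t) * D t)
          · intro t ht
            rw [interior_Icc] at ht
            exact (hDderiv t ht.1).hasDerivWithinAt
          · intro t ht
            rw [interior_Icc] at ht
            obtain ⟨he1, he2, he3, he4⟩ := hIcc (⟨le_of_lt ht.1, le_of_lt ht.2⟩ : t ∈ Icc 0 η)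
            have hFt : 0 ≤ F (θ₁ t) := le_of_lt (hFpos _ (hmem₁ t (le_of_lt ht.1)))
            have hwt : 0 < w t := hwpos t (le_of_lt ht.1)
            have h5 : F (θ₁ t) / w t ≤ R :=
              div_le_div₀ (le_of_lt hBpos) (le_of_lt he3) (by positivity) (le_of_lt he2)
            have h7 : 0 ≤ F (θ₁ t) / w t := div_nonneg hFt (le_of_lt hwt)
            have t1 := mul_le_mul_of_nonneg_left he4.le h7
            have t2 := mul_le_mul_of_nonneg_right h5 hε₀pos.le
            have t3 := mul_le_mul_of_nonneg_left he1.le hKpos.le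
            linarith [t1, t2, t3, hRε]
        obtain ⟨a, haA, halt⟩ := exists_lt_of_csInf_lt hAne
          (show sInf A < η by rw [← hm, ← hmzero]; exact hη)
        have h6 : 0 ≤ D a := by
          have := hmonoD (left_mem_Icc.2 (le_of_lt hη)) ⟨haA.1, le_of_lt halt⟩ haA.1
          linarith [hD0]
        exact absurd haA.2 (not_lt.2 h6)
    · intro x hx
      rw [not_nonempty_iff_eq_empty] at hAne
      have hDnn : ∀ t ∈ Ico (0:ℝ) (x+1), 0 ≤ D t := by
        intro t ht
        by_contra h; push_neg at h
        have : t ∈ A := ⟨ht.1, h⟩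
        rw [hAne] at this
        exact this
      exact hclaim (x+1) (by linarith) hDnn x ⟨hx, by linarith⟩
  -- endgame
  obtain ⟨x₀, hx₀pos, hx₀⟩ : ∃ x₀ : ℝ, 0 < x₀ ∧ (θhl + θp)/2 ≤ θ₁ x₀ := by
    have h5 : ∀ᶠ x in atTop, (θhl+θp)/2 < θ₁ x :=
      hlim₁.eventually (eventually_gt_nhds (by linarith))
    obtain ⟨x₀, h⟩ := (h5.and (eventually_gt_atTop 0)).exists
    exact ⟨x₀, h.2, le_of_lt h.1⟩
  set δ := K * (θp - θhl)/2 with hδ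
  have hδpos : 0 < δ := by
    have : 0 < θp - θhl := by linarith
    positivity
  have hwlb : ∀ x, x₀ ≤ x → δ ≤ w x := by
    intro x hx
    have hx0 : (0:ℝ) ≤ x := le_trans (le_of_lt hx₀pos) hx
    have h2 := hDlb x hx0
    have h3 : (θhl+θp)/2 ≤ θ₁ x :=
      le_trans hx₀ (hmono₁.monotoneOn (le_of_lt hx₀pos) hx0 hx)
    have h4 := hpos₁ x hx0
    have h5' : (θp - θhl)/2 ≤ θ₁ x - θhl := by linarith
    have h5 : δ ≤ K * (θ₁ x - θhl) := by
      have h6 := mul_le_mul_of_nonneg_left h5' hKpos.le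
      rw [hδ]; linarith
    simp only [hD] at h2
    linarith
  have hvlb : ∀ y, σ x₀ ≤ y → δ ≤ derivWithin θ₂ (Ici 0) y := by
    intro y hy
    have hy0 : (0:ℝ) ≤ y := le_trans (hσ0 x₀) hy
    obtain ⟨x₁, hx₁ge, hx₁⟩ : ∃ x₁, x₀ ≤ x₁ ∧ y ≤ σ x₁ := by
      have hθ₂y : θ₂ y < θp := theta_lt hreg₂ hpos₂ hlim₂ hy0
      have h5 : ∀ᶠ x in atTop, θ₂ y < θ₁ x := hlim₁.eventually (eventually_gt_nhds hθ₂y)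
      obtain ⟨x₁, h⟩ := (h5.and (eventually_ge_atTop x₀)).exists
      refine ⟨x₁, h.2, ?_⟩
      by_contra hlt; push_neg at hlt
      have h6 := hmono₂.monotoneOn (hσ0 x₁) hy0 (le_of_lt hlt)
      rw [hσval x₁ (le_trans (le_of_lt hx₀pos) h.2)] at h6
      linarith [h.1]
    have hcont : ContinuousOn σ (Icc x₀ x₁) :=
      hσcont.mono (fun t ht => le_trans (le_of_lt hx₀pos) ht.1)
    obtain ⟨x, hxmem, hxval⟩ := intermediate_value_Icc hx₁ge hcont ⟨hy, hx₁⟩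
    rw [← hxval]
    exact hwlb x hxmem.1
  exact growth_contra hreg₂ hpos₂ hlim₂ (hσ0 x₀) hδpos hvlb
end

section
/- Let c ≥ 0 and let θ : [0, +∞) → ℝ be twice continuously differentiable with θ'' − c·θ' + F(θ) = 0 on [0, +∞), θ(0) = θ_hl, θ'(x) > 0 for all x ≥ 0, and θ(x) → θ₊ as x → +∞. Then 0 < θ'(0) ≤ √(2·∫_{θ_hl}^{θ₊} F(u) du); i.e. the slope of the monotone heteroclinic solution at the heat-loss threshold is bounded above by the slope of the Hamiltonian (c = 0) separatrix. -/
open Set Filter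

/-- Bound on the separatrix slope: for a monotone heteroclinic solution `θ` with
speed `c ≥ 0` one has `0 < θ'(0) ≤ √(2∫_{θ_hl}^{θ₊} F(u) du)`.
(Derivatives on `[0, ∞)` are taken within `[0, ∞)`.) -/
theorem stmt16 (θhl θp : ℝ) (h0 : 0 < θhl) (h1 : θhl < θp)
    (F : ℝ → ℝ) (W : Set ℝ) (hW : IsOpen W) (hWsub : Icc θhl θp ⊆ W)
    (hF : ContDiffOn ℝ (⊤ : ℕ∞) F W) (hFzero : F θp = 0)
    (hFpos : ∀ u ∈ Ico θhl θp, 0 < F u) (hF' : deriv F θp < 0)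
    (c : ℝ) (hc : 0 ≤ c) (θ : ℝ → ℝ)
    (hreg : ContDiffOn ℝ 2 θ (Ici 0))
    (hode : ∀ x ∈ Ici (0 : ℝ), derivWithin (derivWithin θ (Ici 0)) (Ici 0) x
        - c * derivWithin θ (Ici 0) x + F (θ x) = 0)
    (hval : θ 0 = θhl)
    (hpos : ∀ x ∈ Ici (0 : ℝ), 0 < derivWithin θ (Ici 0) x)
    (hlim : Tendsto θ atTop (nhds θp)) :
    0 < derivWithin θ (Ici 0) 0 ∧
    derivWithin θ (Ici 0) 0 ≤ Real.sqrt (2 * ∫ u in θhl..θp, F u) := by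
  have hU : UniqueDiffOn ℝ (Ici (0:ℝ)) := uniqueDiffOn_Ici 0
  set v := derivWithin θ (Ici 0) with hvdef
  have hvC : ContDiffOn ℝ 1 v (Ici 0) := hreg.derivWithin hU (by norm_num)
  have hθdiff : ∀ x ∈ Ici (0:ℝ), HasDerivWithinAt θ (v x) (Ici 0) x := fun x hx =>
    ((hreg.differentiableOn two_ne_zero) x hx).hasDerivWithinAt
  have hvdiff : ∀ x ∈ Ici (0:ℝ), HasDerivWithinAt v (derivWithin v (Ici 0) x) (Ici 0) x :=
    fun x hx => ((hvC.differentiableOn one_ne_zero) x hx).hasDerivWithinAt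
  -- monotonicity of θ
  have hθmono : MonotoneOn θ (Ici 0) := by
    apply monotoneOn_of_hasDerivWithinAt_nonneg (convex_Ici 0) hreg.continuousOn
      (f' := v) (fun x hx => (hθdiff x (interior_subset hx)).mono interior_subset)
    exact fun x hx => (hpos x (interior_subset hx)).le
  -- θ stays in [θhl, θp]
  have hmem : ∀ x ∈ Ici (0:ℝ), θ x ∈ Icc θhl θp := by
    intro x hx
    constructor
    · rw [← hval]; exact hθmono self_mem_Ici hx hx
    · refine ge_of_tendsto hlim ?_
      filter_upwards [eventually_ge_atTop (max x 0)] with y hy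
      exact hθmono hx (le_trans hx ((le_max_left x 0).trans hy))
        ((le_max_left x 0).trans hy)
  have hFc : ContinuousOn F (Icc θhl θp) := (hF.continuousOn).mono hWsub
  have hFnonneg : ∀ u ∈ Icc θhl θp, 0 ≤ F u := by
    intro u hu
    rcases lt_or_eq_of_le hu.2 with h | h
    · exact (hFpos u ⟨hu.1, h⟩).le
    · rw [h, hFzero]
  -- the potential
  set g : ℝ → ℝ := fun u => ∫ t in θhl..u, F t with hgdef
  have hg : ∀ u ∈ Icc θhl θp, HasDerivAt g (F u) u := by
    intro u hu
    have hint : IntervalIntegrable F MeasureTheory.volume θhl u := by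
      apply ContinuousOn.intervalIntegrable
      apply hFc.mono
      rw [uIcc_of_le hu.1]
      exact Icc_subset_Icc le_rfl hu.2
    have hmeas : StronglyMeasurableAtFilter F (nhds u) MeasureTheory.volume :=
      hF.continuousOn.stronglyMeasurableAtFilter hW u (hWsub hu)
    have hcont : ContinuousAt F u :=
      hF.continuousOn.continuousAt (hW.mem_nhds (hWsub hu))
    exact intervalIntegral.integral_hasDerivAt_right hint hmeas hcont
  -- the energy
  set H : ℝ → ℝ := fun x => (v x)^2 / 2 + g (θ x) with hHdef
  have hHd : ∀ x ∈ Ici (0:ℝ), HasDerivWithinAt H (c * (v x)^2) (Ici 0) x := by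
    intro x hx
    have hv' : derivWithin v (Ici 0) x = c * v x - F (θ x) := by
      have := hode x hx; linarith
    have h1 : HasDerivWithinAt (fun x => (v x)^2 / 2)
        ((2 * v x ^ 1 * derivWithin v (Ici 0) x) / 2) (Ici 0) x :=
      ((hvdiff x hx).pow 2).div_const 2
    have h2 : HasDerivWithinAt (fun x => g (θ x)) (F (θ x) * v x) (Ici 0) x :=
      (hg (θ x) (hmem x hx)).comp_hasDerivWithinAt x (hθdiff x hx)
    have := h1.add h2
    refine this.congr_deriv ?_
    rw [hv']; ring
  have hHcont : ContinuousOn H (Ici 0) := fun x hx => (hHd x hx).continuousWithinAt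
  have hHmono : MonotoneOn H (Ici 0) := by
    apply monotoneOn_of_hasDerivWithinAt_nonneg (convex_Ici 0) hHcont
      (f' := fun x => c * (v x)^2)
      (fun x hx => (hHd x (interior_subset hx)).mono interior_subset)
    intro x hx; positivity
  -- v gets arbitrarily small
  have hsmall : ∀ ε > (0:ℝ), ∃ x ∈ Ici (0:ℝ), v x ≤ ε := by
    intro ε hε
    by_contra h
    push_neg at h
    have hkey : ∀ y ∈ Ici (0:ℝ), ε * (y - 0) ≤ θ y - θ 0 := by
      intro y hy
      refine (convex_Ici 0).mul_sub_le_image_sub_of_le_deriv hreg.continuousOn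
        ((hreg.differentiableOn two_ne_zero).mono interior_subset) ?_ 0 self_mem_Ici y hy hy
      intro x hx
      rw [interior_Ici] at hx
      have hnb : Ici (0:ℝ) ∈ nhds x := Ici_mem_nhds hx
      rw [← derivWithin_of_mem_nhds hnb]
      exact (h x (mem_Ici.2 (le_of_lt hx))).le
    set y := (θp - θhl) / ε + 1 with hy
    have hd : (0:ℝ) < θp - θhl := by linarith
    have hy0 : (0:ℝ) ≤ y := by positivity
    have h1' := hkey y hy0
    have h2' := (hmem y hy0).2
    have hey : ε * y = (θp - θhl) + ε := by
      rw [hy]; field_simp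
    rw [hval] at h1'
    nlinarith
  -- positivity of θ'(0)
  have hpos0 : 0 < v 0 := hpos 0 self_mem_Ici
  set I : ℝ := ∫ u in θhl..θp, F u with hIdef
  have hInn : 0 ≤ I :=
    intervalIntegral.integral_nonneg h1.le
      (fun u hu => hFnonneg u hu)
  -- the main estimate
  have hmain : (v 0)^2 / 2 ≤ I := by
    apply le_of_forall_pos_le_add
    intro δ hδ
    obtain ⟨x, hx, hvx⟩ := hsmall (Real.sqrt δ) (Real.sqrt_pos.2 hδ)
    have hH0 : H 0 ≤ H x := hHmono self_mem_Ici hx hx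
    have hg0 : g (θ 0) = 0 := by
      rw [hval, hgdef]; exact intervalIntegral.integral_same
    have hvx2 : (v x)^2 ≤ δ := by
      have := pow_le_pow_left₀ (hpos x hx).le hvx 2
      rwa [Real.sq_sqrt hδ.le] at this
    have hgI : g (θ x) ≤ I := by
      have hi1 : IntervalIntegrable F MeasureTheory.volume θhl (θ x) := by
        apply ContinuousOn.intervalIntegrable
        apply hFc.mono
        rw [uIcc_of_le (hmem x hx).1]
        exact Icc_subset_Icc le_rfl (hmem x hx).2
      have hi2 : IntervalIntegrable F MeasureTheory.volume (θ x) θp := by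
        apply ContinuousOn.intervalIntegrable
        apply hFc.mono
        rw [uIcc_of_le (hmem x hx).2]
        exact Icc_subset_Icc (hmem x hx).1 le_rfl
      have hadd := intervalIntegral.integral_add_adjacent_intervals hi1 hi2
      have hnn : 0 ≤ ∫ u in (θ x)..θp, F u :=
        intervalIntegral.integral_nonneg (hmem x hx).2
          (fun u hu => hFnonneg u ⟨(hmem x hx).1.trans hu.1, hu.2⟩)
      show (∫ t in θhl..θ x, F t) ≤ I
      rw [hIdef, ← hadd]
      linarith
    have : H 0 ≤ δ / 2 + I := by
      calc H 0 ≤ H x := hH0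
        _ = (v x)^2 / 2 + g (θ x) := rfl
        _ ≤ δ / 2 + I := by linarith
    have hH0eq : H 0 = (v 0)^2 / 2 := by
      rw [hHdef]; simp only [hg0, add_zero]
    linarith
  refine ⟨hpos0, ?_⟩
  rw [show Real.sqrt (2 * I) = Real.sqrt (2 * I) from rfl]
  rw [Real.le_sqrt hpos0.le]
  all_goals linarith
end
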